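/- arXiv:2512.20222 — 9 statements merged into one kernel-verified Lean document; each statement's English description precedes it below -/
import Mathlib

section
/- Let d ≥ 1, s ∈ (0,1), and let σ : ℝ^d × ℝ^d → ℝ be measurable and symmetric (σ(v,v') = σ(v',v)) with σ₀ ≤ σ(v,v') ≤ σ₁ for all v,v', where 0 < σ₀ ≤ σ₁. For every measurable g : ℝ^d → ℝ with ∫_{ℝ^d} g(v)² M₁(v)^{-1} dv < ∞, setting ρ[g] := ∫_{ℝ^d} g(v) dv, the linear Boltzmann operator L₁ g(v) := ∫_{ℝ^d} σ(v,v') [g(v') M₁(v) − g(v) M₁(v')] dv' satisfies ∫_{ℝ^d} (L₁ g)(v) g(v) M₁(v)^{-1} dv ≤ − σ₀ ∫_{ℝ^d} (g(v) − ρ[g] M₁(v))² M₁(v)^{-1} dv. -/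
open MeasureTheory Real

/-- The heavy-tailed equilibrium `M₁(v) = c ⟨v⟩^{-(d+2s)}` with normalizing constant `c`. -/
noncomputable def M1 (d : ℕ) (s c : ℝ) (v : EuclideanSpace ℝ (Fin d)) : ℝ :=
  c * (1 + ‖v‖ ^ 2) ^ (-((d : ℝ) + 2 * s) / 2)

/-- Coercivity of the linear Boltzmann operator
`L₁ g(v) = ∫ σ(v,v') [g(v') M₁(v) − g(v) M₁(v')] dv'` with a symmetric collision kernel
bounded between `σ₀` and `σ₁`:
`∫ (L₁ g) g M₁⁻¹ ≤ − σ₀ ∫ (g − ρ[g] M₁)² M₁⁻¹`. -/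
theorem linear_boltzmann_coercivity
    (d : ℕ) (hd : 1 ≤ d) (s : ℝ) (hs0 : 0 < s) (hs1 : s < 1)
    (c : ℝ) (hc : 0 < c) (hM : ∫ v, M1 d s c v = 1)
    (σ₀ σ₁ : ℝ) (hσ₀ : 0 < σ₀) (hσ₀₁ : σ₀ ≤ σ₁)
    (σ : EuclideanSpace ℝ (Fin d) → EuclideanSpace ℝ (Fin d) → ℝ)
    (hσm : Measurable (Function.uncurry σ))
    (hσsym : ∀ v v', σ v v' = σ v' v)
    (hσlb : ∀ v v', σ₀ ≤ σ v v') (hσub : ∀ v v', σ v v' ≤ σ₁)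
    (g : EuclideanSpace ℝ (Fin d) → ℝ) (hgm : Measurable g)
    (hgL2 : Integrable (fun v => g v ^ 2 * (M1 d s c v)⁻¹)) :
    ∫ v, (∫ v', σ v v' * (g v' * M1 d s c v - g v * M1 d s c v')) * g v * (M1 d s c v)⁻¹ ≤
      -(σ₀ * ∫ v, (g v - (∫ w, g w) * M1 d s c v) ^ 2 * (M1 d s c v)⁻¹) := by
  set M : EuclideanSpace ℝ (Fin d) → ℝ := M1 d s c with hMdef
  -- basic facts about M
  have hMpos : ∀ v : EuclideanSpace ℝ (Fin d), 0 < M v := by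
    intro v
    have h1 : (0:ℝ) < 1 + ‖v‖ ^ 2 := by positivity
    exact mul_pos hc (Real.rpow_pos_of_pos h1 _)
  have hMne : ∀ v : EuclideanSpace ℝ (Fin d), M v ≠ 0 := fun v => (hMpos v).ne'
  have hMcont : Continuous M := by
    apply continuous_const.mul
    apply Continuous.rpow_const
    · exact continuous_const.add ((continuous_norm).pow 2)
    · intro x
      left
      positivity
  have hMmeas : Measurable M := hMcont.measurable
  have hMint : Integrable M := by
    by_contra h
    rw [integral_undef h] at hM
    exact one_ne_zero hM.symm
  -- A = g²/M
  set A : EuclideanSpace ℝ (Fin d) → ℝ := fun v => g v ^ 2 * (M v)⁻¹ with hAdef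
  have hAint : Integrable A := hgL2
  have hAnn : ∀ v, 0 ≤ A v := by
    intro v
    have := (hMpos v).le
    positivity
  have hAmeas : Measurable A := (hgm.pow_const 2).mul hMmeas.inv
  -- g is integrable
  have hgint : Integrable g := by
    apply Integrable.mono' ((hAint.add hMint).div_const 2) hgm.aestronglyMeasurable
    filter_upwards with v
    rw [Real.norm_eq_abs]
    have hm : 0 < M v := hMpos v
    have key : (|g v| - M v) ^ 2 * (M v)⁻¹ = g v ^ 2 * (M v)⁻¹ + M v - 2 * |g v| := by
      field_simp [hMne v]
      ring_nf
      rw [sq_abs]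
      ring
    have h0 : 0 ≤ (|g v| - M v) ^ 2 * (M v)⁻¹ := by positivity
    simp only [Pi.add_apply, hAdef]
    linarith
  -- ρ
  set ρ : ℝ := ∫ w, g w with hρdef
  -- product measure
  set pp : Measure (EuclideanSpace ℝ (Fin d) × EuclideanSpace ℝ (Fin d)) :=
    (volume : Measure (EuclideanSpace ℝ (Fin d))).prod volume with hppdef
  -- measurability on the product
  have hσm' : Measurable (fun p : EuclideanSpace ℝ (Fin d) × EuclideanSpace ℝ (Fin d) =>
    σ p.1 p.2) := hσm
  have hg1 : Measurable (fun p : EuclideanSpace ℝ (Fin d) × EuclideanSpace ℝ (Fin d) =>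
    g p.1) := hgm.comp measurable_fst
  have hg2 : Measurable (fun p : EuclideanSpace ℝ (Fin d) × EuclideanSpace ℝ (Fin d) =>
    g p.2) := hgm.comp measurable_snd
  have hM1' : Measurable (fun p : EuclideanSpace ℝ (Fin d) × EuclideanSpace ℝ (Fin d) =>
    M p.1) := hMmeas.comp measurable_fst
  have hM2' : Measurable (fun p : EuclideanSpace ℝ (Fin d) × EuclideanSpace ℝ (Fin d) =>
    M p.2) := hMmeas.comp measurable_snd
  -- the key functions on the product
  set D : EuclideanSpace ℝ (Fin d) × EuclideanSpace ℝ (Fin d) → ℝ :=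
    fun p => g p.2 * (M p.2)⁻¹ - g p.1 * (M p.1)⁻¹ with hDdef
  have hDmeas : Measurable D := (hg2.mul hM2'.inv).sub (hg1.mul hM1'.inv)
  set Φ : EuclideanSpace ℝ (Fin d) × EuclideanSpace ℝ (Fin d) → ℝ :=
    fun p => A p.1 * M p.2 - 2 * (g p.1 * g p.2) + M p.1 * A p.2 with hΦdef
  have hΦeq : ∀ p : EuclideanSpace ℝ (Fin d) × EuclideanSpace ℝ (Fin d),
      M p.1 * M p.2 * D p ^ 2 = Φ p := by
    intro p
    simp only [hΦdef, hDdef, hAdef]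
    field_simp [hMne p.1, hMne p.2]
    ring
  set Ψ : EuclideanSpace ℝ (Fin d) × EuclideanSpace ℝ (Fin d) → ℝ :=
    fun p => σ p.1 p.2 * (M p.1 * M p.2 * D p ^ 2) with hΨdef
  set G : EuclideanSpace ℝ (Fin d) × EuclideanSpace ℝ (Fin d) → ℝ :=
    fun p => σ p.1 p.2 * (g p.2 * M p.1 - g p.1 * M p.2) * (g p.1 * (M p.1)⁻¹) with hGdef
  -- product integrabilities
  have hprodgg : Integrable (fun p : EuclideanSpace ℝ (Fin d) × EuclideanSpace ℝ (Fin d) =>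
    g p.1 * g p.2) pp := hgint.mul_prod hgint
  have hprodAM : Integrable (fun p : EuclideanSpace ℝ (Fin d) × EuclideanSpace ℝ (Fin d) =>
    A p.1 * M p.2) pp := hAint.mul_prod hMint
  have hprodMA : Integrable (fun p : EuclideanSpace ℝ (Fin d) × EuclideanSpace ℝ (Fin d) =>
    M p.1 * A p.2) pp := hMint.mul_prod hAint
  have hprodabs : Integrable (fun p : EuclideanSpace ℝ (Fin d) × EuclideanSpace ℝ (Fin d) =>
    |g p.1| * |g p.2|) pp := hgint.abs.mul_prod hgint.abs
  have hsub1 : Integrable (fun p : EuclideanSpace ℝ (Fin d) × EuclideanSpace ℝ (Fin d) =>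
    A p.1 * M p.2 - 2 * (g p.1 * g p.2)) pp := hprodAM.sub (hprodgg.const_mul 2)
  have hΦint : Integrable Φ pp := hsub1.add hprodMA
  have hΦnn : ∀ p, 0 ≤ Φ p := by
    intro p
    rw [← hΦeq p]
    have := (hMpos p.1).le
    have := (hMpos p.2).le
    positivity
  have hΨint : Integrable Ψ pp := by
    apply Integrable.mono' (hΦint.const_mul σ₁)
    · exact ((hσm'.mul ((hM1'.mul hM2').mul (hDmeas.pow_const 2)))).aestronglyMeasurable
    · filter_upwards with p
      rw [Real.norm_eq_abs, hΨdef]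
      have h1 : 0 ≤ M p.1 * M p.2 * D p ^ 2 := by
        have := (hMpos p.1).le; have := (hMpos p.2).le; positivity
      have h2 : 0 < σ p.1 p.2 := lt_of_lt_of_le hσ₀ (hσlb _ _)
      rw [abs_of_nonneg (mul_nonneg h2.le h1), hΦeq p]
      exact mul_le_mul_of_nonneg_right (hσub _ _) (by rw [← hΦeq p]; exact h1)
  have hGsplit : ∀ p : EuclideanSpace ℝ (Fin d) × EuclideanSpace ℝ (Fin d),
      (g p.2 * M p.1 - g p.1 * M p.2) * (g p.1 * (M p.1)⁻¹) = g p.1 * g p.2 - A p.1 * M p.2 := by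
    intro p
    simp only [hAdef]
    field_simp [hMne p.1]
  have hGint : Integrable G pp := by
    apply Integrable.mono' ((hprodabs.add hprodAM).const_mul σ₁)
    · exact (hσm'.mul ((hg2.mul hM1').sub (hg1.mul hM2')) |>.mul
        (hg1.mul hM1'.inv)).aestronglyMeasurable
    · filter_upwards with p
      simp only [Real.norm_eq_abs, hGdef]
      have h2 : 0 < σ p.1 p.2 := lt_of_lt_of_le hσ₀ (hσlb _ _)
      rw [mul_assoc, abs_mul, hGsplit p, abs_of_nonneg h2.le]
      have hb : |g p.1 * g p.2 - A p.1 * M p.2| ≤ |g p.1| * |g p.2| + A p.1 * M p.2 := by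
        calc |g p.1 * g p.2 - A p.1 * M p.2| ≤ |g p.1 * g p.2| + |A p.1 * M p.2| :=
              abs_sub _ _
        _ = |g p.1| * |g p.2| + A p.1 * M p.2 := by
              rw [abs_mul, abs_mul, abs_of_nonneg (hAnn p.1), abs_of_nonneg (hMpos p.2).le]
      exact mul_le_mul (hσub _ _) hb (abs_nonneg _) (le_trans hσ₀.le hσ₀₁)
  -- the symmetrization identity
  have hsym : ∀ p : EuclideanSpace ℝ (Fin d) × EuclideanSpace ℝ (Fin d),
      G p + G p.swap = -Ψ p := by
    intro p
    simp only [hGdef, hΨdef, hDdef, Prod.fst_swap, Prod.snd_swap]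
    rw [hσsym p.2 p.1]
    field_simp [hMne p.1, hMne p.2]
    ring
  -- Step 1: LHS equals ∫ G over the product
  have hLHS : (∫ v, (∫ v', σ v v' * (g v' * M v - g v * M v')) * g v * (M v)⁻¹)
      = ∫ p, G p ∂pp := by
    have h1 : ∀ v, (∫ v', σ v v' * (g v' * M v - g v * M v')) * g v * (M v)⁻¹
        = ∫ v', G (v, v') := by
      intro v
      rw [mul_assoc, ← integral_mul_const]
    calc (∫ v, (∫ v', σ v v' * (g v' * M v - g v * M v')) * g v * (M v)⁻¹)
        = ∫ v, ∫ v', G (v, v') := by simp_rw [h1]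
      _ = ∫ p, G p ∂pp := (integral_prod G hGint).symm
  -- Step 2: symmetrization
  have hswapint : Integrable (fun p : EuclideanSpace ℝ (Fin d) × EuclideanSpace ℝ (Fin d) =>
      G p.swap) pp := hGint.swap
  have hswapeq : ∫ p, G p.swap ∂pp = ∫ p, G p ∂pp := integral_prod_swap G
  have h2IG : (∫ p, G p ∂pp) + (∫ p, G p ∂pp) = -∫ p, Ψ p ∂pp := by
    calc (∫ p, G p ∂pp) + (∫ p, G p ∂pp)
        = (∫ p, G p.swap ∂pp) + (∫ p, G p ∂pp) := by rw [hswapeq]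
      _ = ∫ p, (G p.swap + G p) ∂pp := (integral_add hswapint hGint).symm
      _ = ∫ p, -Ψ p ∂pp := by
          congr 1
          funext p
          have := hsym p
          linarith
      _ = -∫ p, Ψ p ∂pp := integral_neg _
  -- Step 3: coercivity of Ψ against Φ
  have hΨΦ : σ₀ * ∫ p, Φ p ∂pp ≤ ∫ p, Ψ p ∂pp := by
    have e : σ₀ * ∫ p, Φ p ∂pp = ∫ p, σ₀ * Φ p ∂pp := (integral_const_mul σ₀ Φ).symm
    rw [e]
    apply integral_mono (hΦint.const_mul σ₀) hΨint
    intro p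
    show σ₀ * Φ p ≤ Ψ p
    simp only [hΨdef]
    rw [hΦeq p]
    exact mul_le_mul_of_nonneg_right (hσlb _ _) (hΦnn p)
  -- Step 4: compute ∫ Φ
  have hintA2 : ∫ p, A p.1 * M p.2 ∂pp = ∫ v, A v := by
    rw [hppdef, integral_prod_mul, hM, mul_one]
  have hintA2' : ∫ p, M p.1 * A p.2 ∂pp = ∫ v, A v := by
    rw [hppdef, integral_prod_mul, hM, one_mul]
  have hintgg : ∫ p, g p.1 * g p.2 ∂pp = ρ ^ 2 := by
    rw [hppdef, integral_prod_mul, hρdef]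
    ring
  have hΦval : ∫ p, Φ p ∂pp = 2 * (∫ v, A v) - 2 * ρ ^ 2 := by
    have e1 : ∫ p, (A p.1 * M p.2 - 2 * (g p.1 * g p.2) + M p.1 * A p.2) ∂pp
        = (∫ p, (A p.1 * M p.2 - 2 * (g p.1 * g p.2)) ∂pp) + ∫ p, M p.1 * A p.2 ∂pp :=
      integral_add hsub1 hprodMA
    have e2 : ∫ p, (A p.1 * M p.2 - 2 * (g p.1 * g p.2)) ∂pp
        = (∫ p, A p.1 * M p.2 ∂pp) - ∫ p, 2 * (g p.1 * g p.2) ∂pp :=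
      integral_sub hprodAM (hprodgg.const_mul 2)
    have e3 : ∫ p, 2 * (g p.1 * g p.2) ∂pp = 2 * ∫ p, g p.1 * g p.2 ∂pp :=
      integral_const_mul 2 _
    calc ∫ p, Φ p ∂pp
        = ∫ p, (A p.1 * M p.2 - 2 * (g p.1 * g p.2) + M p.1 * A p.2) ∂pp := by
          simp only [hΦdef]
      _ = 2 * (∫ v, A v) - 2 * ρ ^ 2 := by
          rw [e1, e2, e3, hintA2, hintA2', hintgg]; ring
  -- Step 5: compute the RHS integral
  have hRHSval : ∫ v, (g v - ρ * M v) ^ 2 * (M v)⁻¹ = (∫ v, A v) - ρ ^ 2 := by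
    have hpt : ∀ v, (g v - ρ * M v) ^ 2 * (M v)⁻¹ = A v - 2 * ρ * g v + ρ ^ 2 * M v := by
      intro v
      simp only [hAdef]
      field_simp [hMne v]
      ring
    have i1 : Integrable (fun v => A v - 2 * ρ * g v) :=
      hAint.sub (hgint.const_mul (2 * ρ))
    have i2 : Integrable (fun v => ρ ^ 2 * M v) := hMint.const_mul (ρ ^ 2)
    have e1 : ∫ v, (A v - 2 * ρ * g v + ρ ^ 2 * M v)
        = (∫ v, (A v - 2 * ρ * g v)) + ∫ v, ρ ^ 2 * M v := integral_add i1 i2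
    have e2 : ∫ v, (A v - 2 * ρ * g v) = (∫ v, A v) - ∫ v, 2 * ρ * g v :=
      integral_sub hAint (hgint.const_mul (2 * ρ))
    have e3 : ∫ v, 2 * ρ * g v = 2 * ρ * ∫ v, g v := integral_const_mul _ _
    have e4 : ∫ v, ρ ^ 2 * M v = ρ ^ 2 * ∫ v, M v := integral_const_mul _ _
    calc ∫ v, (g v - ρ * M v) ^ 2 * (M v)⁻¹
        = ∫ v, (A v - 2 * ρ * g v + ρ ^ 2 * M v) := by simp_rw [hpt]
      _ = (∫ v, A v) - ρ ^ 2 := by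
          rw [e1, e2, e3, e4, hM, ← hρdef]; ring
  -- Conclude
  rw [hLHS, hRHSval]
  have h1 : (∫ p, G p ∂pp) = -(∫ p, Ψ p ∂pp) / 2 := by linarith
  rw [h1]
  have h2 : σ₀ * (2 * (∫ v, A v) - 2 * ρ ^ 2) ≤ ∫ p, Ψ p ∂pp := by
    rw [← hΦval]; exact hΨΦ
  linarith
end

section
/- Let d ≥ 1, s ∈ (1/2,1), α ∈ [0,1], and let g : ℝ^d → ℝ be measurable with ∫_{ℝ^d} g(v)² M₁(v)^{-1} |n·v| dv < ∞ and satisfying the Maxwell boundary relation: for almost every v with n·v < 0, g(v) = (1−α) g(Rv) + α Dg(v), where Dg(v) := c_M M₁(v) ∫_{H₊} g(w) (n·w) dw. Then ∫_{ℝ^d} g(v)² M₁(v)^{-1} (n·v) dv = α(2−α) ∫_{H₊} (g(v) − Dg(v))² M₁(v)^{-1} (n·v) dv; in particular this quantity is nonnegative. -/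
open MeasureTheory Real

/-- The half-space `H₊ = {v : n·v > 0}` of outgoing velocities. -/
def Hplus (d : ℕ) (n : EuclideanSpace ℝ (Fin d)) : Set (EuclideanSpace ℝ (Fin d)) :=
  {v | 0 < (inner ℝ n v : ℝ)}

/-- The diffusive boundary operator `D h(v) = c_M M₁(v) ∫_{H₊} h(w) (n·w) dw`,
with `c_M := (∫_{H₊} M₁(w) (n·w) dw)⁻¹`. -/
noncomputable def Dop (d : ℕ) (s c : ℝ) (n : EuclideanSpace ℝ (Fin d))
    (h : EuclideanSpace ℝ (Fin d) → ℝ) (v : EuclideanSpace ℝ (Fin d)) : ℝ :=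
  (∫ w in Hplus d n, M1 d s c w * (inner ℝ n w : ℝ))⁻¹ * M1 d s c v *
    ∫ w in Hplus d n, h w * (inner ℝ n w : ℝ)

/-- The specular reflection `R v = v − 2 (n·v) n`. -/
noncomputable def Refl (d : ℕ) (n v : EuclideanSpace ℝ (Fin d)) :
    EuclideanSpace ℝ (Fin d) :=
  v - (2 * (inner ℝ n v : ℝ)) • n

section aux
variable {d : ℕ} {s c : ℝ} {n : EuclideanSpace ℝ (Fin d)}

lemma M1_pos (hc : 0 < c) (v : EuclideanSpace ℝ (Fin d)) : 0 < M1 d s c v := by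
  have : (0:ℝ) < 1 + ‖v‖ ^ 2 := by positivity
  unfold M1; positivity

lemma M1_measurable : Measurable (M1 d s c) := by
  unfold M1; fun_prop

lemma inner_measurable : Measurable (fun v : EuclideanSpace ℝ (Fin d) => (inner ℝ n v : ℝ)) :=
  (continuous_const.inner continuous_id).measurable

/-- reflection isometry -/
noncomputable def reflIso (d : ℕ) (n : EuclideanSpace ℝ (Fin d)) :
    EuclideanSpace ℝ (Fin d) ≃ₗᵢ[ℝ] EuclideanSpace ℝ (Fin d) :=
  (Submodule.reflection (ℝ ∙ n)).trans (LinearIsometryEquiv.neg ℝ)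

lemma reflIso_apply (hn : ‖n‖ = 1) (v : EuclideanSpace ℝ (Fin d)) :
    reflIso d n v = Refl d n v := by
  simp only [reflIso, LinearIsometryEquiv.trans_apply, LinearIsometryEquiv.coe_neg,
    Submodule.reflection_singleton_apply, hn, Refl]
  norm_num
  module

lemma inner_refl (hn : ‖n‖ = 1) (v : EuclideanSpace ℝ (Fin d)) :
    (inner ℝ n (Refl d n v) : ℝ) = -(inner ℝ n v : ℝ) := by
  have h : (inner ℝ n n : ℝ) = 1 := by
    rw [real_inner_self_eq_norm_sq, hn]; norm_num
  simp only [Refl, inner_sub_right, real_inner_smul_right, h]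
  ring

lemma refl_refl (hn : ‖n‖ = 1) (v : EuclideanSpace ℝ (Fin d)) :
    Refl d n (Refl d n v) = v := by
  rw [Refl, inner_refl hn]
  rw [Refl]
  module

lemma M1_refl (hn : ‖n‖ = 1) (v : EuclideanSpace ℝ (Fin d)) :
    M1 d s c (Refl d n v) = M1 d s c v := by
  unfold M1
  rw [← reflIso_apply hn, LinearIsometryEquiv.norm_map]

lemma integrable_M1_inner (hd : 1 ≤ d) (hs0 : 1 / 2 < s) (hn : ‖n‖ = 1) (hc : 0 < c) :
    Integrable (fun v : EuclideanSpace ℝ (Fin d) =>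
      M1 d s c v * |(inner ℝ n v : ℝ)|) := by
  have hfin : ((Module.finrank ℝ (EuclideanSpace ℝ (Fin d))) : ℝ) < (d : ℝ) + 2 * s - 1 := by
    rw [finrank_euclideanSpace_fin]
    linarith
  have hint : Integrable (fun v : EuclideanSpace ℝ (Fin d) =>
      c * ((1:ℝ) + ‖v‖ ^ 2) ^ (-((d : ℝ) + 2 * s - 1) / 2)) :=
    (integrable_rpow_neg_one_add_norm_sq hfin).const_mul c
  refine hint.mono' ?_ (Filter.Eventually.of_forall fun v => ?_)
  · exact (M1_measurable.mul inner_measurable.abs).aestronglyMeasurable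
  · have hb : (0:ℝ) < 1 + ‖v‖ ^ 2 := by positivity
    have h1 : |(inner ℝ n v : ℝ)| ≤ ((1:ℝ) + ‖v‖ ^ 2) ^ ((1:ℝ)/2) := by
      have := abs_real_inner_le_norm n v
      rw [hn, one_mul] at this
      refine this.trans ?_
      rw [← Real.sqrt_eq_rpow]
      calc ‖v‖ = Real.sqrt (‖v‖ ^ 2) := by rw [Real.sqrt_sq (norm_nonneg v)]
        _ ≤ Real.sqrt (1 + ‖v‖ ^ 2) := Real.sqrt_le_sqrt (by linarith)
    have hM : 0 < M1 d s c v := M1_pos hc v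
    rw [Real.norm_eq_abs, abs_of_nonneg (by positivity : (0:ℝ) ≤ M1 d s c v * |(inner ℝ n v : ℝ)|)]
    unfold M1
    calc c * (1 + ‖v‖ ^ 2) ^ (-((d : ℝ) + 2 * s) / 2) * |(inner ℝ n v : ℝ)|
        ≤ c * (1 + ‖v‖ ^ 2) ^ (-((d : ℝ) + 2 * s) / 2) * ((1:ℝ) + ‖v‖ ^ 2) ^ ((1:ℝ)/2) := by
          have : (0:ℝ) ≤ c * (1 + ‖v‖ ^ 2) ^ (-((d : ℝ) + 2 * s) / 2) := by positivity
          exact mul_le_mul_of_nonneg_left h1 this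
      _ = c * ((1:ℝ) + ‖v‖ ^ 2) ^ (-((d : ℝ) + 2 * s - 1) / 2) := by
          rw [mul_assoc, ← Real.rpow_add hb]
          ring_nf

end aux

lemma integral_comb {X : Type*} [MeasurableSpace X] {μ : Measure X}
    {f1 f2 f3 : X → ℝ} (h1 : Integrable f1 μ) (h2 : Integrable f2 μ)
    (h3 : Integrable f3 μ) (a b e : ℝ) :
    ∫ v, (a * f1 v + b * f2 v + e * f3 v) ∂μ =
      a * ∫ v, f1 v ∂μ + b * ∫ v, f2 v ∂μ + e * ∫ v, f3 v ∂μ := by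
  have ha : Integrable (fun v => a * f1 v + b * f2 v) μ := (h1.const_mul a).add (h2.const_mul b)
  rw [integral_add ha (h3.const_mul e), integral_add (h1.const_mul a) (h2.const_mul b),
    integral_const_mul, integral_const_mul, integral_const_mul]

lemma amgm_bound {gv Mv iv : ℝ} (hM : 0 < Mv) :
    |gv * iv| ≤ (gv ^ 2 * Mv⁻¹ * |iv| + Mv * |iv|) / 2 := by
  have key : 2 * |gv| ≤ gv ^ 2 * Mv⁻¹ + Mv := by
    have h := two_mul_le_add_sq (|gv| * Real.sqrt Mv⁻¹) (Real.sqrt Mv)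
    have hs : Real.sqrt Mv⁻¹ * Real.sqrt Mv = 1 := by
      rw [← Real.sqrt_mul (by positivity), inv_mul_cancel₀ hM.ne', Real.sqrt_one]
    have h1 : |gv| * Real.sqrt Mv⁻¹ * Real.sqrt Mv = |gv| := by
      rw [mul_assoc, hs, mul_one]
    have h2 : (|gv| * Real.sqrt Mv⁻¹) ^ 2 = gv ^ 2 * Mv⁻¹ := by
      rw [mul_pow, sq_abs, Real.sq_sqrt (by positivity)]
    have h3 : (Real.sqrt Mv) ^ 2 = Mv := Real.sq_sqrt hM.le
    linarith [h, h1, h2, h3]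
  have := mul_le_mul_of_nonneg_right key (abs_nonneg iv)
  rw [abs_mul]
  nlinarith [abs_nonneg gv, abs_nonneg iv]


/-- If `g` satisfies the Maxwell boundary relation `g(v) = (1−α) g(Rv) + α Dg(v)` for
a.e. incoming `v`, then
`∫ g² M₁⁻¹ (n·v) dv = α(2−α) ∫_{H₊} (g − Dg)² M₁⁻¹ (n·v) dv`, which is nonnegative. -/
theorem maxwell_boundary_dissipation
    (d : ℕ) (hd : 1 ≤ d) (s : ℝ) (hs0 : 1 / 2 < s) (hs1 : s < 1)
    (c : ℝ) (hc : 0 < c) (hM : ∫ v, M1 d s c v = 1)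
    (n : EuclideanSpace ℝ (Fin d)) (hn : ‖n‖ = 1)
    (α : ℝ) (hα0 : 0 ≤ α) (hα1 : α ≤ 1)
    (g : EuclideanSpace ℝ (Fin d) → ℝ) (hgm : Measurable g)
    (hgL2 : Integrable (fun v => g v ^ 2 * (M1 d s c v)⁻¹ * |(inner ℝ n v : ℝ)|))
    (hbc : ∀ᵐ v ∂(volume : Measure (EuclideanSpace ℝ (Fin d))),
      (inner ℝ n v : ℝ) < 0 →
        g v = (1 - α) * g (Refl d n v) + α * Dop d s c n g v) :
    (∫ v, g v ^ 2 * (M1 d s c v)⁻¹ * (inner ℝ n v : ℝ)) =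
      α * (2 - α) *
        ∫ v in Hplus d n,
          (g v - Dop d s c n g v) ^ 2 * (M1 d s c v)⁻¹ * (inner ℝ n v : ℝ) ∧
    0 ≤ ∫ v, g v ^ 2 * (M1 d s c v)⁻¹ * (inner ℝ n v : ℝ) := by
  have hMpos : ∀ v, 0 < M1 d s c v := M1_pos hc
  have hmι : Measurable (fun v : EuclideanSpace ℝ (Fin d) => (inner ℝ n v : ℝ)) :=
    inner_measurable
  have hmM : Measurable (M1 d s c) := M1_measurable
  set f1 : EuclideanSpace ℝ (Fin d) → ℝ :=
    fun v => g v ^ 2 * (M1 d s c v)⁻¹ * (inner ℝ n v : ℝ) with hf1d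
  set f2 : EuclideanSpace ℝ (Fin d) → ℝ := fun v => g v * (inner ℝ n v : ℝ) with hf2d
  set f3 : EuclideanSpace ℝ (Fin d) → ℝ := fun v => M1 d s c v * (inner ℝ n v : ℝ) with hf3d
  have hmf1 : Measurable f1 := ((hgm.pow_const 2).mul hmM.inv).mul hmι
  have hMabs : Integrable (fun v => M1 d s c v * |(inner ℝ n v : ℝ)|) :=
    integrable_M1_inner hd hs0 hn hc
  have hf1 : Integrable f1 := by
    refine hgL2.mono' hmf1.aestronglyMeasurable (Filter.Eventually.of_forall fun v => ?_)
    have h0 : (0:ℝ) ≤ g v ^ 2 * (M1 d s c v)⁻¹ :=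
      mul_nonneg (sq_nonneg _) (inv_nonneg.2 (hMpos v).le)
    simp only [hf1d, Real.norm_eq_abs, abs_mul, abs_of_nonneg h0]
    exact le_rfl
  have hf3 : Integrable f3 := by
    refine hMabs.mono' (hmM.mul hmι).aestronglyMeasurable
      (Filter.Eventually.of_forall fun v => ?_)
    simp only [hf3d, Real.norm_eq_abs, abs_mul, abs_of_nonneg (hMpos v).le]
    exact le_rfl
  have hf2 : Integrable f2 := by
    refine ((hgL2.add hMabs).div_const 2).mono' (hgm.mul hmι).aestronglyMeasurable
      (Filter.Eventually.of_forall fun v => ?_)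
    simpa [hf2d] using amgm_bound (gv := g v) (iv := (inner ℝ n v : ℝ)) (hMpos v)
  have hHp : MeasurableSet (Hplus d n) := by
    have : IsOpen (Hplus d n) :=
      isOpen_lt continuous_const (continuous_const.inner continuous_id)
    exact this.measurableSet
  have hnn : (inner ℝ n n : ℝ) = 1 := by rw [real_inner_self_eq_norm_sq, hn]; norm_num
  have hnull : (volume : Measure (EuclideanSpace ℝ (Fin d)))
      {v | (inner ℝ n v : ℝ) = 0} = 0 := by
    have hset : {v : EuclideanSpace ℝ (Fin d) | (inner ℝ n v : ℝ) = 0} =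
        (((ℝ ∙ n)ᗮ : Submodule ℝ (EuclideanSpace ℝ (Fin d))) : Set _) := by
      ext v
      rw [Set.mem_setOf_eq, SetLike.mem_coe,
        Submodule.mem_orthogonal_singleton_iff_inner_left, real_inner_comm]
    rw [hset]
    refine Measure.addHaar_submodule _ _ ?_
    intro htop
    have : n ∈ (ℝ ∙ n)ᗮ := htop ▸ Submodule.mem_top
    rw [Submodule.mem_orthogonal_singleton_iff_inner_left] at this
    rw [real_inner_comm] at this
    rw [this] at hnn
    exact one_ne_zero hnn.symm
  -- split the full integral
  have hsplit : (∫ v, f1 v) =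
      (∫ v in Hplus d n, f1 v) + ∫ v in {v | (inner ℝ n v : ℝ) < 0}, f1 v := by
    have h1 := integral_add_compl hHp hf1
    have hae : ((Hplus d n)ᶜ : Set (EuclideanSpace ℝ (Fin d))) =ᵐ[(volume : Measure (EuclideanSpace ℝ (Fin d)))]
        {v | (inner ℝ n v : ℝ) < 0} := by
      have hne : ∀ᵐ v ∂(volume : Measure (EuclideanSpace ℝ (Fin d))),
          (inner ℝ n v : ℝ) ≠ 0 := by
        rw [ae_iff]; simpa using hnull
      rw [Filter.eventuallyEq_set]
      filter_upwards [hne] with v hv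
      change (¬ (0:ℝ) < (inner ℝ n v : ℝ)) ↔ (inner ℝ n v : ℝ) < 0
      rw [not_lt]
      exact ⟨fun h => lt_of_le_of_ne h hv, fun h => h.le⟩
    rw [setIntegral_congr_set hae] at h1
    linarith [h1]
  -- reflection
  have hRapp : ∀ v, reflIso d n v = Refl d n v := reflIso_apply hn
  have hRmp : MeasurePreserving (reflIso d n)
      (volume : Measure (EuclideanSpace ℝ (Fin d))) volume :=
    (reflIso d n).measurePreserving
  have hemb : MeasurableEmbedding (reflIso d n) :=
    (reflIso d n).toHomeomorph.measurableEmbedding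
  have hpre : (reflIso d n) ⁻¹' {v | (inner ℝ n v : ℝ) < 0} = Hplus d n := by
    ext w
    simp only [Set.mem_preimage, Set.mem_setOf_eq, Hplus, hRapp, inner_refl hn]
    constructor <;> intro h <;> linarith
  have hchg : ∫ v in {v | (inner ℝ n v : ℝ) < 0}, f1 v =
      ∫ w in Hplus d n, f1 (reflIso d n w) := by
    rw [← hRmp.setIntegral_preimage_emb hemb f1 _, hpre]
  -- the constant κ
  set A : ℝ := ∫ w in Hplus d n, f2 w with hA
  set Mb : ℝ := ∫ w in Hplus d n, f3 w with hMb
  set κ : ℝ := Mb⁻¹ * A with hκ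
  have hDop : ∀ v, Dop d s c n g v = κ * M1 d s c v := by
    intro v
    show (∫ w in Hplus d n, M1 d s c w * (inner ℝ n w : ℝ))⁻¹ * M1 d s c v *
      (∫ w in Hplus d n, g w * (inner ℝ n w : ℝ)) = κ * M1 d s c v
    rw [hκ, hMb, hA, hf2d, hf3d]
    ring
  -- boundary condition transported to H₊
  have hbcH : ∀ᵐ w ∂((volume : Measure (EuclideanSpace ℝ (Fin d))).restrict (Hplus d n)),
      g (Refl d n w) = (1 - α) * g w + α * (κ * M1 d s c w) := by
    have h1 : ∀ᵐ w ∂(volume : Measure (EuclideanSpace ℝ (Fin d))),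
        (inner ℝ n (reflIso d n w) : ℝ) < 0 →
        g (reflIso d n w) = (1 - α) * g (Refl d n (reflIso d n w)) +
          α * Dop d s c n g (reflIso d n w) :=
      hRmp.quasiMeasurePreserving.tendsto_ae.eventually hbc
    refine (ae_restrict_iff' hHp).2 ?_
    filter_upwards [h1] with w hw hwH
    have hiw : (0:ℝ) < (inner ℝ n w : ℝ) := hwH
    rw [hRapp] at hw
    have h2 := hw (by rw [inner_refl hn]; linarith)
    rw [refl_refl hn, hDop, M1_refl hn] at h2
    exact h2
  -- substitute on the reflected integral
  have hsub : ∫ w in Hplus d n, f1 (reflIso d n w) =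
      ∫ w in Hplus d n,
        (-((1-α)^2 * f1 w + (2*α*(1-α)*κ) * f2 w + (α^2*κ^2) * f3 w)) := by
    refine integral_congr_ae ?_
    filter_upwards [hbcH] with w hw
    have hMv := hMpos w
    have hMne : M1 d s c w ≠ 0 := hMv.ne'
    simp only [hf1d, hf2d, hf3d, hRapp]
    rw [M1_refl hn, inner_refl hn, hw]
    field_simp
    ring
  set I1 : ℝ := ∫ v in Hplus d n, f1 v with hI1
  have hval : ∫ v in {v | (inner ℝ n v : ℝ) < 0}, f1 v =
      -((1-α)^2 * I1 + (2*α*(1-α)*κ) * A + (α^2*κ^2) * Mb) := by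
    rw [hchg, hsub, integral_neg,
      integral_comb hf1.restrict hf2.restrict hf3.restrict]
  -- right-hand side
  have hRHS : (∫ v in Hplus d n,
      (g v - Dop d s c n g v) ^ 2 * (M1 d s c v)⁻¹ * (inner ℝ n v : ℝ)) =
      1 * I1 + (-(2*κ)) * A + (κ^2) * Mb := by
    rw [hI1, hA, hMb, ← integral_comb hf1.restrict hf2.restrict hf3.restrict]
    refine integral_congr_ae (Filter.Eventually.of_forall fun v => ?_)
    have hMv := hMpos v
    have hMne : M1 d s c v ≠ 0 := hMv.ne'
    simp only [hDop, hf1d, hf2d, hf3d]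
    field_simp
    ring
  have hXY : κ * A = κ^2 * Mb := by
    by_cases hMb0 : Mb = 0
    · simp [hκ, hMb0]
    · rw [hκ]; field_simp
  have hmain : (∫ v, f1 v) =
      α * (2 - α) * ∫ v in Hplus d n,
        (g v - Dop d s c n g v) ^ 2 * (M1 d s c v)⁻¹ * (inner ℝ n v : ℝ) := by
    rw [hsplit, hval, hRHS]
    linear_combination (2*α) * hXY
  constructor
  · exact hmain
  · rw [hmain]
    have h1 : (0:ℝ) ≤ α * (2 - α) := by nlinarith
    refine mul_nonneg h1 (setIntegral_nonneg hHp fun v hv => ?_)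
    have hv' : (0:ℝ) < (inner ℝ n v : ℝ) := hv
    have := hMpos v
    positivity
end

section
/- Let d ≥ 1 and s ∈ (0,1). There exists C > 0 depending only on d and s such that for all ε ∈ (0,1], ∫_{ℝ^d} M₁(v) ε²|v|² (1+ε²|v|²)^{-1} dv ≤ C ε^{2s}. -/
open MeasureTheory Real

/-! In polar coordinates the integral is `d |B₁| ∫₀^∞ r^{d-1} c ⟨r⟩^{-(d+2s)} ε²r² ⟨εr⟩⁻² dr`.
Bounding `⟨r⟩^{-(d+2s)} ≤ r^{-(d+2s)}` and `t / (1 + t) ≤ min 1 t` leaves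
`c ∫₀^∞ r^{-1-2s} min(1, ε²r²) dr`, which splits at `r = 1/ε` into
`ε² ∫₀^{1/ε} r^{1-2s} dr = ε^{2s}/(2-2s)` and `∫_{1/ε}^∞ r^{-1-2s} dr = ε^{2s}/(2s)`. -/

open Set

noncomputable def radialMajorant (p ε r : ℝ) : ℝ :=
  r ^ (-(1 + p)) * min 1 (ε ^ 2 * r ^ 2)

section radialMajorant

variable {p ε : ℝ}

lemma radialMajorant_eq_of_mem_Ioc (hε : 0 < ε) {r : ℝ} (hr : r ∈ Ioc 0 ε⁻¹) :
    radialMajorant p ε r = ε ^ 2 * r ^ (1 - p) := by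
  have hεr : ε * r ≤ 1 := (le_inv_mul_iff₀ hε).1 (by rw [mul_one]; exact hr.2)
  have hmin : min 1 (ε ^ 2 * r ^ 2) = ε ^ 2 * r ^ 2 := by
    rw [min_eq_right]; nlinarith [mul_pos hε hr.1]
  rw [radialMajorant, hmin, ← rpow_natCast r 2, mul_left_comm, ← rpow_add hr.1]
  congr 2; ring

lemma radialMajorant_eq_of_mem_Ioi (hε : 0 < ε) {r : ℝ} (hr : r ∈ Ioi ε⁻¹) :
    radialMajorant p ε r = r ^ (-(1 + p)) := by
  have hεr : 1 < ε * r := (inv_lt_iff_one_lt_mul₀' hε).1 hr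
  rw [radialMajorant, min_eq_left (by nlinarith), mul_one]

lemma integrableOn_radialMajorant_Ioc (hp : p < 2) (hε : 0 < ε) :
    IntegrableOn (radialMajorant p ε) (Ioc 0 ε⁻¹) := by
  refine IntegrableOn.congr_fun ?_ (fun r hr => (radialMajorant_eq_of_mem_Ioc hε hr).symm)
    measurableSet_Ioc
  exact ((intervalIntegrable_iff_integrableOn_Ioc_of_le (inv_pos.2 hε).le).1
    (intervalIntegral.intervalIntegrable_rpow' (by linarith))).const_mul _

lemma setIntegral_radialMajorant_Ioc (hp : p < 2) (hε : 0 < ε) :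
    ∫ r in Ioc 0 ε⁻¹, radialMajorant p ε r = ε ^ p / (2 - p) := by
  rw [setIntegral_congr_fun measurableSet_Ioc (fun r hr => radialMajorant_eq_of_mem_Ioc hε hr),
    integral_const_mul, ← intervalIntegral.integral_of_le (inv_pos.2 hε).le,
    integral_rpow (Or.inl (by linarith)), zero_rpow (by linarith), sub_zero,
    show 1 - p + 1 = 2 - p by ring, inv_rpow hε.le, ← rpow_natCast, Nat.cast_ofNat,
    mul_div_assoc', ← div_eq_mul_inv, ← rpow_sub hε, sub_sub_cancel]

lemma integrableOn_radialMajorant_Ioi (hp : 0 < p) (hε : 0 < ε) :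
    IntegrableOn (radialMajorant p ε) (Ioi ε⁻¹) :=
  (integrableOn_Ioi_rpow_of_lt (by linarith) (inv_pos.2 hε)).congr_fun
    (fun r hr => (radialMajorant_eq_of_mem_Ioi hε hr).symm) measurableSet_Ioi

lemma setIntegral_radialMajorant_Ioi (hp : 0 < p) (hε : 0 < ε) :
    ∫ r in Ioi ε⁻¹, radialMajorant p ε r = ε ^ p / p := by
  rw [setIntegral_congr_fun measurableSet_Ioi (fun r hr => radialMajorant_eq_of_mem_Ioi hε hr),
    integral_Ioi_rpow_of_lt (by linarith) (inv_pos.2 hε), show -(1 + p) + 1 = -p by ring,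
    inv_rpow hε.le, rpow_neg hε.le, inv_inv, neg_div_neg_eq]

lemma integrableOn_radialMajorant (hp0 : 0 < p) (hp2 : p < 2) (hε : 0 < ε) :
    IntegrableOn (radialMajorant p ε) (Ioi 0) := by
  rw [← Ioc_union_Ioi_eq_Ioi (inv_pos.2 hε).le]
  exact (integrableOn_radialMajorant_Ioc hp2 hε).union (integrableOn_radialMajorant_Ioi hp0 hε)

lemma integral_radialMajorant (hp0 : 0 < p) (hp2 : p < 2) (hε : 0 < ε) :
    ∫ r in Ioi 0, radialMajorant p ε r = (1 / (2 - p) + 1 / p) * ε ^ p := by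
  rw [← Ioc_union_Ioi_eq_Ioi (inv_pos.2 hε).le, setIntegral_union (Ioc_disjoint_Ioi le_rfl)
    measurableSet_Ioi (integrableOn_radialMajorant_Ioc hp2 hε)
    (integrableOn_radialMajorant_Ioi hp0 hε), setIntegral_radialMajorant_Ioc hp2 hε,
    setIntegral_radialMajorant_Ioi hp0 hε]
  ring

end radialMajorant

lemma one_add_sq_rpow_neg_le {r a : ℝ} (hr : 0 < r) (ha : 0 ≤ a) :
    (1 + r ^ 2) ^ (-a / 2) ≤ r ^ (-a) := by
  calc (1 + r ^ 2) ^ (-a / 2) ≤ (r ^ 2) ^ (-a / 2) :=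
        rpow_le_rpow_of_nonpos (by positivity) (by linarith) (by linarith)
    _ = r ^ (-a) := by rw [← rpow_natCast, ← rpow_mul hr.le]; ring_nf

lemma mul_inv_one_add_le_min {t : ℝ} (ht : 0 ≤ t) : t * (1 + t)⁻¹ ≤ min 1 t := by
  rw [← div_eq_mul_inv]
  exact le_min ((div_le_one (by positivity)).2 (by linarith))
    (div_le_self ht (by linarith))

noncomputable def twistedProfile (d : ℕ) (s c ε r : ℝ) : ℝ :=
  c * (1 + r ^ 2) ^ (-((d : ℝ) + 2 * s) / 2) * (ε ^ 2 * r ^ 2) * (1 + ε ^ 2 * r ^ 2)⁻¹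

section twistedProfile

variable {d : ℕ} {s c ε : ℝ}

lemma integral_M1_mul_eq (hd : 1 ≤ d) :
    ∫ v, M1 d s c v * (ε ^ 2 * ‖v‖ ^ 2) * (1 + ε ^ 2 * ‖v‖ ^ 2)⁻¹ =
      d * volume.real (Metric.ball (0 : EuclideanSpace ℝ (Fin d)) 1) *
        ∫ r in Ioi 0, r ^ (d - 1) * twistedProfile d s c ε r := by
  have : Nontrivial (EuclideanSpace ℝ (Fin d)) :=
    Module.nontrivial_of_finrank_pos (R := ℝ) (by simp only [finrank_euclideanSpace_fin]; omega)
  have h := integral_fun_norm_addHaar (volume : Measure (EuclideanSpace ℝ (Fin d)))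
    (twistedProfile d s c ε)
  simp only [finrank_euclideanSpace_fin, nsmul_eq_mul, smul_eq_mul] at h
  rw [mul_assoc]
  exact h

lemma pow_mul_twistedProfile_le (hd : 1 ≤ d) (hs : 0 ≤ s) (hc : 0 ≤ c) {r : ℝ} (hr : 0 < r) :
    r ^ (d - 1) * twistedProfile d s c ε r ≤ c * radialMajorant (2 * s) ε r := by
  have hpow : r ^ (d - 1) * r ^ (-((d : ℝ) + 2 * s)) = r ^ (-(1 + 2 * s)) := by
    rw [← rpow_natCast, ← rpow_add hr, Nat.cast_sub hd]; ring_nf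
  have hdecay : r ^ (d - 1) * (1 + r ^ 2) ^ (-((d : ℝ) + 2 * s) / 2) ≤ r ^ (-(1 + 2 * s)) := by
    rw [← hpow]
    exact mul_le_mul_of_nonneg_left (one_add_sq_rpow_neg_le hr (by positivity)) (by positivity)
  calc _ = c * (r ^ (d - 1) * (1 + r ^ 2) ^ (-((d : ℝ) + 2 * s) / 2)) *
        ((ε ^ 2 * r ^ 2) * (1 + ε ^ 2 * r ^ 2)⁻¹) := by rw [twistedProfile]; ring
    _ ≤ c * r ^ (-(1 + 2 * s)) * min 1 (ε ^ 2 * r ^ 2) := by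
        gcongr
        exact mul_inv_one_add_le_min (by positivity)
    _ = c * radialMajorant (2 * s) ε r := by rw [radialMajorant, mul_assoc]

lemma setIntegral_pow_mul_twistedProfile_le (hd : 1 ≤ d) (hs0 : 0 < s) (hs1 : s < 1)
    (hc : 0 ≤ c) (hε : 0 < ε) :
    ∫ r in Ioi 0, r ^ (d - 1) * twistedProfile d s c ε r ≤
      c * ((1 / (2 - 2 * s) + 1 / (2 * s)) * ε ^ (2 * s)) := by
  have hp0 : 0 < 2 * s := by linarith
  have hp2 : 2 * s < 2 := by linarith
  rw [← integral_radialMajorant hp0 hp2 hε, ← integral_const_mul]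
  refine integral_mono_of_nonneg (ae_restrict_of_forall_mem measurableSet_Ioi fun r hr => ?_)
    ((integrableOn_radialMajorant hp0 hp2 hε).const_mul c)
    (ae_restrict_of_forall_mem measurableSet_Ioi fun r hr =>
      pow_mul_twistedProfile_le hd hs0.le hc hr)
  have : (0 : ℝ) < r := hr
  unfold twistedProfile
  positivity

end twistedProfile

theorem twisted_mass_defect_bound_general
    (d : ℕ) (hd : 1 ≤ d) (s : ℝ) (hs0 : 0 < s) (hs1 : s < 1)
    (c : ℝ) (hc : 0 < c) :
    ∃ C > 0, ∀ ε ∈ Set.Ioc (0 : ℝ) 1,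
      ∫ v, M1 d s c v * (ε ^ 2 * ‖v‖ ^ 2) * (1 + ε ^ 2 * ‖v‖ ^ 2)⁻¹ ≤
        C * ε ^ (2 * s) := by
  set κ := volume.real (Metric.ball (0 : EuclideanSpace ℝ (Fin d)) 1)
  set K := 1 / (2 - 2 * s) + 1 / (2 * s)
  have hκ : 0 < κ :=
    ENNReal.toReal_pos (Metric.measure_ball_pos _ _ one_pos).ne' measure_ball_lt_top.ne
  have hK : 0 < K := by
    have : 0 < 2 - 2 * s := by linarith
    positivity
  have hd' : (0 : ℝ) < d := by exact_mod_cast hd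
  refine ⟨d * κ * (c * K), by positivity, fun ε hε => ?_⟩
  calc _ = d * κ * ∫ r in Ioi 0, r ^ (d - 1) * twistedProfile d s c ε r := integral_M1_mul_eq hd
    _ ≤ d * κ * (c * (K * ε ^ (2 * s))) := by
        gcongr
        exact setIntegral_pow_mul_twistedProfile_le hd hs0 hs1 hc.le hε.1
    _ = d * κ * (c * K) * ε ^ (2 * s) := by ring

/-- `∫ M₁(v) ε²|v|² ⟨εv⟩⁻² dv ≤ C ε^{2s}` uniformly for `ε ∈ (0,1]`. -/
theorem twisted_mass_defect_bound
    (d : ℕ) (hd : 1 ≤ d) (s : ℝ) (hs0 : 0 < s) (hs1 : s < 1)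
    (c : ℝ) (hc : 0 < c) (hM : ∫ v, M1 d s c v = 1) :
    ∃ C > 0, ∀ ε ∈ Set.Ioc (0 : ℝ) 1,
      ∫ v, M1 d s c v * (ε ^ 2 * ‖v‖ ^ 2) * (1 + ε ^ 2 * ‖v‖ ^ 2)⁻¹ ≤
        C * ε ^ (2 * s) :=
  twisted_mass_defect_bound_general d hd s hs0 hs1 c hc
end

section
/- Let d ≥ 1 and s ∈ (0,1). There exists C > 0 depending only on d and s such that for all ε ∈ (0,1], ∫_{ℝ^d} M₁(v) |v|² (1+ε²|v|²)^{-2} dv ≤ C ε^{2s−2}. -/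
open MeasureTheory Real

section Aux

open Set Metric Module

lemma aux_1d {q : ℝ} (hq : -1 < q) :
    Integrable ((Set.Icc (-1:ℝ) 1).indicator (fun x => |x| ^ q)) := by
  rw [integrable_indicator_iff measurableSet_Icc]
  have h1 : IntegrableOn (fun x : ℝ => |x| ^ q) (Set.Icc 0 1) := by
    rw [integrableOn_Icc_iff_integrableOn_Ioc]
    have h := (intervalIntegral.intervalIntegrable_rpow' (a := 0) (b := 1) hq).1
    exact h.congr_fun (fun x hx => by rw [abs_of_pos hx.1]) measurableSet_Ioc
  have h2 : IntegrableOn (fun x : ℝ => |x| ^ q) (Set.Icc (-1) 0) := by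
    rw [← Measure.map_neg_eq_self (volume : Measure ℝ)]
    have m : MeasurableEmbedding fun x : ℝ => -x := (Homeomorph.neg ℝ).measurableEmbedding
    rw [m.integrableOn_map_iff]
    simp_rw [Function.comp_def, abs_neg]
    have : (fun x : ℝ => -x) ⁻¹' Set.Icc (-1) 0 = Set.Icc 0 1 := by
      ext x; simp [neg_le, le_neg]
    rw [this]; exact h1
  have h3 := h2.union h1
  rwa [Set.Icc_union_Icc_eq_Icc (by norm_num) (by norm_num)] at h3

lemma aux_euc (d : ℕ) {q : ℝ} (hq : -1 < q) :
    Integrable (fun w : EuclideanSpace ℝ (Fin d) =>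
      ∏ i, (Set.Icc (-1:ℝ) 1).indicator (fun x => |x| ^ q) (w i)) := by
  have e := EuclideanSpace.volume_preserving_symm_measurableEquiv_toLp (Fin d)
  have hp : Integrable (fun w : Fin d → ℝ =>
      ∏ i, (Set.Icc (-1:ℝ) 1).indicator (fun x => |x| ^ q) (w i)) :=
    Integrable.fintype_prod (fun _ => aux_1d hq)
  exact (e.integrable_comp_emb
    (MeasurableEquiv.toLp 2 (Fin d → ℝ)).symm.measurableEmbedding).2 hp

lemma aux_ae (d : ℕ) :
    ∀ᵐ w : EuclideanSpace ℝ (Fin d), ∀ i, w i ≠ 0 := by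
  rw [ae_all_iff]
  intro i
  have e := EuclideanSpace.volume_preserving_symm_measurableEquiv_toLp (Fin d)
  have hms : MeasurableSet {x : Fin d → ℝ | x i = 0} :=
    measurable_pi_apply i (measurableSet_singleton 0)
  have h0 : (volume : Measure (Fin d → ℝ)) {x | x i = 0} = 0 := by
    exact Measure.pi_hyperplane (fun _ : Fin d => (volume : Measure ℝ)) i 0
  have hpre : volume {w : EuclideanSpace ℝ (Fin d) | w i = 0} = 0 := by
    have := e.measure_preimage hms.nullMeasurableSet
    simpa [h0] using this
  rw [ae_iff]
  simpa using hpre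

lemma coord_le_norm {d : ℕ} (w : EuclideanSpace ℝ (Fin d)) (i : Fin d) :
    |w i| ≤ ‖w‖ := by
  rw [EuclideanSpace.norm_eq, ← Real.sqrt_sq_eq_abs]
  apply Real.sqrt_le_sqrt
  calc w i ^ 2 = ‖w i‖ ^ 2 := by rw [Real.norm_eq_abs, sq_abs]
    _ ≤ ∑ j, ‖w j‖ ^ 2 :=
      Finset.single_le_sum (f := fun j => ‖w j‖ ^ 2) (fun j _ => by positivity)
        (Finset.mem_univ i)

lemma integrable_G (d : ℕ) (hd : 1 ≤ d) {s : ℝ} (hs0 : 0 < s) (hs1 : s < 1) :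
    Integrable (fun w : EuclideanSpace ℝ (Fin d) =>
      ‖w‖ ^ (2 - (d:ℝ) - 2*s) * ((1 + ‖w‖ ^ 2) ^ 2)⁻¹) := by
  set p : ℝ := 2 - (d:ℝ) - 2*s with hp
  have hd1 : (1:ℝ) ≤ d := by exact_mod_cast hd
  have hdpos : (0:ℝ) < d := by linarith
  have hq : -1 < p / d := by rw [lt_div_iff₀ hdpos]; rw [hp]; linarith
  have hGm : Measurable (fun w : EuclideanSpace ℝ (Fin d) =>
      ‖w‖ ^ p * ((1 + ‖w‖ ^ 2) ^ 2)⁻¹) := by fun_prop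
  have hball : IntegrableOn (fun w : EuclideanSpace ℝ (Fin d) =>
      ‖w‖ ^ p * ((1 + ‖w‖ ^ 2) ^ 2)⁻¹) (closedBall 0 1) := by
    apply Integrable.mono' ((aux_euc d hq).restrict) hGm.aestronglyMeasurable.restrict
    filter_upwards [ae_restrict_of_ae (aux_ae d), ae_restrict_mem measurableSet_closedBall]
      with w hw hwmem
    have hw1 : ‖w‖ ≤ 1 := by rwa [mem_closedBall_zero_iff] at hwmem
    have hwpos : 0 < ‖w‖ := by
      have h0 : w ≠ 0 := by
        intro h; exact hw ⟨0, hd⟩ (by rw [h]; rfl)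
      exact norm_pos_iff.2 h0
    have hind : ∀ i, (Set.Icc (-1:ℝ) 1).indicator (fun x => |x| ^ (p/d)) (w i)
        = |w i| ^ (p/d) := fun i =>
      Set.indicator_of_mem (by
        rw [Set.mem_Icc, ← abs_le]; exact (coord_le_norm w i).trans hw1) _
    have hnorm : ‖‖w‖ ^ p * ((1 + ‖w‖ ^ 2) ^ 2)⁻¹‖ = ‖w‖ ^ p * ((1 + ‖w‖ ^ 2) ^ 2)⁻¹ := by
      rw [Real.norm_eq_abs, abs_of_nonneg (by positivity)]
    rw [hnorm]
    simp_rw [hind]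
    have hstep1 : ‖w‖ ^ p * ((1 + ‖w‖ ^ 2) ^ 2)⁻¹ ≤ ‖w‖ ^ p := by
      apply mul_le_of_le_one_right (by positivity)
      rw [inv_le_one_iff₀]; right; nlinarith [norm_nonneg w, sq_nonneg ‖w‖]
    refine hstep1.trans ?_
    have hkey : ‖w‖ ^ p ≤ ∏ i, |w i| ^ (p/d) := by
      rcases le_or_gt (p/d) 0 with hq0 | hq0
      · calc ‖w‖ ^ p = ∏ _i : Fin d, ‖w‖ ^ (p/d) := by
              rw [Finset.prod_const, Finset.card_univ, Fintype.card_fin,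
                ← Real.rpow_natCast (‖w‖ ^ (p/d)) d, ← Real.rpow_mul (norm_nonneg w)]
              congr 1
              field_simp
          _ ≤ ∏ i, |w i| ^ (p/d) := by
              apply Finset.prod_le_prod (fun i _ => Real.rpow_nonneg (norm_nonneg w) _)
              intro i _
              exact Real.rpow_le_rpow_of_nonpos (abs_pos.2 (hw i)) (coord_le_norm w i) hq0
      · have hd2 : d = 1 := by
          by_contra h
          have h2 : 2 ≤ d := lt_of_le_of_ne hd (Ne.symm h)
          have : (2:ℝ) ≤ d := by exact_mod_cast h2
          have hpneg : p < 0 := by rw [hp]; linarith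
          have : p / d < 0 := div_neg_of_neg_of_pos hpneg hdpos
          linarith
        subst hd2
        have hn1 : ‖w‖ = |w 0| := by
          rw [EuclideanSpace.norm_eq]
          simp [Real.norm_eq_abs, sq_abs, Real.sqrt_sq_eq_abs]
        rw [Fin.prod_univ_one, hn1, Nat.cast_one, div_one]
    exact hkey
  have htail : IntegrableOn (fun w : EuclideanSpace ℝ (Fin d) =>
      ‖w‖ ^ p * ((1 + ‖w‖ ^ 2) ^ 2)⁻¹) (closedBall 0 1)ᶜ := by
    have hint : Integrable (fun w : EuclideanSpace ℝ (Fin d) =>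
        (2:ℝ) ^ ((d:ℝ)+1) * (1 + ‖w‖) ^ (-((d:ℝ)+1))) := by
      apply Integrable.const_mul
      apply integrable_one_add_norm (μ := volume)
      rw [finrank_euclideanSpace_fin]; linarith
    apply Integrable.mono' hint.restrict hGm.aestronglyMeasurable.restrict
    filter_upwards [ae_restrict_mem measurableSet_closedBall.compl] with w hw
    have hw1 : 1 < ‖w‖ := by
      rw [Set.mem_compl_iff, mem_closedBall_zero_iff, not_le] at hw; exact hw
    have hwpos : (0:ℝ) < ‖w‖ := by linarith
    have hnorm : ‖‖w‖ ^ p * ((1 + ‖w‖ ^ 2) ^ 2)⁻¹‖ = ‖w‖ ^ p * ((1 + ‖w‖ ^ 2) ^ 2)⁻¹ := by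
      rw [Real.norm_eq_abs, abs_of_nonneg (by positivity)]
    rw [hnorm]
    have hstep1 : ‖w‖ ^ p * ((1 + ‖w‖ ^ 2) ^ 2)⁻¹ ≤ ‖w‖ ^ (p - 4) := by
      have h4 : ((1 + ‖w‖ ^ 2) ^ 2)⁻¹ ≤ (‖w‖ ^ (4:ℝ))⁻¹ := by
        apply inv_anti₀ (by positivity)
        have : ‖w‖ ^ (4:ℝ) = (‖w‖ ^ 2) ^ 2 := by
          rw [← Real.rpow_natCast (‖w‖ ^ 2) 2, ← Real.rpow_natCast ‖w‖ 2,
            ← Real.rpow_mul (norm_nonneg w)]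
          norm_num
        rw [this]
        apply pow_le_pow_left₀ (by positivity) (by nlinarith) 2
      calc ‖w‖ ^ p * ((1 + ‖w‖ ^ 2) ^ 2)⁻¹ ≤ ‖w‖ ^ p * (‖w‖ ^ (4:ℝ))⁻¹ :=
            mul_le_mul_of_nonneg_left h4 (by positivity)
        _ = ‖w‖ ^ (p - 4) := by
            rw [← Real.rpow_neg (norm_nonneg w), ← Real.rpow_add hwpos]
            congr 1 <;> ring
    have hstep2 : ‖w‖ ^ (p - 4) ≤ ‖w‖ ^ (-((d:ℝ)+1)) := by
      apply Real.rpow_le_rpow_of_exponent_le hw1.le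
      rw [hp]; linarith
    have hstep3 : ‖w‖ ^ (-((d:ℝ)+1)) ≤ (2:ℝ) ^ ((d:ℝ)+1) * (1 + ‖w‖) ^ (-((d:ℝ)+1)) := by
      have h2w : (2:ℝ) * ‖w‖ > 0 := by linarith
      have hle : 1 + ‖w‖ ≤ 2 * ‖w‖ := by linarith
      have h5 : ((2:ℝ) * ‖w‖) ^ (-((d:ℝ)+1)) ≤ (1 + ‖w‖) ^ (-((d:ℝ)+1)) :=
        Real.rpow_le_rpow_of_nonpos (by linarith) hle (by linarith)
      have h6 : ((2:ℝ) * ‖w‖) ^ (-((d:ℝ)+1)) = (2:ℝ) ^ (-((d:ℝ)+1)) * ‖w‖ ^ (-((d:ℝ)+1)) :=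
        Real.mul_rpow (by norm_num) (norm_nonneg w)
      have h7 : (0:ℝ) < (2:ℝ) ^ ((d:ℝ)+1) := by positivity
      have hone : (2:ℝ) ^ ((d:ℝ)+1) * (2:ℝ) ^ (-((d:ℝ)+1)) = 1 := by
        rw [← Real.rpow_add (by norm_num : (0:ℝ) < 2), add_neg_cancel, Real.rpow_zero]
      calc ‖w‖ ^ (-((d:ℝ)+1))
          = (2:ℝ) ^ ((d:ℝ)+1) * ((2:ℝ) ^ (-((d:ℝ)+1)) * ‖w‖ ^ (-((d:ℝ)+1))) := by
            rw [← mul_assoc, hone, one_mul]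
        _ = (2:ℝ) ^ ((d:ℝ)+1) * ((2:ℝ) * ‖w‖) ^ (-((d:ℝ)+1)) := by rw [h6]
        _ ≤ (2:ℝ) ^ ((d:ℝ)+1) * (1 + ‖w‖) ^ (-((d:ℝ)+1)) :=
            mul_le_mul_of_nonneg_left h5 h7.le
    exact (hstep1.trans hstep2).trans hstep3
  have := hball.union htail
  rwa [Set.union_compl_self, integrableOn_univ] at this

end Aux

/-- `∫ M₁(v) |v|² ⟨εv⟩⁻⁴ dv ≤ C ε^{2s−2}` uniformly for `ε ∈ (0,1]`. -/
theorem twisted_second_moment_weight_bound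
    (d : ℕ) (hd : 1 ≤ d) (s : ℝ) (hs0 : 0 < s) (hs1 : s < 1)
    (c : ℝ) (hc : 0 < c) (hM : ∫ v, M1 d s c v = 1) :
    ∃ C > 0, ∀ ε ∈ Set.Ioc (0 : ℝ) 1,
      ∫ v, M1 d s c v * ‖v‖ ^ 2 * ((1 + ε ^ 2 * ‖v‖ ^ 2) ^ 2)⁻¹ ≤
        C * ε ^ (2 * s - 2) := by
  classical
  set p : ℝ := 2 - (d:ℝ) - 2*s with hp
  have hG : Integrable (fun w : EuclideanSpace ℝ (Fin d) =>
      ‖w‖ ^ p * ((1 + ‖w‖ ^ 2) ^ 2)⁻¹) := integrable_G d hd hs0 hs1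
  set K : ℝ := ∫ w : EuclideanSpace ℝ (Fin d), ‖w‖ ^ p * ((1 + ‖w‖ ^ 2) ^ 2)⁻¹ with hK
  have hK0 : 0 ≤ K := integral_nonneg (fun w => by positivity)
  refine ⟨c * (K + 1), by positivity, ?_⟩
  rintro ε ⟨hε0, hε1⟩
  have hsmul : ∀ v : EuclideanSpace ℝ (Fin d),
      ‖ε • v‖ ^ p * ((1 + ‖ε • v‖ ^ 2) ^ 2)⁻¹
        = ε ^ p * (‖v‖ ^ p * ((1 + ε ^ 2 * ‖v‖ ^ 2) ^ 2)⁻¹) := by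
    intro v
    have h1 : ‖ε • v‖ = ε * ‖v‖ := by
      rw [norm_smul, Real.norm_eq_abs, abs_of_pos hε0]
    rw [h1, Real.mul_rpow hε0.le (norm_nonneg v), mul_pow]
    ring
  have hGε : ∀ v : EuclideanSpace ℝ (Fin d),
      ‖v‖ ^ p * ((1 + ε ^ 2 * ‖v‖ ^ 2) ^ 2)⁻¹
        = ε ^ (-p) * (‖ε • v‖ ^ p * ((1 + ‖ε • v‖ ^ 2) ^ 2)⁻¹) := by
    intro v
    rw [hsmul v, ← mul_assoc, ← Real.rpow_add hε0, neg_add_cancel, Real.rpow_zero, one_mul]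
  have hGε_int : Integrable (fun v : EuclideanSpace ℝ (Fin d) =>
      ‖v‖ ^ p * ((1 + ε ^ 2 * ‖v‖ ^ 2) ^ 2)⁻¹) := by
    have h1 : Integrable (fun v : EuclideanSpace ℝ (Fin d) =>
        ‖ε • v‖ ^ p * ((1 + ‖ε • v‖ ^ 2) ^ 2)⁻¹) :=
      hG.comp_smul hε0.ne'
    have h2 := h1.const_mul (ε ^ (-p))
    exact h2.congr (Filter.Eventually.of_forall fun v => (hGε v).symm)
  have hGε_val : (∫ v : EuclideanSpace ℝ (Fin d),
      ‖v‖ ^ p * ((1 + ε ^ 2 * ‖v‖ ^ 2) ^ 2)⁻¹) = ε ^ (2*s - 2) * K := by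
    have hi : (∫ v : EuclideanSpace ℝ (Fin d),
        ‖v‖ ^ p * ((1 + ε ^ 2 * ‖v‖ ^ 2) ^ 2)⁻¹)
        = ∫ v : EuclideanSpace ℝ (Fin d),
          ε ^ (-p) * (‖ε • v‖ ^ p * ((1 + ‖ε • v‖ ^ 2) ^ 2)⁻¹) := by
      exact integral_congr_ae (Filter.Eventually.of_forall hGε)
    rw [hi, integral_const_mul,
      Measure.integral_comp_smul volume
        (fun w : EuclideanSpace ℝ (Fin d) => ‖w‖ ^ p * ((1 + ‖w‖ ^ 2) ^ 2)⁻¹) ε]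
    rw [finrank_euclideanSpace_fin, smul_eq_mul, ← hK]
    rw [abs_of_pos (by positivity), ← mul_assoc]
    congr 1
    rw [← Real.rpow_natCast ε d, ← Real.rpow_neg hε0.le, ← Real.rpow_add hε0]
    congr 1
    rw [hp]; ring
  have hM1 : ∀ v : EuclideanSpace ℝ (Fin d), 0 ≤ M1 d s c v := by
    intro v; rw [M1]; positivity
  have hpt : ∀ v : EuclideanSpace ℝ (Fin d),
      M1 d s c v * ‖v‖ ^ 2 * ((1 + ε ^ 2 * ‖v‖ ^ 2) ^ 2)⁻¹
        ≤ c * (‖v‖ ^ p * ((1 + ε ^ 2 * ‖v‖ ^ 2) ^ 2)⁻¹) := by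
    intro v
    rw [M1]
    have key : (1 + ‖v‖ ^ 2) ^ (-((d:ℝ) + 2 * s) / 2) * ‖v‖ ^ 2 ≤ ‖v‖ ^ p := by
      rcases eq_or_ne ‖v‖ 0 with h0 | h0
      · rw [h0]
        simpa using Real.rpow_nonneg (le_refl (0:ℝ)) p
      · have hn : 0 < ‖v‖ := lt_of_le_of_ne (norm_nonneg v) (Ne.symm h0)
        have h1 : (1 + ‖v‖ ^ 2) ^ (-((d:ℝ) + 2 * s) / 2)
            ≤ (‖v‖ ^ 2) ^ (-((d:ℝ) + 2 * s) / 2) := by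
          apply Real.rpow_le_rpow_of_nonpos (by positivity) (by linarith)
          have h2 : (0:ℝ) ≤ (d:ℝ) + 2 * s := by positivity
          linarith
        calc (1 + ‖v‖ ^ 2) ^ (-((d:ℝ) + 2 * s) / 2) * ‖v‖ ^ 2
            ≤ (‖v‖ ^ 2) ^ (-((d:ℝ) + 2 * s) / 2) * ‖v‖ ^ 2 :=
              mul_le_mul_of_nonneg_right h1 (by positivity)
          _ = ‖v‖ ^ p := by
              rw [← Real.rpow_natCast ‖v‖ 2, ← Real.rpow_mul (norm_nonneg v),
                ← Real.rpow_add hn]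
              rw [hp]
              congr 1
              push_cast
              ring
    calc c * (1 + ‖v‖ ^ 2) ^ (-((d:ℝ) + 2 * s) / 2) * ‖v‖ ^ 2
          * ((1 + ε ^ 2 * ‖v‖ ^ 2) ^ 2)⁻¹
        = c * ((1 + ‖v‖ ^ 2) ^ (-((d:ℝ) + 2 * s) / 2) * ‖v‖ ^ 2)
          * ((1 + ε ^ 2 * ‖v‖ ^ 2) ^ 2)⁻¹ := by ring
      _ ≤ c * (‖v‖ ^ p) * ((1 + ε ^ 2 * ‖v‖ ^ 2) ^ 2)⁻¹ :=
          mul_le_mul_of_nonneg_right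
            (mul_le_mul_of_nonneg_left key hc.le) (by positivity)
      _ = c * (‖v‖ ^ p * ((1 + ε ^ 2 * ‖v‖ ^ 2) ^ 2)⁻¹) := by ring
  have hεt : 0 ≤ ε ^ (2*s - 2) := Real.rpow_nonneg hε0.le _
  calc ∫ v, M1 d s c v * ‖v‖ ^ 2 * ((1 + ε ^ 2 * ‖v‖ ^ 2) ^ 2)⁻¹
      ≤ ∫ v : EuclideanSpace ℝ (Fin d),
          c * (‖v‖ ^ p * ((1 + ε ^ 2 * ‖v‖ ^ 2) ^ 2)⁻¹) := by
        apply integral_mono_of_nonneg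
        · exact Filter.Eventually.of_forall fun v =>
            mul_nonneg (mul_nonneg (hM1 v) (by positivity)) (by positivity)
        · exact hGε_int.const_mul c
        · exact Filter.Eventually.of_forall hpt
    _ = c * (ε ^ (2*s - 2) * K) := by rw [integral_const_mul, hGε_val]
    _ ≤ c * (K + 1) * ε ^ (2*s - 2) := by nlinarith [mul_nonneg hc.le hεt]
end

section
/- Let d ≥ 1 and s ∈ (0,1). There exists C > 0 depending only on d and s such that for all ε ∈ (0,1] and all indices 1 ≤ i, j ≤ d, |∫_{ℝ^d} v_i v_j M₁(v) (1+ε²|v|²)^{-1} dv| ≤ C ε^{2s−2}; moreover, if i ≠ j then ∫_{ℝ^d} v_i v_j M₁(v) (1+ε²|v|²)^{-1} dv = 0. -/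
open MeasureTheory Real

open scoped ENNReal

section AuxLemmas

open Set Metric Module

private lemma aux_oneDim {s : ℝ} (hs0 : 0 < s) (hs1 : s < 1) :
    IntegrableOn (fun y : ℝ => y ^ (1 - 2*s) * (1 + y^2)⁻¹) (Ioi (0:ℝ)) := by
  have hmeas : Measurable (fun y : ℝ => y ^ (1 - 2*s) * (1 + y^2)⁻¹) := by
    fun_prop
  have h1 : IntegrableOn (fun y : ℝ => y ^ (1-2*s) * (1+y^2)⁻¹) (Ioc (0:ℝ) 1) := by
    have hbase : IntegrableOn (fun y : ℝ => y ^ (1-2*s)) (Ioc (0:ℝ) 1) := by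
      rw [← intervalIntegrable_iff_integrableOn_Ioc_of_le (zero_le_one)]
      exact intervalIntegral.intervalIntegrable_rpow' (by linarith)
    refine hbase.mono' hmeas.aestronglyMeasurable.restrict ?_
    filter_upwards [ae_restrict_mem measurableSet_Ioc] with y hy
    have hy0 : (0:ℝ) < y := hy.1
    have hr : 0 ≤ y ^ (1-2*s) := rpow_nonneg hy0.le _
    have hinv : ((1:ℝ)+y^2)⁻¹ ≤ 1 := by
      have h1 : (0:ℝ) < 1 + y^2 := by positivity
      have h2 : (0:ℝ) ≤ (1+y^2)⁻¹ := by positivity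
      nlinarith [mul_inv_cancel₀ h1.ne']
    rw [Real.norm_eq_abs, abs_of_nonneg (by positivity)]
    exact mul_le_of_le_one_right hr hinv
  have h2 : IntegrableOn (fun y : ℝ => y ^ (1-2*s) * (1+y^2)⁻¹) (Ioi (1:ℝ)) := by
    have hbase : IntegrableOn (fun y:ℝ => y ^ (-1-2*s)) (Ioi (1:ℝ)) :=
      integrableOn_Ioi_rpow_of_lt (by linarith) one_pos
    refine hbase.mono' hmeas.aestronglyMeasurable.restrict ?_
    filter_upwards [ae_restrict_mem measurableSet_Ioi] with y hy
    have hy1 : (1:ℝ) < y := hy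
    have hy0 : (0:ℝ) < y := lt_trans one_pos hy1
    rw [Real.norm_eq_abs, abs_of_nonneg (by positivity)]
    have hle : y ^ (1-2*s) * (1+y^2)⁻¹ ≤ y ^ (1-2*s) * (y^2)⁻¹ := by
      have : (y:ℝ)^2 ≤ 1 + y^2 := by linarith [sq_nonneg y]
      gcongr
    have heq : y ^ (1-2*s) * ((y:ℝ)^2)⁻¹ = y ^ (-1-2*s) := by
      rw [← Real.rpow_natCast y 2, ← Real.rpow_neg hy0.le, ← Real.rpow_add hy0]
      congr 1
      push_cast
      ring
    calc y ^ (1-2*s) * (1+y^2)⁻¹ ≤ y ^ (1-2*s) * ((y:ℝ)^2)⁻¹ := hle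
      _ = y ^ (-1-2*s) := heq
  have hsplit : Ioi (0:ℝ) = Ioc 0 1 ∪ Ioi 1 := (Ioc_union_Ioi_eq_Ioi zero_le_one).symm
  rw [hsplit]
  exact h1.union h2

set_option maxHeartbeats 1000000 in
private lemma aux_integrable_h (d : ℕ) (hd : 1 ≤ d) {s : ℝ} (hs0 : 0 < s) (hs1 : s < 1) :
    Integrable (fun w : EuclideanSpace ℝ (Fin d) =>
      ‖w‖ ^ (2 - (d:ℝ) - 2*s) * (1 + ‖w‖^2)⁻¹) := by
  haveI : Nontrivial (EuclideanSpace ℝ (Fin d)) :=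
    Module.nontrivial_of_finrank_pos (R := ℝ)
      (by rw [finrank_euclideanSpace_fin]; omega)
  have hF : Measurable (fun r : ℝ => r ^ (2 - (d:ℝ) - 2*s) * (1 + r^2)⁻¹) := by fun_prop
  set Fe : ℝ → ℝ≥0∞ := fun r => ENNReal.ofReal (r ^ (2 - (d:ℝ) - 2*s) * (1 + r^2)⁻¹) with hFe
  have hFeMeas : Measurable Fe := hF.ennreal_ofReal
  have hnn : ∀ r : ℝ, 0 ≤ r → 0 ≤ r ^ (2 - (d:ℝ) - 2*s) * (1 + r^2)⁻¹ := by
    intro r hr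
    have := rpow_nonneg hr (2 - (d:ℝ) - 2*s)
    positivity
  constructor
  · exact (hF.comp measurable_norm).aestronglyMeasurable
  · rw [hasFiniteIntegral_iff_norm]
    have hcongr : ∀ w : EuclideanSpace ℝ (Fin d),
        ENNReal.ofReal ‖‖w‖ ^ (2 - (d:ℝ) - 2*s) * (1 + ‖w‖^2)⁻¹‖ = Fe ‖w‖ := by
      intro w
      rw [Real.norm_eq_abs, abs_of_nonneg (hnn _ (norm_nonneg w))]
    simp_rw [hcongr]
    have key : ∫⁻ w : EuclideanSpace ℝ (Fin d), Fe ‖w‖ < ∞ := by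
      have h₁ : ∫⁻ w : EuclideanSpace ℝ (Fin d), Fe ‖w‖
          = ∫⁻ x : ({0}ᶜ : Set (EuclideanSpace ℝ (Fin d))), Fe ‖x.1‖
              ∂((volume : Measure (EuclideanSpace ℝ (Fin d))).comap Subtype.val) :=
        ((lintegral_subtype_comap (measurableSet_singleton
            (0 : EuclideanSpace ℝ (Fin d))).compl (fun v => Fe ‖v‖)).trans
          (by rw [restrict_compl_singleton])).symm
      have h₂ : ∫⁻ x : ({0}ᶜ : Set (EuclideanSpace ℝ (Fin d))), Fe ‖x.1‖
              ∂((volume : Measure (EuclideanSpace ℝ (Fin d))).comap Subtype.val)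
          = ∫⁻ p : sphere (0 : EuclideanSpace ℝ (Fin d)) 1 × Ioi (0:ℝ), Fe p.2.1
              ∂((volume : Measure (EuclideanSpace ℝ (Fin d))).toSphere.prod
                  (Measure.volumeIoiPow (finrank ℝ (EuclideanSpace ℝ (Fin d)) - 1))) :=
        Eq.trans (by congr 1; funext x; simp [homeomorphUnitSphereProd, Function.comp_def])
        ((Measure.measurePreserving_homeomorphUnitSphereProd
            (volume : Measure (EuclideanSpace ℝ (Fin d)))).lintegral_comp
          (hFeMeas.comp (measurable_subtype_coe.comp measurable_snd)))
      have hpm : Measurable fun p : sphere (0 : EuclideanSpace ℝ (Fin d)) 1 × Ioi (0:ℝ) =>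
          Fe p.2.1 := hFeMeas.comp (measurable_subtype_coe.comp measurable_snd)
      rw [h₁, h₂]
      rw [lintegral_prod _ hpm.aemeasurable]
      simp only [Prod.snd]
      refine lt_of_eq_of_lt (lintegral_const
          (μ := (volume : Measure (EuclideanSpace ℝ (Fin d))).toSphere) _) ?_
      refine ENNReal.mul_lt_top ?_ (measure_lt_top _ _)
      have h₃ : ∫⁻ y : Ioi (0:ℝ), Fe y.1
            ∂(Measure.volumeIoiPow (finrank ℝ (EuclideanSpace ℝ (Fin d)) - 1))
          = ∫⁻ y in Ioi (0:ℝ),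
              ENNReal.ofReal (y ^ (finrank ℝ (EuclideanSpace ℝ (Fin d)) - 1)) * Fe y := by
        have hg : Measurable fun y : Ioi (0:ℝ) => Fe ↑y :=
          hFeMeas.comp measurable_subtype_coe
        have hdens : Measurable fun r : Ioi (0:ℝ) =>
            ENNReal.ofReal (r.1 ^ (finrank ℝ (EuclideanSpace ℝ (Fin d)) - 1)) :=
          (measurable_subtype_coe.pow_const _).ennreal_ofReal
        simp only [Measure.volumeIoiPow]
        rw [lintegral_withDensity_eq_lintegral_mul _ hdens hg]
        exact lintegral_subtype_comap measurableSet_Ioi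
          (fun r : ℝ => ENNReal.ofReal (r ^ (finrank ℝ (EuclideanSpace ℝ (Fin d)) - 1)) * Fe r)
      rw [h₃, finrank_euclideanSpace_fin]
      have h₄ : ∫⁻ y in Ioi (0:ℝ), ENNReal.ofReal (y ^ (d - 1)) * Fe y
          = ∫⁻ y in Ioi (0:ℝ), ENNReal.ofReal (y ^ (1 - 2*s) * (1 + y^2)⁻¹) := by
        apply setLIntegral_congr_fun measurableSet_Ioi
        intro y hy
        have hy0 : (0:ℝ) < y := hy
        show ENNReal.ofReal (y ^ (d - 1)) * Fe y = ENNReal.ofReal (y ^ (1 - 2*s) * (1 + y^2)⁻¹)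
        rw [hFe, ← ENNReal.ofReal_mul (by positivity)]
        congr 1
        have hpow : (y:ℝ) ^ (d-1 : ℕ) * y ^ (2 - (d:ℝ) - 2*s) = y ^ (1 - 2*s) := by
          rw [← Real.rpow_natCast y (d-1), ← Real.rpow_add hy0]
          congr 1
          have : ((d - 1 : ℕ) : ℝ) = (d:ℝ) - 1 := by
            push_cast [Nat.cast_sub hd]
            ring
          rw [this]; ring
        calc (y:ℝ) ^ (d-1:ℕ) * (y ^ (2 - (d:ℝ) - 2*s) * (1 + y^2)⁻¹)
            = ((y:ℝ) ^ (d-1:ℕ) * y ^ (2 - (d:ℝ) - 2*s)) * (1 + y^2)⁻¹ := by ring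
          _ = y ^ (1 - 2*s) * (1 + y^2)⁻¹ := by rw [hpow]
      rw [h₄]
      exact (aux_oneDim hs0 hs1).setLIntegral_lt_top
    exact key

end AuxLemmas

section AuxOdd

open Set Metric Module

private lemma aux_odd_zero (d : ℕ) (s c ε : ℝ) (i j : Fin d) (hij : i ≠ j) :
    ∫ v : EuclideanSpace ℝ (Fin d),
      v i * v j * M1 d s c v * (1 + ε ^ 2 * ‖v‖ ^ 2)⁻¹ = 0 := by
  classical
  set g : EuclideanSpace ℝ (Fin d) → ℝ :=
    fun v => v i * v j * M1 d s c v * (1 + ε ^ 2 * ‖v‖ ^ 2)⁻¹ with hg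
  set L : EuclideanSpace ℝ (Fin d) ≃ₗᵢ[ℝ] EuclideanSpace ℝ (Fin d) :=
    LinearIsometryEquiv.piLpCongrRight 2
      (fun k : Fin d => if k = i then (LinearIsometryEquiv.neg ℝ (E := ℝ))
        else LinearIsometryEquiv.refl ℝ ℝ) with hL
  have hLapp : ∀ (v : EuclideanSpace ℝ (Fin d)) (k : Fin d),
      L v k = if k = i then -(v k) else v k := by
    intro v k
    rcases eq_or_ne k i with rfl | hk
    · simp [hL, LinearIsometryEquiv.piLpCongrRight_apply]
    · simp [hL, LinearIsometryEquiv.piLpCongrRight_apply, hk]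
  have hmp : MeasurePreserving L volume volume := L.measurePreserving
  have hemb : MeasurableEmbedding L := L.toHomeomorph.measurableEmbedding
  have h1 : ∫ v, g (L v) = ∫ v, g v := hmp.integral_comp hemb g
  have h2 : ∀ v, g (L v) = - g v := by
    intro v
    have hni : L v i = -(v i) := by rw [hLapp]; simp
    have hnj : L v j = v j := by rw [hLapp]; simp [Ne.symm hij]
    have hnorm : ‖L v‖ = ‖v‖ := L.norm_map v
    simp only [hg, M1, hni, hnj, hnorm]
    ring
  simp_rw [h2, integral_neg] at h1
  linarith

end AuxOdd

open Module

/-- `|∫ vᵢ vⱼ M₁(v) ⟨εv⟩⁻² dv| ≤ C ε^{2s−2}` uniformly for `ε ∈ (0,1]`, and the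
integral vanishes whenever `i ≠ j`. -/
theorem twisted_second_moment_matrix_bound
    (d : ℕ) (hd : 1 ≤ d) (s : ℝ) (hs0 : 0 < s) (hs1 : s < 1)
    (c : ℝ) (hc : 0 < c) (hM : ∫ v, M1 d s c v = 1) :
    ∃ C > 0, ∀ ε ∈ Set.Ioc (0 : ℝ) 1, ∀ i j : Fin d,
      |∫ v : EuclideanSpace ℝ (Fin d),
          v i * v j * M1 d s c v * (1 + ε ^ 2 * ‖v‖ ^ 2)⁻¹| ≤ C * ε ^ (2 * s - 2) ∧
      (i ≠ j →
        ∫ v : EuclideanSpace ℝ (Fin d),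
          v i * v j * M1 d s c v * (1 + ε ^ 2 * ‖v‖ ^ 2)⁻¹ = 0) := by
  classical
  have hcoord : ∀ (v : EuclideanSpace ℝ (Fin d)) (i : Fin d), |v i| ≤ ‖v‖ := by
    intro v i
    rw [EuclideanSpace.norm_eq, ← Real.sqrt_sq_eq_abs]
    apply Real.sqrt_le_sqrt
    have := Finset.single_le_sum (f := fun k => ‖v k‖^2)
      (fun k _ => sq_nonneg _) (Finset.mem_univ i)
    simpa [Real.norm_eq_abs, sq_abs] using this
  have hM1nn : ∀ v : EuclideanSpace ℝ (Fin d), 0 ≤ M1 d s c v := fun v =>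
    mul_nonneg hc.le (rpow_nonneg (by positivity) _)
  set K : ℝ := ∫ w : EuclideanSpace ℝ (Fin d),
    ‖w‖ ^ (2 - (d:ℝ) - 2*s) * (1 + ‖w‖^2)⁻¹ with hK
  have hIntK := aux_integrable_h d hd hs0 hs1
  have hK0 : 0 ≤ K := by
    rw [hK]
    exact integral_nonneg fun w =>
      mul_nonneg (rpow_nonneg (norm_nonneg _) _) (by positivity)
  refine ⟨c * K + 1, by nlinarith, ?_⟩
  rintro ε ⟨hε, hε1⟩ i j
  refine ⟨?_, fun hij => aux_odd_zero d s c ε i j hij⟩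
  set G : EuclideanSpace ℝ (Fin d) → ℝ :=
    fun v => ‖v‖ * ‖v‖ * (c * (1 + ‖v‖^2) ^ (-((d:ℝ) + 2*s)/2))
      * (1 + ε^2*‖v‖^2)⁻¹ with hGdef
  set φ : EuclideanSpace ℝ (Fin d) → ℝ :=
    fun w => ‖w‖ * ‖w‖ * (c * (ε^2 + ‖w‖^2) ^ (-((d:ℝ) + 2*s)/2))
      * (1 + ‖w‖^2)⁻¹ with hφdef
  have hGnn : ∀ v, 0 ≤ G v := by
    intro v
    simp only [hGdef]
    have h1 : 0 ≤ (1 + ‖v‖^2 : ℝ) ^ (-((d:ℝ) + 2*s)/2) := rpow_nonneg (by positivity) _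
    have h2 : (0:ℝ) ≤ (1 + ε^2*‖v‖^2)⁻¹ := by positivity
    exact mul_nonneg (mul_nonneg (mul_nonneg (norm_nonneg _) (norm_nonneg _))
      (mul_nonneg hc.le h1)) h2
  have hφnn : ∀ w, 0 ≤ φ w := by
    intro w
    simp only [hφdef]
    have h1 : 0 ≤ (ε^2 + ‖w‖^2 : ℝ) ^ (-((d:ℝ) + 2*s)/2) := rpow_nonneg (by positivity) _
    have h2 : (0:ℝ) ≤ (1 + ‖w‖^2)⁻¹ := by positivity
    exact mul_nonneg (mul_nonneg (mul_nonneg (norm_nonneg _) (norm_nonneg _))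
      (mul_nonneg hc.le h1)) h2
  -- pointwise bound by G
  have habs : ∀ v : EuclideanSpace ℝ (Fin d),
      |v i * v j * M1 d s c v * (1 + ε^2*‖v‖^2)⁻¹| ≤ G v := by
    intro v
    have ht : (0:ℝ) ≤ (1 + ε^2*‖v‖^2)⁻¹ := by positivity
    have h1 : |v i * v j * M1 d s c v * (1 + ε^2*‖v‖^2)⁻¹|
        = |v i| * |v j| * M1 d s c v * (1 + ε^2*‖v‖^2)⁻¹ := by
      rw [abs_mul, abs_mul, abs_mul, abs_of_nonneg (hM1nn v), abs_of_nonneg ht]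
    have h2 : |v i| * |v j| ≤ ‖v‖ * ‖v‖ :=
      mul_le_mul (hcoord v i) (hcoord v j) (abs_nonneg _) (norm_nonneg _)
    have h3 : M1 d s c v = c * (1 + ‖v‖^2) ^ (-((d:ℝ) + 2*s)/2) := rfl
    rw [h1]
    simp only [hGdef]
    rw [← h3]
    exact mul_le_mul_of_nonneg_right
      (mul_le_mul_of_nonneg_right h2 (hM1nn v)) ht
  -- integrability of G
  have hGint : Integrable G := by
    have hnr : (finrank ℝ (EuclideanSpace ℝ (Fin d)) : ℝ) < (d:ℝ) + 2*s := by
      rw [finrank_euclideanSpace_fin]; linarith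
    have hbase : Integrable (fun v : EuclideanSpace ℝ (Fin d) =>
        (c * (ε^2)⁻¹) * (1 + ‖v‖^2) ^ (-((d:ℝ)+2*s)/2)) :=
      (integrable_rpow_neg_one_add_norm_sq hnr).const_mul _
    refine hbase.mono' ?_ (ae_of_all _ ?_)
    · rw [hGdef]
      exact (by fun_prop : Measurable fun v : EuclideanSpace ℝ (Fin d) =>
        ‖v‖ * ‖v‖ * (c * (1 + ‖v‖^2) ^ (-((d:ℝ) + 2*s)/2)) * (1 + ε^2*‖v‖^2)⁻¹).aestronglyMeasurable
    · intro v
      rw [Real.norm_eq_abs, abs_of_nonneg (hGnn v)]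
      have hb : ‖v‖ * ‖v‖ * (1 + ε^2*‖v‖^2)⁻¹ ≤ (ε^2)⁻¹ := by
        rw [mul_inv_le_iff₀ (by positivity)]
        have hcan : (ε^2 : ℝ) * (ε^2)⁻¹ = 1 := mul_inv_cancel₀ (by positivity)
        nlinarith [sq_nonneg ‖v‖, inv_nonneg.mpr (sq_nonneg ε)]
      have hrnn : 0 ≤ (1 + ‖v‖^2 : ℝ) ^ (-((d:ℝ) + 2*s)/2) := rpow_nonneg (by positivity) _
      calc G v = (‖v‖ * ‖v‖ * (1 + ε^2*‖v‖^2)⁻¹)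
            * (c * (1 + ‖v‖^2) ^ (-((d:ℝ) + 2*s)/2)) := by simp only [hGdef]; ring
        _ ≤ (ε^2)⁻¹ * (c * (1 + ‖v‖^2) ^ (-((d:ℝ) + 2*s)/2)) :=
            mul_le_mul_of_nonneg_right hb (mul_nonneg hc.le hrnn)
        _ = (c * (ε^2)⁻¹) * (1 + ‖v‖^2) ^ (-((d:ℝ)+2*s)/2) := by ring
  -- scaling identity
  have hscale : ∀ v : EuclideanSpace ℝ (Fin d),
      φ (ε • v) = ε ^ (2 - ((d:ℝ) + 2*s)) * G v := by
    intro v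
    have hns : ‖ε • v‖ = ε * ‖v‖ := by
      rw [norm_smul, Real.norm_eq_abs, abs_of_pos hε]
    have hb1 : (ε^2 + ‖ε • v‖^2 : ℝ) = ε^2 * (1 + ‖v‖^2) := by rw [hns]; ring
    have hb2 : ((ε:ℝ)^2 * (1 + ‖v‖^2)) ^ (-((d:ℝ) + 2*s)/2)
        = ((ε:ℝ)^2) ^ (-((d:ℝ) + 2*s)/2) * (1 + ‖v‖^2) ^ (-((d:ℝ) + 2*s)/2) :=
      Real.mul_rpow (by positivity) (by positivity)
    have hb3 : (ε:ℝ)^2 * ((ε:ℝ)^2) ^ (-((d:ℝ) + 2*s)/2) = ε ^ (2 - ((d:ℝ) + 2*s)) := by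
      rw [← Real.rpow_natCast ε 2, ← Real.rpow_mul hε.le, ← Real.rpow_add hε]
      congr 1
      push_cast
      ring
    simp only [hφdef, hGdef]
    rw [hb1, hb2, hns, ← hb3, mul_pow]
    ring
  have h1 : ∫ v : EuclideanSpace ℝ (Fin d), φ (ε • v)
      = (ε ^ finrank ℝ (EuclideanSpace ℝ (Fin d)))⁻¹ • ∫ w, φ w :=
    Measure.integral_comp_smul_of_nonneg _ φ ε (hR := hε.le)
  simp_rw [hscale] at h1
  rw [integral_const_mul, finrank_euclideanSpace_fin, smul_eq_mul] at h1
  have hGeq : ∫ v, G v = ε ^ (2*s - 2) * ∫ w, φ w := by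
    have hcne : (ε : ℝ) ^ (2 - ((d:ℝ) + 2*s)) ≠ 0 := (Real.rpow_pos_of_pos hε _).ne'
    have hcc : ((ε:ℝ) ^ (2 - ((d:ℝ) + 2*s)))⁻¹ * ((ε^(d:ℕ) : ℝ))⁻¹ = ε ^ (2*s - 2) := by
      rw [← Real.rpow_natCast ε d, ← Real.rpow_neg hε.le, ← Real.rpow_neg hε.le,
        ← Real.rpow_add hε]
      congr 1
      push_cast
      ring
    calc ∫ v, G v
        = (ε ^ (2 - ((d:ℝ) + 2*s)))⁻¹ * (ε ^ (2 - ((d:ℝ) + 2*s)) * ∫ v, G v) :=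
          (inv_mul_cancel_left₀ hcne _).symm
      _ = (ε ^ (2 - ((d:ℝ) + 2*s)))⁻¹ * ((ε^(d:ℕ))⁻¹ * ∫ w, φ w) := by rw [h1]
      _ = ((ε ^ (2 - ((d:ℝ) + 2*s)))⁻¹ * (ε^(d:ℕ))⁻¹) * ∫ w, φ w := by ring
      _ = ε ^ (2*s - 2) * ∫ w, φ w := by rw [hcc]
  -- pointwise bound of φ
  have hφle : ∀ w : EuclideanSpace ℝ (Fin d),
      φ w ≤ c * (‖w‖ ^ (2 - (d:ℝ) - 2*s) * (1 + ‖w‖^2)⁻¹) := by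
    intro w
    rcases eq_or_ne w 0 with rfl | hw
    · have h0 : φ (0 : EuclideanSpace ℝ (Fin d)) = 0 := by
        simp [hφdef]
      rw [h0]
      exact mul_nonneg hc.le (mul_nonneg (rpow_nonneg (norm_nonneg _) _) (by positivity))
    · have hw0 : 0 < ‖w‖ := norm_pos_iff.mpr hw
      have hdnn : (0:ℝ) ≤ (d:ℝ) := Nat.cast_nonneg d
      have hexp : -((d:ℝ) + 2*s)/2 ≤ 0 := by linarith
      have h1 : ((ε:ℝ)^2 + ‖w‖^2) ^ (-((d:ℝ) + 2*s)/2)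
          ≤ ((‖w‖:ℝ)^2) ^ (-((d:ℝ) + 2*s)/2) :=
        Real.rpow_le_rpow_of_nonpos (by positivity) (by nlinarith [sq_nonneg ε]) hexp
      have h2a : ((‖w‖:ℝ)^2) ^ (-((d:ℝ) + 2*s)/2) = ‖w‖ ^ (2 * (-((d:ℝ) + 2*s)/2)) := by
        rw [← Real.rpow_natCast ‖w‖ 2, ← Real.rpow_mul (norm_nonneg w)]
        norm_num
      have h2 : ((‖w‖:ℝ)^2) ^ (-((d:ℝ) + 2*s)/2) * (‖w‖ * ‖w‖)
          = ‖w‖ ^ (2 - (d:ℝ) - 2*s) := by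
        rw [h2a, show (‖w‖ * ‖w‖ : ℝ) = ‖w‖ ^ ((2:ℕ):ℝ) from by
          rw [Real.rpow_natCast]; ring, ← Real.rpow_add hw0]
        congr 1
        push_cast
        ring
      have hnn2 : (0:ℝ) ≤ c * (‖w‖ * ‖w‖) * (1 + ‖w‖^2)⁻¹ := by
        have : (0:ℝ) ≤ (1 + ‖w‖^2)⁻¹ := by positivity
        exact mul_nonneg (mul_nonneg hc.le (mul_nonneg (norm_nonneg _) (norm_nonneg _))) this
      calc φ w = ((ε^2 + ‖w‖^2) ^ (-((d:ℝ) + 2*s)/2))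
            * (c * (‖w‖ * ‖w‖) * (1 + ‖w‖^2)⁻¹) := by simp only [hφdef]; ring
        _ ≤ (((‖w‖:ℝ)^2) ^ (-((d:ℝ) + 2*s)/2))
            * (c * (‖w‖ * ‖w‖) * (1 + ‖w‖^2)⁻¹) := mul_le_mul_of_nonneg_right h1 hnn2
        _ = c * (‖w‖ ^ (2 - (d:ℝ) - 2*s) * (1 + ‖w‖^2)⁻¹) := by rw [← h2]; ring
  have hφK : ∫ w, φ w ≤ c * K := by
    have hstep : ∫ w, φ w ≤ ∫ w : EuclideanSpace ℝ (Fin d),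
        c * (‖w‖ ^ (2 - (d:ℝ) - 2*s) * (1 + ‖w‖^2)⁻¹) :=
      integral_mono_of_nonneg (ae_of_all _ hφnn) (hIntK.const_mul c) (ae_of_all _ hφle)
    rw [integral_const_mul, ← hK] at hstep
    exact hstep
  have hnorm_le := norm_integral_le_integral_norm (μ := (volume : Measure (EuclideanSpace ℝ (Fin d))))
    (fun v => v i * v j * M1 d s c v * (1 + ε^2*‖v‖^2)⁻¹)
  simp only [Real.norm_eq_abs] at hnorm_le
  have hrnn : (0:ℝ) ≤ ε ^ (2*s - 2) := Real.rpow_nonneg hε.le _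
  calc |∫ v : EuclideanSpace ℝ (Fin d),
        v i * v j * M1 d s c v * (1 + ε ^ 2 * ‖v‖ ^ 2)⁻¹|
      ≤ ∫ v : EuclideanSpace ℝ (Fin d),
        |v i * v j * M1 d s c v * (1 + ε ^ 2 * ‖v‖ ^ 2)⁻¹| := hnorm_le
    _ ≤ ∫ v, G v :=
        integral_mono_of_nonneg (ae_of_all _ fun v => abs_nonneg _) hGint (ae_of_all _ habs)
    _ = ε ^ (2*s - 2) * ∫ w, φ w := hGeq
    _ ≤ ε ^ (2*s - 2) * (c * K) := mul_le_mul_of_nonneg_left hφK hrnn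
    _ ≤ (c * K + 1) * ε ^ (2*s - 2) := by nlinarith
end

section
/- Let d ≥ 1 and s ∈ (0,1). The constant c₂ := c_{d,s} ∫_{ℝ^d} |v|^{2−d−2s} (1+|v|²)^{-1} dv is finite and positive, and ε^{2−2s} ∫_{ℝ^d} |v|² M₁(v) (1+ε²|v|²)^{-1} dv tends to c₂ as ε → 0⁺. -/
open MeasureTheory Real Filter Metric Set

lemma radial_lintegral {d : ℕ} (hd : 1 ≤ d) (g : ℝ → ENNReal) (hg : Measurable g) :
    ∫⁻ x : EuclideanSpace ℝ (Fin d), g ‖x‖ =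
      (volume : Measure (EuclideanSpace ℝ (Fin d))).toSphere univ *
        ∫⁻ y in Ioi (0:ℝ), ENNReal.ofReal (y ^ (d-1)) * g y := by
  haveI : Nonempty (Fin d) := Fin.pos_iff_nonempty.mp hd
  haveI : Nontrivial (EuclideanSpace ℝ (Fin d)) := by
    refine ⟨0, EuclideanSpace.single ⟨0, hd⟩ 1, fun h => ?_⟩
    have := congrArg (fun x : EuclideanSpace ℝ (Fin d) => x ⟨0, hd⟩) h.symm
    simp [EuclideanSpace.single_apply] at this
  set E := EuclideanSpace ℝ (Fin d)
  set μ : Measure E := volume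
  have hdim : Module.finrank ℝ E = d := finrank_euclideanSpace_fin
  have h1 : ∫⁻ x : E, g ‖x‖ ∂μ = ∫⁻ x : ({0}ᶜ : Set E), g ‖x.1‖ ∂(μ.comap (↑)) := by
    rw [lintegral_subtype_comap (measurableSet_singleton (0:E)).compl (fun x => g ‖x‖),
      MeasureTheory.restrict_compl_singleton]
  have h2 : ∫⁻ x : ({0}ᶜ : Set E), g ‖x.1‖ ∂(μ.comap (↑))
      = ∫⁻ p : sphere (0:E) 1 × Ioi (0:ℝ), g p.2
          ∂(μ.toSphere.prod (.volumeIoiPow (Module.finrank ℝ E - 1))) := by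
    rw [← (μ.measurePreserving_homeomorphUnitSphereProd).lintegral_comp_emb
      (Homeomorph.measurableEmbedding _) (fun p => g p.2)]
    simp
  have h3 : ∫⁻ p : sphere (0:E) 1 × Ioi (0:ℝ), g p.2
      ∂(μ.toSphere.prod (.volumeIoiPow (Module.finrank ℝ E - 1)))
      = μ.toSphere univ * ∫⁻ y : Ioi (0:ℝ), g y ∂(Measure.volumeIoiPow (d - 1)) := by
    rw [hdim, lintegral_prod (fun p : ↑(sphere (0:E) 1) × ↑(Ioi (0:ℝ)) => g ↑p.2)
      (Measurable.aemeasurable (by fun_prop))]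
    simp [lintegral_const, mul_comm]
  have h4 : ∫⁻ y : Ioi (0:ℝ), g y ∂(Measure.volumeIoiPow (d - 1))
      = ∫⁻ y in Ioi (0:ℝ), ENNReal.ofReal (y ^ (d-1)) * g y := by
    rw [show Measure.volumeIoiPow (d-1) = (Measure.comap Subtype.val volume).withDensity
        (fun r : Ioi (0:ℝ) => ENNReal.ofReal (r.1 ^ (d-1))) from rfl,
      lintegral_withDensity_eq_lintegral_mul _
        ((measurable_subtype_coe.pow_const _).ennreal_ofReal)
        (show Measurable fun y : Ioi (0:ℝ) => g ↑y from hg.comp measurable_subtype_coe),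
      ← lintegral_subtype_comap measurableSet_Ioi
        (fun y => ENNReal.ofReal (y ^ (d-1)) * g y)]
    rfl
  rw [h1, h2, h3, h4]

lemma oneD_integrable {d : ℕ} (hd : 1 ≤ d) {s : ℝ} (hs0 : 0 < s) (hs1 : s < 1) :
    IntegrableOn (fun y : ℝ => y^(d-1) * (y ^ (2-(d:ℝ)-2*s) * (1+y^2)⁻¹)) (Ioi 0) := by
  set a : ℝ := 2-(d:ℝ)-2*s with ha
  have hcast : ((d-1 : ℕ) : ℝ) = (d:ℝ) - 1 := by
    push_cast [Nat.cast_sub hd]; ring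
  have hprod : ∀ y : ℝ, 0 < y → y^(d-1) * y ^ a = y ^ (1-2*s) := by
    intro y hy
    rw [← Real.rpow_natCast y (d-1), ← Real.rpow_add hy, hcast]
    congr 1; rw [ha]; ring
  have hnn : ∀ y : ℝ, 0 < y → 0 ≤ y^(d-1) * (y ^ a * (1+y^2)⁻¹) := by
    intro y hy; positivity
  have h01 : IntegrableOn (fun y : ℝ => y^(d-1) * (y ^ a * (1+y^2)⁻¹)) (Ioc 0 1) := by
    have hmaj : IntegrableOn (fun y : ℝ => y ^ (1-2*s)) (Ioc 0 1) := by
      rw [← intervalIntegrable_iff_integrableOn_Ioc_of_le zero_le_one]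
      exact intervalIntegral.intervalIntegrable_rpow' (by linarith)
    refine hmaj.mono' (Measurable.aestronglyMeasurable (by fun_prop)) ?_
    filter_upwards [ae_restrict_mem measurableSet_Ioc] with y hy
    rw [Real.norm_of_nonneg (hnn y hy.1)]
    have hb : (1+y^2)⁻¹ ≤ (1:ℝ) := by
      rw [inv_le_one_iff₀]; right; nlinarith [sq_nonneg y]
    calc y^(d-1) * (y ^ a * (1+y^2)⁻¹) ≤ y^(d-1) * (y ^ a * 1) :=
          mul_le_mul_of_nonneg_left
            (mul_le_mul_of_nonneg_left hb (Real.rpow_nonneg hy.1.le a))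
            (pow_nonneg hy.1.le _)
      _ = y ^ (1-2*s) := by rw [mul_one, hprod y hy.1]
  have h1i : IntegrableOn (fun y : ℝ => y^(d-1) * (y ^ a * (1+y^2)⁻¹)) (Ioi 1) := by
    have hmaj : IntegrableOn (fun y : ℝ => y ^ (-1-2*s)) (Ioi 1) :=
      integrableOn_Ioi_rpow_of_lt (by linarith) one_pos
    refine hmaj.mono' (Measurable.aestronglyMeasurable (by fun_prop)) ?_
    filter_upwards [ae_restrict_mem measurableSet_Ioi] with y hy
    have hy0 : (0:ℝ) < y := lt_trans one_pos hy
    rw [Real.norm_of_nonneg (hnn y hy0)]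
    have hb : (1+y^2)⁻¹ ≤ ((y^2)⁻¹ : ℝ) := by
      apply inv_anti₀ (by positivity); nlinarith
    calc y^(d-1) * (y ^ a * (1+y^2)⁻¹) ≤ y^(d-1) * (y ^ a * (y^2)⁻¹) :=
          mul_le_mul_of_nonneg_left
            (mul_le_mul_of_nonneg_left hb (Real.rpow_nonneg hy0.le a))
            (pow_nonneg hy0.le _)
      _ = y ^ (1-2*s) * (y^2)⁻¹ := by rw [← mul_assoc, hprod y hy0]
      _ = y ^ (-1-2*s) := by
          rw [← Real.rpow_natCast y 2, ← Real.rpow_neg hy0.le, ← Real.rpow_add hy0]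
          congr 1; ring
  have : Ioi (0:ℝ) = Ioc 0 1 ∪ Ioi 1 := (Ioc_union_Ioi_eq_Ioi zero_le_one).symm
  rw [this]
  exact h01.union h1i


lemma integrable_F0 {d : ℕ} (hd : 1 ≤ d) {s : ℝ} (hs0 : 0 < s) (hs1 : s < 1) :
    Integrable (fun v : EuclideanSpace ℝ (Fin d) =>
      ‖v‖ ^ (2 - (d : ℝ) - 2 * s) * (1 + ‖v‖ ^ 2)⁻¹) := by
  set a : ℝ := 2-(d:ℝ)-2*s with ha
  have hmeas : AEStronglyMeasurable (fun v : EuclideanSpace ℝ (Fin d) =>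
      ‖v‖ ^ a * (1 + ‖v‖ ^ 2)⁻¹) volume := by
    exact Measurable.aestronglyMeasurable (by fun_prop)
  refine ⟨hmeas, ?_⟩
  rw [hasFiniteIntegral_iff_ofReal (ae_of_all _ fun v => by positivity)]
  have hg : Measurable (fun y : ℝ => ENNReal.ofReal (y ^ a * (1+y^2)⁻¹)) := by fun_prop
  rw [show (fun v : EuclideanSpace ℝ (Fin d) => ENNReal.ofReal (‖v‖ ^ a * (1 + ‖v‖ ^ 2)⁻¹))
      = fun v => (fun y : ℝ => ENNReal.ofReal (y ^ a * (1+y^2)⁻¹)) ‖v‖ from rfl,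
    radial_lintegral hd _ hg]
  refine ENNReal.mul_lt_top (measure_lt_top _ _) ?_
  have heq : ∫⁻ y in Ioi (0:ℝ), ENNReal.ofReal (y ^ (d-1)) * ENNReal.ofReal (y ^ a * (1+y^2)⁻¹)
      = ∫⁻ y in Ioi (0:ℝ), ENNReal.ofReal (y^(d-1) * (y ^ a * (1+y^2)⁻¹)) := by
    refine setLIntegral_congr_fun measurableSet_Ioi (fun y hy => ?_)
    rw [ENNReal.ofReal_mul (pow_nonneg (le_of_lt hy) _)]
  rw [heq]
  exact (oneD_integrable hd hs0 hs1).lintegral_lt_top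

/-- The constant `c₂ = c ∫ |v|^{2−d−2s} (1+|v|²)⁻¹ dv` is finite and positive, and
`ε^{2−2s} ∫ |v|² M₁(v) ⟨εv⟩⁻² dv → c₂` as `ε → 0⁺`. -/
theorem twisted_second_moment_asymptotics
    (d : ℕ) (hd : 1 ≤ d) (s : ℝ) (hs0 : 0 < s) (hs1 : s < 1)
    (c : ℝ) (hc : 0 < c) (hM : ∫ v, M1 d s c v = 1) :
    Integrable (fun v : EuclideanSpace ℝ (Fin d) =>
        ‖v‖ ^ (2 - (d : ℝ) - 2 * s) * (1 + ‖v‖ ^ 2)⁻¹) ∧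
    0 < c * ∫ v : EuclideanSpace ℝ (Fin d),
        ‖v‖ ^ (2 - (d : ℝ) - 2 * s) * (1 + ‖v‖ ^ 2)⁻¹ ∧
    Tendsto
      (fun ε : ℝ =>
        ε ^ (2 - 2 * s) * ∫ v, ‖v‖ ^ 2 * M1 d s c v * (1 + ε ^ 2 * ‖v‖ ^ 2)⁻¹)
      (nhdsWithin 0 (Set.Ioi 0))
      (nhds (c * ∫ v : EuclideanSpace ℝ (Fin d),
        ‖v‖ ^ (2 - (d : ℝ) - 2 * s) * (1 + ‖v‖ ^ 2)⁻¹)) := by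
  haveI : Nonempty (Fin d) := Fin.pos_iff_nonempty.mp hd
  haveI : Nontrivial (EuclideanSpace ℝ (Fin d)) := by
    refine ⟨0, EuclideanSpace.single ⟨0, hd⟩ 1, fun h => ?_⟩
    have := congrArg (fun x : EuclideanSpace ℝ (Fin d) => x ⟨0, hd⟩) h.symm
    simp [EuclideanSpace.single_apply] at this
  set E := EuclideanSpace ℝ (Fin d)
  set a : ℝ := 2 - (d:ℝ) - 2*s with ha
  set e : ℝ := -((d : ℝ) + 2 * s) / 2 with he
  set F0 : E → ℝ := fun v => ‖v‖ ^ a * (1 + ‖v‖ ^ 2)⁻¹ with hF0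
  have hint : Integrable F0 := integrable_F0 hd hs0 hs1
  refine ⟨hint, ?_, ?_⟩
  · -- positivity
    refine mul_pos hc ?_
    rw [integral_pos_iff_support_of_nonneg (fun v => by positivity) hint]
    have hsub : (ball (0:E) 1 \ {0}) ⊆ Function.support F0 := by
      intro v hv
      have hv0 : v ≠ 0 := hv.2
      have : 0 < F0 v := by
        apply mul_pos (Real.rpow_pos_of_pos (norm_pos_iff.mpr hv0) _)
        positivity
      exact this.ne'
    calc (0:ENNReal) < volume (ball (0:E) 1 \ {0}) := by
          rw [measure_diff_null (measure_singleton _)]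
          exact measure_ball_pos _ _ one_pos
      _ ≤ volume (Function.support F0) := measure_mono hsub
  · -- the limit
    set h : ℝ → E → ℝ := fun ε w => ‖w‖ ^ 2 * (ε^2 + ‖w‖^2) ^ e * (1 + ‖w‖^2)⁻¹ with hh
    have hne : ∀ᵐ w : E ∂volume, w ≠ 0 := by
      rw [ae_iff]
      simpa using measure_singleton (0:E)
    have h2e : 2 + 2*e = a := by rw [he, ha]; ring
    have hkey : ∀ w : E, w ≠ 0 → ∀ ε : ℝ, |h ε w| ≤ F0 w ∧ h 0 w = F0 w := by
      intro w hw ε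
      have hw0 : 0 < ‖w‖ := norm_pos_iff.mpr hw
      have hsq : (0:ℝ) < ‖w‖^2 := by positivity
      have hbase : (‖w‖^2 : ℝ) ^ e = ‖w‖ ^ (2*e) := by
        rw [← Real.rpow_natCast ‖w‖ 2, ← Real.rpow_mul (norm_nonneg w)]
        norm_num
      have hzero : h 0 w = F0 w := by
        rw [hh, hF0]
        simp only [ne_eq, OfNat.ofNat_ne_zero, not_false_eq_true, zero_pow, zero_add]
        rw [hbase, ← Real.rpow_natCast ‖w‖ 2, ← Real.rpow_add hw0]
        push_cast
        rw [h2e]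
      refine ⟨?_, hzero⟩
      have hnn : 0 ≤ h ε w := by
        rw [hh]
        have := Real.rpow_nonneg (by positivity : (0:ℝ) ≤ ε^2 + ‖w‖^2) e
        positivity
      rw [abs_of_nonneg hnn, hh, hF0]
      have hmono : (ε^2 + ‖w‖^2) ^ e ≤ (‖w‖^2 : ℝ) ^ e :=
        Real.rpow_le_rpow_of_nonpos hsq (by nlinarith [sq_nonneg ε])
          (by rw [he]; have : (0:ℝ) ≤ (d:ℝ) := Nat.cast_nonneg d; linarith)
      calc ‖w‖ ^ 2 * (ε^2 + ‖w‖^2) ^ e * (1 + ‖w‖^2)⁻¹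
          ≤ ‖w‖ ^ 2 * (‖w‖^2:ℝ) ^ e * (1 + ‖w‖^2)⁻¹ := by
            apply mul_le_mul_of_nonneg_right (mul_le_mul_of_nonneg_left hmono (by positivity))
            positivity
        _ = ‖w‖ ^ a * (1 + ‖w‖^2)⁻¹ := by
            rw [hbase, ← Real.rpow_natCast ‖w‖ 2, ← Real.rpow_add hw0]
            push_cast
            rw [h2e]
    -- dominated convergence
    have hTint : Tendsto (fun ε : ℝ => ∫ w : E, h ε w) (nhdsWithin 0 (Set.Ioi 0))
        (nhds (∫ w : E, F0 w)) := by
      apply tendsto_integral_filter_of_dominated_convergence F0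
      · exact Eventually.of_forall fun ε => Measurable.aestronglyMeasurable (by fun_prop)
      · exact Eventually.of_forall fun ε => by
          filter_upwards [hne] with w hw
          exact (hkey w hw ε).1
      · exact hint
      · filter_upwards [hne] with w hw
        have hcont : Tendsto (fun ε : ℝ => h ε w) (nhds 0) (nhds (h 0 w)) := by
          rw [hh]
          have hbase : Tendsto (fun ε : ℝ => ε^2 + ‖w‖^2) (nhds 0) (nhds (0^2 + ‖w‖^2)) := by
            exact (continuous_pow 2).tendsto' 0 _ rfl |>.add tendsto_const_nhds
          have hrpow : ContinuousAt (fun x : ℝ => x ^ e) ((0:ℝ)^2 + ‖w‖^2) := by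
            apply Real.continuousAt_rpow_const
            left
            have : (0:ℝ) < ‖w‖^2 := pow_pos (norm_pos_iff.mpr hw) 2
            simp only [ne_eq, OfNat.ofNat_ne_zero, not_false_eq_true, zero_pow, zero_add]
            exact this.ne'
          exact ((tendsto_const_nhds.mul (hrpow.tendsto.comp hbase)).mul tendsto_const_nhds)
        rw [(hkey w hw 0).2] at hcont
        exact hcont.mono_left nhdsWithin_le_nhds
    have hTint' : Tendsto (fun ε : ℝ => c * ∫ w : E, h ε w) (nhdsWithin 0 (Set.Ioi 0))
        (nhds (c * ∫ w : E, F0 w)) := hTint.const_mul c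
    refine hTint'.congr' ?_
    filter_upwards [self_mem_nhdsWithin] with ε (hε : 0 < ε)
    -- scaling identity: c * ∫ h ε = ε^(2-2s) * ∫ original
    have hscale := MeasureTheory.Measure.integral_comp_smul (volume : Measure E) (h ε) ε
    have hfr : Module.finrank ℝ E = d := finrank_euclideanSpace_fin
    rw [hfr] at hscale
    have hpt : ∀ v : E, h ε (ε • v) = ε ^ (2+2*e) *
        (‖v‖^2 * (1+‖v‖^2) ^ e * (1 + ε^2*‖v‖^2)⁻¹) := by
      intro v
      have hnorm : ‖ε • v‖ = ε * ‖v‖ := by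
        rw [norm_smul, Real.norm_eq_abs, abs_of_pos hε]
      show ‖ε • v‖^2 * (ε^2+‖ε • v‖^2) ^ e * (1+‖ε • v‖^2)⁻¹ = _
      rw [hnorm]
      have h1 : (ε*‖v‖)^2 = ε^2*‖v‖^2 := by ring
      rw [h1]
      have h2 : (ε^2 + ε^2*‖v‖^2 : ℝ) = ε^2 * (1+‖v‖^2) := by ring
      rw [h2, Real.mul_rpow (by positivity) (by positivity)]
      have h3 : ((ε:ℝ)^2) ^ e = ε ^ (2*e) := by
        rw [← Real.rpow_natCast ε 2, ← Real.rpow_mul hε.le]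
        norm_num
      rw [h3]
      have h4 : (ε:ℝ) ^ (2+2*e) = ε^2 * ε ^ (2*e) := by
        rw [← Real.rpow_natCast ε 2, ← Real.rpow_add hε]
        norm_num
      rw [h4]
      ring
    have hint2 : ∫ v : E, h ε (ε • v) = ε ^ (2+2*e) *
        ∫ v : E, ‖v‖^2 * (1+‖v‖^2) ^ e * (1 + ε^2*‖v‖^2)⁻¹ := by
      simp_rw [hpt]
      exact integral_const_mul _ _
    -- combine
    have hd0 : ((ε:ℝ)^d)⁻¹ ≠ 0 := by positivity
    have habs : |((ε:ℝ)^d)⁻¹| = (ε^d)⁻¹ := abs_of_pos (by positivity)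
    rw [hint2, habs, smul_eq_mul] at hscale
    have hsolve : ∫ w : E, h ε w = ε^d * ε ^ (2+2*e) *
        ∫ v : E, ‖v‖^2 * (1+‖v‖^2) ^ e * (1 + ε^2*‖v‖^2)⁻¹ := by
      rw [mul_assoc, hscale, ← mul_assoc, mul_inv_cancel₀ (pow_ne_zero _ hε.ne'), one_mul]
    have hMrw : ∀ v : E, ‖v‖ ^ 2 * M1 d s c v * (1 + ε ^ 2 * ‖v‖ ^ 2)⁻¹
        = c * (‖v‖^2 * (1+‖v‖^2) ^ e * (1 + ε^2*‖v‖^2)⁻¹) := by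
      intro v; rw [M1, he]; ring
    have hexp : (ε:ℝ)^d * ε ^ (2+2*e) = ε ^ (2-2*s) := by
      rw [← Real.rpow_natCast ε d, ← Real.rpow_add hε]
      congr 1
      rw [he]; ring
    rw [show (fun v : E => ‖v‖ ^ 2 * M1 d s c v * (1 + ε ^ 2 * ‖v‖ ^ 2)⁻¹)
        = fun v : E => c * (‖v‖^2 * (1+‖v‖^2) ^ e * (1 + ε^2*‖v‖^2)⁻¹) from funext hMrw]
    rw [integral_const_mul, hsolve, hexp]
    ring
end

section
/- Let d ≥ 1 and s ∈ (0,1). There exists C > 0 depending only on d and s such that for all ε ∈ (0,1], ∫_{ℝ^d} M₁(v) |v|³ (1+ε²|v|²)^{-2} dv ≤ C ε^{2s−3}. -/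
open MeasureTheory Real

/-- Integrability of a (possibly negative) power of the norm on the unit closed ball. -/
lemma aux_ball (d : ℕ) (hd : 1 ≤ d) (α : ℝ) (hα : -(d : ℝ) < α) :
    MeasureTheory.IntegrableOn (fun w : EuclideanSpace ℝ (Fin d) => ‖w‖ ^ α)
      (Metric.closedBall 0 1) volume := by
  set E := EuclideanSpace ℝ (Fin d)
  haveI : Nonempty (Fin d) := ⟨⟨0, hd⟩⟩
  haveI : Nontrivial E := inferInstanceAs (Nontrivial (PiLp 2 fun _ : Fin d => ℝ))
  set a : ℝ := (2 : ℝ)⁻¹ with ha_def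
  have ha0 : (0 : ℝ) < a := by norm_num
  have ha1 : a < 1 := by norm_num
  set f : E → ℝ := fun w => ‖w‖ ^ α with hf_def
  have hfm : Measurable f := by fun_prop
  set s : ℕ → Set E := fun i => Metric.closedBall 0 (a ^ i) \ Metric.ball 0 (a ^ (i + 1))
    with hs_def
  have hmeas : ∀ i, MeasurableSet (s i) := fun i =>
    measurableSet_closedBall.diff measurableSet_ball
  set C : ℕ → ℝ := fun i => (a ^ (i + 1)) ^ α + (a ^ i) ^ α with hC_def
  have hmem : ∀ i, ∀ w ∈ s i, a ^ (i + 1) ≤ ‖w‖ ∧ ‖w‖ ≤ a ^ i := by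
    intro i w hw
    obtain ⟨h1, h2⟩ := hw
    rw [Metric.mem_closedBall, dist_zero_right] at h1
    rw [Metric.mem_ball, dist_zero_right] at h2
    exact ⟨le_of_not_gt h2, h1⟩
  have hbound : ∀ i, ∀ w ∈ s i, f w ≤ C i := by
    intro i w hw
    obtain ⟨h1, h2⟩ := hmem i w hw
    rcases le_or_gt α 0 with h | h
    · have : f w ≤ (a ^ (i + 1)) ^ α :=
        Real.rpow_le_rpow_of_nonpos (by positivity) h1 h
      exact this.trans (le_add_of_nonneg_right (Real.rpow_nonneg (by positivity) α))
    · have : f w ≤ (a ^ i) ^ α := Real.rpow_le_rpow (norm_nonneg w) h2 h.le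
      exact this.trans (le_add_of_nonneg_left (Real.rpow_nonneg (by positivity) α))
  have hμfin : ∀ i, volume (s i) < ⊤ :=
    fun i => lt_of_le_of_lt (measure_mono Set.diff_subset) measure_closedBall_lt_top
  have hint : ∀ i, IntegrableOn f (s i) volume := by
    intro i
    refine Integrable.mono' (integrableOn_const (C := C i) (hμfin i).ne)
      hfm.aestronglyMeasurable ?_
    filter_upwards [ae_restrict_mem (hmeas i)] with w hw
    rw [Real.norm_eq_abs, abs_of_nonneg (Real.rpow_nonneg (norm_nonneg w) α)]
    exact hbound i w hw
  set V : ℝ := (volume (Metric.ball (0 : E) 1)).toReal with hV_def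
  have hV0 : 0 ≤ V := ENNReal.toReal_nonneg
  have hvol : ∀ i, (volume (s i)).toReal ≤ (a ^ i) ^ d * V := by
    intro i
    have hle : volume (s i) ≤ volume (Metric.closedBall (0 : E) (a ^ i)) :=
      measure_mono Set.diff_subset
    have heq : volume (Metric.closedBall (0 : E) (a ^ i)) =
        ENNReal.ofReal ((a ^ i) ^ Module.finrank ℝ E) *
          volume (Metric.ball (0 : E) 1) :=
      MeasureTheory.Measure.addHaar_closedBall volume 0 (by positivity)
    have hfr : Module.finrank ℝ E = d := finrank_euclideanSpace_fin
    have := ENNReal.toReal_mono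
      (a := volume (s i)) (b := volume (Metric.closedBall (0 : E) (a ^ i)))
      (by rw [heq]; exact (ENNReal.mul_lt_top ENNReal.ofReal_lt_top
        measure_ball_lt_top).ne) hle
    rw [heq, hfr, ENNReal.toReal_mul, ENNReal.toReal_ofReal (by positivity)] at this
    exact this
  have hswap : ∀ i : ℕ, ((a : ℝ) ^ i) ^ α = (a ^ α) ^ i := by
    intro i
    rw [← Real.rpow_natCast a i, ← Real.rpow_mul ha0.le, mul_comm,
      Real.rpow_mul ha0.le, Real.rpow_natCast]
  set r : ℝ := a ^ α * a ^ d with hr_def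
  have hr0 : 0 ≤ r := by positivity
  have hr1 : r < 1 := by
    have : r = a ^ (α + (d : ℝ)) := by
      rw [Real.rpow_add ha0, Real.rpow_natCast]
    rw [this]
    exact Real.rpow_lt_one ha0.le ha1 (by linarith)
  have hgeom : Summable fun i : ℕ => (a ^ α + 1) * V * r ^ i :=
    (summable_geometric_of_lt_one hr0 hr1).mul_left _
  have hsum : Summable fun i : ℕ => ∫ w in s i, ‖f w‖ := by
    refine Summable.of_nonneg_of_le
      (fun i => integral_nonneg fun w => norm_nonneg _) (fun i => ?_) hgeom
    have h1 : ∫ w in s i, ‖f w‖ ≤ ∫ _w in s i, C i := by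
      refine setIntegral_mono_on (hint i).norm
        (integrableOn_const (C := C i) (hμfin i).ne) (hmeas i) ?_
      intro w hw
      rw [Real.norm_eq_abs, abs_of_nonneg (Real.rpow_nonneg (norm_nonneg w) α)]
      exact hbound i w hw
    have h2 : ∫ _w in s i, C i = (volume (s i)).toReal * C i := by
      rw [setIntegral_const, smul_eq_mul]; rfl
    have hC0 : 0 ≤ C i := by
      have := Real.rpow_nonneg (x := a ^ (i + 1)) (by positivity) α
      have := Real.rpow_nonneg (x := a ^ i) (by positivity) α
      simp only [hC_def]; linarith
    have h3 : (volume (s i)).toReal * C i ≤ ((a ^ i) ^ d * V) * C i :=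
      mul_le_mul_of_nonneg_right (hvol i) hC0
    have h4 : ((a ^ i) ^ d * V) * C i = (a ^ α + 1) * V * r ^ i := by
      simp only [hC_def, hr_def, hswap]
      ring
    calc ∫ w in s i, ‖f w‖ ≤ (volume (s i)).toReal * C i := h1.trans_eq h2
      _ ≤ ((a ^ i) ^ d * V) * C i := h3
      _ = (a ^ α + 1) * V * r ^ i := h4
  have hiu : IntegrableOn f (⋃ i, s i) volume :=
    integrableOn_iUnion_of_summable_integral_norm hint hsum
  have hzero : IntegrableOn f {(0 : E)} volume := by
    unfold IntegrableOn
    rw [Measure.restrict_eq_zero.mpr (measure_singleton 0)]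
    exact integrable_zero_measure
  have hsub : Metric.closedBall (0 : E) 1 ⊆ (⋃ i, s i) ∪ {(0 : E)} := by
    intro w hw
    rcases eq_or_ne w 0 with rfl | hw0
    · exact Or.inr rfl
    · left
      rw [Set.mem_iUnion]
      have h0 : 0 < ‖w‖ := norm_pos_iff.mpr hw0
      have hle : ‖w‖ ≤ 1 := by
        rw [Metric.mem_closedBall, dist_zero_right] at hw; exact hw
      have hex : ∃ n : ℕ, a ^ n < ‖w‖ := exists_pow_lt_of_lt_one h0 ha1
      set n₀ := Nat.find hex with hn₀_def
      have hn₀ : a ^ n₀ < ‖w‖ := Nat.find_spec hex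
      have hne : n₀ ≠ 0 := by
        intro h
        rw [h, pow_zero] at hn₀
        linarith
      refine ⟨n₀ - 1, ?_, ?_⟩
      · rw [Metric.mem_closedBall, dist_zero_right]
        have := Nat.find_min hex (m := n₀ - 1) (Nat.sub_lt (Nat.pos_of_ne_zero hne) one_pos)
        exact le_of_not_gt this
      · rw [Metric.mem_ball, dist_zero_right]
        rw [Nat.sub_add_cancel (Nat.one_le_iff_ne_zero.mpr hne)]
        exact not_lt.mpr hn₀.le
  exact (hiu.union hzero).mono_set hsub

/-- Integrability of `‖w‖^α * ((1+‖w‖²)²)⁻¹` on `ℝ^d` for `-d < α` and `α + d < 4`. -/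
lemma aux_int (d : ℕ) (hd : 1 ≤ d) (α : ℝ) (hα : -(d : ℝ) < α) (hα4 : α + (d : ℝ) < 4) :
    MeasureTheory.Integrable
      (fun w : EuclideanSpace ℝ (Fin d) => ‖w‖ ^ α * ((1 + ‖w‖ ^ 2) ^ 2)⁻¹) volume := by
  set E := EuclideanSpace ℝ (Fin d)
  set g : E → ℝ := fun w => ‖w‖ ^ α * ((1 + ‖w‖ ^ 2) ^ 2)⁻¹ with hg_def
  have hgm : Measurable g := by fun_prop
  have hd0 : (0 : ℝ) ≤ d := Nat.cast_nonneg d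
  rw [← integrableOn_univ, ← Set.union_compl_self (Metric.closedBall (0 : E) 1)]
  apply MeasureTheory.IntegrableOn.union
  · refine Integrable.mono' (aux_ball d hd α hα) hgm.aestronglyMeasurable ?_
    refine Filter.Eventually.of_forall fun w => ?_
    have h1 : (1 : ℝ) ≤ (1 + ‖w‖ ^ 2) ^ 2 := one_le_pow₀ (le_add_of_nonneg_right (by positivity))
    have h2 : ((1 + ‖w‖ ^ 2) ^ 2)⁻¹ ≤ 1 := inv_le_one_of_one_le₀ h1
    have h3 : (0 : ℝ) ≤ ((1 + ‖w‖ ^ 2) ^ 2)⁻¹ := by positivity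
    rw [Real.norm_eq_abs, abs_of_nonneg (by positivity)]
    calc ‖w‖ ^ α * ((1 + ‖w‖ ^ 2) ^ 2)⁻¹ ≤ ‖w‖ ^ α * 1 :=
          mul_le_mul_of_nonneg_left h2 (Real.rpow_nonneg (norm_nonneg w) α)
      _ = ‖w‖ ^ α := mul_one _
  · set t : ℝ := 4 - α with ht_def
    have ht : (d : ℝ) < t := by linarith
    have ht0 : 0 ≤ t := le_of_lt (lt_of_le_of_lt hd0 ht)
    have hint2 : Integrable (fun w : E => (2 : ℝ) ^ t * (1 + ‖w‖) ^ (-t)) volume := by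
      refine Integrable.const_mul ?_ _
      apply integrable_one_add_norm (E := E) (μ := volume)
      rw [finrank_euclideanSpace_fin]
      exact ht
    refine Integrable.mono' hint2.integrableOn hgm.aestronglyMeasurable ?_
    filter_upwards [ae_restrict_mem measurableSet_closedBall.compl] with w hw
    have hw1 : 1 < ‖w‖ := by
      rw [Set.mem_compl_iff, Metric.mem_closedBall, dist_zero_right, not_le] at hw
      exact hw
    have hw0 : 0 < ‖w‖ := lt_trans one_pos hw1
    rw [Real.norm_eq_abs, abs_of_nonneg (by positivity)]
    have step1 : g w ≤ ‖w‖ ^ α * ((‖w‖ ^ 2) ^ 2)⁻¹ := by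
      refine mul_le_mul_of_nonneg_left ?_ (Real.rpow_nonneg (norm_nonneg w) α)
      refine inv_anti₀ (by positivity) ?_
      exact pow_le_pow_left₀ (by positivity) (by linarith) 2
    have step2 : ‖w‖ ^ α * ((‖w‖ ^ 2) ^ 2)⁻¹ = ‖w‖ ^ (-t) := by
      have h4 : ((‖w‖ ^ 2) ^ 2 : ℝ) = ‖w‖ ^ ((4 : ℕ) : ℝ) := by
        rw [← pow_mul, Real.rpow_natCast]
      rw [h4, ← Real.rpow_neg (norm_nonneg w), ← Real.rpow_add hw0]
      norm_num [ht_def]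
      ring_nf
    have step3 : ‖w‖ ^ (-t) ≤ (2 : ℝ) ^ t * (1 + ‖w‖) ^ (-t) := by
      have h2 : 1 + ‖w‖ ≤ 2 * ‖w‖ := by linarith
      have key : (1 + ‖w‖) ^ t ≤ 2 ^ t * ‖w‖ ^ t := by
        rw [← Real.mul_rpow (by norm_num) (norm_nonneg w)]
        exact Real.rpow_le_rpow (by positivity) h2 ht0
      have hpos1 : (0 : ℝ) < (1 + ‖w‖) ^ t := Real.rpow_pos_of_pos (by positivity) t
      have hpos2 : (0 : ℝ) < ‖w‖ ^ t := Real.rpow_pos_of_pos hw0 t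
      have hpos3 : (0 : ℝ) < (2 : ℝ) ^ t := Real.rpow_pos_of_pos (by norm_num) t
      rw [Real.rpow_neg (norm_nonneg w), Real.rpow_neg (by positivity)]
      have hinv : ((2 : ℝ) ^ t * ‖w‖ ^ t)⁻¹ ≤ ((1 + ‖w‖) ^ t)⁻¹ :=
        inv_anti₀ hpos1 key
      calc (‖w‖ ^ t)⁻¹ = (2 : ℝ) ^ t * ((2 : ℝ) ^ t * ‖w‖ ^ t)⁻¹ := by
            field_simp
        _ ≤ (2 : ℝ) ^ t * ((1 + ‖w‖) ^ t)⁻¹ :=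
            mul_le_mul_of_nonneg_left hinv hpos3.le
    calc g w ≤ ‖w‖ ^ α * ((‖w‖ ^ 2) ^ 2)⁻¹ := step1
      _ = ‖w‖ ^ (-t) := step2
      _ ≤ (2 : ℝ) ^ t * (1 + ‖w‖) ^ (-t) := step3

/-- `∫ M₁(v) |v|³ ⟨εv⟩⁻⁴ dv ≤ C ε^{2s−3}` uniformly for `ε ∈ (0,1]`. -/
theorem twisted_third_moment_weight_bound
    (d : ℕ) (hd : 1 ≤ d) (s : ℝ) (hs0 : 0 < s) (hs1 : s < 1)
    (c : ℝ) (hc : 0 < c) (hM : ∫ v, M1 d s c v = 1) :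
    ∃ C > 0, ∀ ε ∈ Set.Ioc (0 : ℝ) 1,
      ∫ v, M1 d s c v * ‖v‖ ^ 3 * ((1 + ε ^ 2 * ‖v‖ ^ 2) ^ 2)⁻¹ ≤
        C * ε ^ (2 * s - 3) := by
  set E := EuclideanSpace ℝ (Fin d)
  set α : ℝ := 3 - d - 2 * s with hα_def
  have hd1 : (1 : ℝ) ≤ d := by exact_mod_cast hd
  have hα : -(d : ℝ) < α := by simp only [hα_def]; linarith
  have hα4 : α + (d : ℝ) < 4 := by simp only [hα_def]; linarith
  set g : E → ℝ := fun w => ‖w‖ ^ α * ((1 + ‖w‖ ^ 2) ^ 2)⁻¹ with hg_def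
  have hg : Integrable g volume := aux_int d hd α hα hα4
  set I : ℝ := ∫ w, g w with hI_def
  have hI0 : 0 ≤ I := integral_nonneg fun w => by positivity
  refine ⟨c * I + 1, by positivity, ?_⟩
  rintro ε ⟨hε0, hε1⟩
  have hεα : (0 : ℝ) < ε ^ α := Real.rpow_pos_of_pos hε0 α
  set H : E → ℝ := fun v => (c * (ε ^ α)⁻¹) * g (ε • v) with hH_def
  have hH_int : Integrable H volume := (hg.comp_smul hε0.ne').const_mul _
  have hnorm_smul : ∀ v : E, ‖ε • v‖ = ε * ‖v‖ := fun v => by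
    rw [norm_smul, Real.norm_eq_abs, abs_of_pos hε0]
  have hH_eq : ∀ v : E, H v = c * ‖v‖ ^ α * ((1 + ε ^ 2 * ‖v‖ ^ 2) ^ 2)⁻¹ := by
    intro v
    simp only [hH_def, hg_def, hnorm_smul v]
    rw [Real.mul_rpow hε0.le (norm_nonneg v), mul_pow]
    field_simp
  have hF_nonneg : ∀ v : E,
      0 ≤ M1 d s c v * ‖v‖ ^ 3 * ((1 + ε ^ 2 * ‖v‖ ^ 2) ^ 2)⁻¹ := by
    intro v
    unfold M1
    positivity
  have hFH : ∀ v : E,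
      M1 d s c v * ‖v‖ ^ 3 * ((1 + ε ^ 2 * ‖v‖ ^ 2) ^ 2)⁻¹ ≤ H v := by
    intro v
    rw [hH_eq v]
    unfold M1
    have key : (1 + ‖v‖ ^ 2) ^ (-((d : ℝ) + 2 * s) / 2) * ‖v‖ ^ 3 ≤ ‖v‖ ^ α := by
      rcases eq_or_ne v 0 with rfl | hv0
      · simp only [norm_zero, ne_eq, OfNat.ofNat_ne_zero, not_false_eq_true, zero_pow,
          mul_zero]
        exact Real.rpow_nonneg le_rfl α
      · have hr0 : (0 : ℝ) < ‖v‖ := norm_pos_iff.mpr hv0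
        have h1 : (1 + ‖v‖ ^ 2) ^ (-((d : ℝ) + 2 * s) / 2) ≤
            (‖v‖ ^ 2) ^ (-((d : ℝ) + 2 * s) / 2) := by
          refine Real.rpow_le_rpow_of_nonpos (by positivity) (by linarith) ?_
          have : (0 : ℝ) < (d : ℝ) + 2 * s := by linarith
          linarith
        have h2 : ((‖v‖ ^ 2) : ℝ) ^ (-((d : ℝ) + 2 * s) / 2) =
            ‖v‖ ^ (-((d : ℝ) + 2 * s)) := by
          rw [← Real.rpow_natCast ‖v‖ 2, ← Real.rpow_mul (norm_nonneg v)]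
          norm_num
          congr 1
          ring
        have h3 : (‖v‖ : ℝ) ^ 3 = ‖v‖ ^ ((3 : ℕ) : ℝ) := (Real.rpow_natCast ‖v‖ 3).symm
        calc (1 + ‖v‖ ^ 2) ^ (-((d : ℝ) + 2 * s) / 2) * ‖v‖ ^ 3
            ≤ (‖v‖ ^ 2) ^ (-((d : ℝ) + 2 * s) / 2) * ‖v‖ ^ 3 :=
              mul_le_mul_of_nonneg_right h1 (by positivity)
          _ = ‖v‖ ^ (-((d : ℝ) + 2 * s)) * ‖v‖ ^ ((3 : ℕ) : ℝ) := by rw [h2, h3]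
          _ = ‖v‖ ^ (-((d : ℝ) + 2 * s) + 3) := by
              rw [← Real.rpow_add hr0]; norm_num
          _ = ‖v‖ ^ α := by
              congr 1
              simp only [hα_def]
              ring
    calc M1 d s c v * ‖v‖ ^ 3 * ((1 + ε ^ 2 * ‖v‖ ^ 2) ^ 2)⁻¹
        = c * ((1 + ‖v‖ ^ 2) ^ (-((d : ℝ) + 2 * s) / 2) * ‖v‖ ^ 3) *
            ((1 + ε ^ 2 * ‖v‖ ^ 2) ^ 2)⁻¹ := by unfold M1; ring
      _ ≤ c * ‖v‖ ^ α * ((1 + ε ^ 2 * ‖v‖ ^ 2) ^ 2)⁻¹ := by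
          refine mul_le_mul_of_nonneg_right ?_ (by positivity)
          exact mul_le_mul_of_nonneg_left key hc.le
  have hmono : ∫ v, M1 d s c v * ‖v‖ ^ 3 * ((1 + ε ^ 2 * ‖v‖ ^ 2) ^ 2)⁻¹ ≤ ∫ v, H v :=
    integral_mono_of_nonneg (Filter.Eventually.of_forall hF_nonneg) hH_int
      (Filter.Eventually.of_forall hFH)
  have hscale : ∫ v : E, g (ε • v) = ((ε ^ d : ℝ))⁻¹ * I := by
    have := MeasureTheory.Measure.integral_comp_smul_of_nonneg (μ := volume) g ε (hR := hε0.le)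
    rw [this, smul_eq_mul, finrank_euclideanSpace_fin]
  have hHint_eq : ∫ v, H v = (c * I) * ε ^ (2 * s - 3) := by
    simp only [hH_def]
    rw [MeasureTheory.integral_const_mul, hscale]
    have hpow : (ε ^ α)⁻¹ * ((ε ^ d : ℝ))⁻¹ = ε ^ (2 * s - 3) := by
      rw [← Real.rpow_natCast ε d, ← Real.rpow_neg hε0.le, ← Real.rpow_neg hε0.le,
        ← Real.rpow_add hε0]
      congr 1
      simp only [hα_def]
      ring
    calc c * (ε ^ α)⁻¹ * (((ε ^ d : ℝ))⁻¹ * I)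
        = (c * I) * ((ε ^ α)⁻¹ * ((ε ^ d : ℝ))⁻¹) := by ring
      _ = (c * I) * ε ^ (2 * s - 3) := by rw [hpow]
  calc ∫ v, M1 d s c v * ‖v‖ ^ 3 * ((1 + ε ^ 2 * ‖v‖ ^ 2) ^ 2)⁻¹
      ≤ ∫ v, H v := hmono
    _ = (c * I) * ε ^ (2 * s - 3) := hHint_eq
    _ ≤ (c * I + 1) * ε ^ (2 * s - 3) := by
        refine mul_le_mul_of_nonneg_right (by linarith) ?_
        exact (Real.rpow_pos_of_pos hε0 _).le
end

section
/- Let d ≥ 1 and s ∈ (0,1). There exists C > 0 depending only on d and s such that for all ε ∈ (0,1] and every integrable h : ℝ^d → ℝ with ∫_{ℝ^d} h(v) dv = 0 and ∫_{ℝ^d} h(v)² M₁(v)^{-1} dv < ∞, one has |∫_{ℝ^d} h(v) (1+ε²|v|²)^{-1} dv| ≤ C ε^{s} (∫_{ℝ^d} h(v)² M₁(v)^{-1} dv)^{1/2}. -/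
open MeasureTheory Real

open Set Metric
open scoped ENNReal


lemma radial_bound (d : ℕ) (hd : 1 ≤ d) (s : ℝ) (hs0 : 0 < s) (hs1 : s < 1)
    (ε : ℝ) (hε0 : 0 < ε) (hε1 : ε ≤ 1) :
    ∫ r in Ioi (0:ℝ), (r ^ (d-1) * (min 1 ((ε*r)^4) * (1+r^2) ^ (-((d:ℝ)+2*s)/2)))
      ≤ (1/(4-2*s) + 1/(2*s)) * ε ^ (2*s) := by
  have hdR : (0:ℝ) ≤ (d:ℝ) := Nat.cast_nonneg d
  have hd1 : (1:ℝ) ≤ (d:ℝ) := by exact_mod_cast hd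
  set e : ℝ := -((d:ℝ)+2*s)/2 with he
  have he0 : e ≤ 0 := by rw [he]; linarith
  set R : ℝ := ε⁻¹ with hR
  have hR0 : 0 < R := inv_pos.mpr hε0
  set g : ℝ → ℝ := fun r => r ^ (d-1) * (min 1 ((ε*r)^4) * (1+r^2) ^ e) with hg
  have hgc : Continuous g := by
    apply (continuous_pow (d-1)).mul
    apply (continuous_const.min (by continuity)).mul
    apply Continuous.rpow_const (by continuity)
    intro x; left; positivity
  have hgnn : ∀ r, 0 < r → 0 ≤ g r := by
    intro r hrpos
    have h1 : (0:ℝ) ≤ min 1 ((ε*r)^4) := le_min (by norm_num) (by positivity)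
    have h2 : (0:ℝ) ≤ (1+r^2) ^ e := Real.rpow_nonneg (by positivity) e
    positivity
  -- key pointwise bound, r > 0
  have key : ∀ r : ℝ, 0 < r → (1+r^2) ^ e ≤ r ^ (2*e) := by
    intro r hr
    have h1 : (r:ℝ)^2 ≤ 1 + r^2 := by nlinarith
    have h2 : (1+r^2) ^ e ≤ (r^2) ^ e :=
      Real.rpow_le_rpow_of_nonpos (by positivity) h1 he0
    calc (1+r^2) ^ e ≤ (r^2) ^ e := h2
      _ = r ^ (2*e) := by
          rw [← Real.rpow_natCast r 2, ← Real.rpow_mul hr.le]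
          norm_num
  -- bound on (0, R]
  have bound1 : ∀ r ∈ Ioc (0:ℝ) R, g r ≤ ε^4 * r ^ ((3:ℝ)-2*s) := by
    intro r hr
    have hr0 : 0 < r := hr.1
    have hmin : min 1 ((ε*r)^4) ≤ (ε*r)^4 := min_le_right _ _
    have h2 : (0:ℝ) ≤ (1+r^2) ^ e := Real.rpow_nonneg (by positivity) e
    calc g r ≤ r ^ (d-1) * ((ε*r)^4 * r ^ (2*e)) := by
          apply mul_le_mul_of_nonneg_left _ (by positivity)
          exact mul_le_mul hmin (key r hr0) h2 (by positivity)
      _ = ε^4 * (r ^ (((d:ℝ)-1) + 4 + 2*e)) := by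
          rw [mul_pow]
          rw [show r ^ (d-1) = r ^ (((d:ℝ)-1)) by
            rw [← Real.rpow_natCast r (d-1), Nat.cast_sub hd, Nat.cast_one]]
          rw [show r ^ (4:ℕ) = r ^ ((4:ℝ)) by rw [← Real.rpow_natCast r 4]; norm_num]
          rw [Real.rpow_add hr0, Real.rpow_add hr0]
          ring
      _ = ε^4 * r ^ ((3:ℝ)-2*s) := by rw [he]; ring_nf
  -- bound on (R, ∞)
  have bound2 : ∀ r ∈ Ioi R, g r ≤ r ^ (-(1:ℝ)-2*s) := by
    intro r hr
    have hr0 : 0 < r := hR0.trans hr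
    have hmin : min 1 ((ε*r)^4) ≤ 1 := min_le_left _ _
    have h2 : (0:ℝ) ≤ (1+r^2) ^ e := Real.rpow_nonneg (by positivity) e
    calc g r ≤ r ^ (d-1) * (1 * r ^ (2*e)) := by
          apply mul_le_mul_of_nonneg_left _ (by positivity)
          exact mul_le_mul hmin (key r hr0) h2 (by norm_num)
      _ = r ^ (((d:ℝ)-1) + 2*e) := by
          rw [one_mul, show r ^ (d-1) = r ^ (((d:ℝ)-1)) by
            rw [← Real.rpow_natCast r (d-1), Nat.cast_sub hd, Nat.cast_one]]
          rw [Real.rpow_add hr0]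
      _ = r ^ (-(1:ℝ)-2*s) := by rw [he]; ring_nf
  -- integrability of dominators
  have hi1 : IntegrableOn (fun r : ℝ => ε^4 * r ^ ((3:ℝ)-2*s)) (Ioc 0 R) := by
    apply Integrable.const_mul
    exact ((intervalIntegral.intervalIntegrable_rpow' (by linarith)).1)
  have hi2 : IntegrableOn (fun r : ℝ => r ^ (-(1:ℝ)-2*s)) (Ioi R) :=
    integrableOn_Ioi_rpow_of_lt (by linarith) hR0
  -- integrability of g on the pieces
  have hgi1 : IntegrableOn g (Ioc 0 R) := by
    apply Integrable.mono' hi1 hgc.aestronglyMeasurable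
    filter_upwards [ae_restrict_mem measurableSet_Ioc] with r hr
    rw [Real.norm_eq_abs, abs_of_nonneg (hgnn r hr.1)]
    exact bound1 r hr
  have hgi2 : IntegrableOn g (Ioi R) := by
    apply Integrable.mono' hi2 hgc.aestronglyMeasurable
    filter_upwards [ae_restrict_mem measurableSet_Ioi] with r hr
    rw [Real.norm_eq_abs, abs_of_nonneg (hgnn r (hR0.trans hr))]
    exact bound2 r hr
  -- split the integral
  have hsplit : ∫ r in Ioi (0:ℝ), g r
      = (∫ r in Ioc 0 R, g r) + ∫ r in Ioi R, g r := by
    rw [← Ioc_union_Ioi_eq_Ioi hR0.le]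
    exact setIntegral_union Ioc_disjoint_Ioi_same measurableSet_Ioi hgi1 hgi2
  -- compute/bound piece 1
  have hv1 : ∫ r in Ioc (0:ℝ) R, (ε^4 * r ^ ((3:ℝ)-2*s)) = ε ^ (2*s) * (1/(4-2*s)) := by
    rw [← intervalIntegral.integral_of_le hR0.le]
    rw [intervalIntegral.integral_const_mul]
    rw [integral_rpow (Or.inl (by linarith))]
    rw [Real.zero_rpow (by norm_num; linarith)]
    rw [hR, ← Real.rpow_neg_one ε, ← Real.rpow_mul hε0.le]
    rw [show ε^4 = ε ^ ((4:ℝ)) by rw [← Real.rpow_natCast ε 4]; norm_num]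
    rw [sub_zero, show (-1)*((3-2*s)+1) = -(4-2*s) by ring]
    rw [div_eq_mul_inv, ← mul_assoc, ← Real.rpow_add hε0]
    rw [show (4:ℝ) + -(4-2*s) = 2*s by ring]
    rw [show (3:ℝ)-2*s+1 = 4-2*s by ring]
    rw [one_div]
  have hb1 : ∫ r in Ioc (0:ℝ) R, g r ≤ ε ^ (2*s) * (1/(4-2*s)) := by
    rw [← hv1]
    exact setIntegral_mono_on hgi1 hi1 measurableSet_Ioc bound1
  -- compute/bound piece 2
  have hv2 : ∫ r in Ioi R, r ^ (-(1:ℝ)-2*s) = ε ^ (2*s) * (1/(2*s)) := by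
    rw [integral_Ioi_rpow_of_lt (by linarith) hR0]
    rw [show (-(1:ℝ)-2*s)+1 = -(2*s) by ring]
    rw [hR, ← Real.rpow_neg_one ε, ← Real.rpow_mul hε0.le]
    rw [show (-1)*(-(2*s)) = 2*s by ring]
    rw [neg_div, div_neg, neg_neg, div_eq_mul_inv, one_div]
  have hb2 : ∫ r in Ioi R, g r ≤ ε ^ (2*s) * (1/(2*s)) := by
    rw [← hv2]
    exact setIntegral_mono_on hgi2 hi2 measurableSet_Ioi bound2
  calc ∫ r in Ioi (0:ℝ), g r ≤ ε ^ (2*s) * (1/(4-2*s)) + ε ^ (2*s) * (1/(2*s)) := by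
        rw [hsplit]; exact add_le_add hb1 hb2
    _ = (1/(4-2*s) + 1/(2*s)) * ε ^ (2*s) := by ring

lemma F_bound (d : ℕ) (hd : 1 ≤ d) (s : ℝ) (hs0 : 0 < s) (hs1 : s < 1)
    (c : ℝ) (hc : 0 < c) (hMint : Integrable (M1 d s c))
    (ε : ℝ) (hε0 : 0 < ε) (hε1 : ε ≤ 1) :
    Integrable (fun v : EuclideanSpace ℝ (Fin d) =>
        c * (min 1 ((ε*‖v‖)^4) * (1+‖v‖^2) ^ (-((d:ℝ)+2*s)/2))) ∧
    ∫ v : EuclideanSpace ℝ (Fin d),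
        c * (min 1 ((ε*‖v‖)^4) * (1+‖v‖^2) ^ (-((d:ℝ)+2*s)/2))
      ≤ ((d:ℝ) * (volume (ball (0:EuclideanSpace ℝ (Fin d)) 1)).toReal * c
          * (1/(4-2*s) + 1/(2*s))) * ε ^ (2*s) := by
  haveI : Nonempty (Fin d) := Fin.pos_iff_nonempty.mp (by omega)
  haveI : Nontrivial (EuclideanSpace ℝ (Fin d)) := inferInstance
  set e : ℝ := -((d:ℝ)+2*s)/2 with he
  set f : ℝ → ℝ := fun r => c * (min 1 ((ε*r)^4) * (1+r^2) ^ e) with hf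
  have hfc : Continuous f := by
    apply continuous_const.mul
    apply (continuous_const.min (by continuity)).mul
    apply Continuous.rpow_const (by continuity)
    intro x; left; positivity
  have hfnn : ∀ r, 0 ≤ f r := by
    intro r
    have h1 : (0:ℝ) ≤ min 1 ((ε*r)^4) := le_min (by norm_num) (by positivity)
    have h2 : (0:ℝ) ≤ (1+r^2) ^ e := Real.rpow_nonneg (by positivity) e
    positivity
  have hFle : ∀ v : EuclideanSpace ℝ (Fin d), f ‖v‖ ≤ M1 d s c v := by
    intro v
    have h2 : (0:ℝ) ≤ (1+‖v‖^2) ^ e := Real.rpow_nonneg (by positivity) e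
    have : min 1 ((ε*‖v‖)^4) ≤ 1 := min_le_left _ _
    unfold M1
    rw [hf]
    have := mul_le_mul_of_nonneg_right this h2
    nlinarith [hfnn ‖v‖]
  have hFint : Integrable (fun v : EuclideanSpace ℝ (Fin d) => f ‖v‖) := by
    apply Integrable.mono' hMint (hfc.comp continuous_norm).aestronglyMeasurable
    filter_upwards with v
    show |f ‖v‖| ≤ M1 d s c v
    rw [abs_of_nonneg (hfnn _)]
    exact hFle v
  refine ⟨hFint, ?_⟩
  have hpolar := MeasureTheory.integral_fun_norm_addHaar
    (volume : Measure (EuclideanSpace ℝ (Fin d))) f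
  rw [finrank_euclideanSpace_fin] at hpolar
  have hV : (0:ℝ) ≤ (volume (ball (0:EuclideanSpace ℝ (Fin d)) 1)).toReal :=
    ENNReal.toReal_nonneg
  rw [hpolar, nsmul_eq_mul, smul_eq_mul]
  have hrad : ∫ y in Ioi (0:ℝ), y ^ (d-1) • f y
      = c * ∫ r in Ioi (0:ℝ), (r ^ (d-1) * (min 1 ((ε*r)^4) * (1+r^2) ^ e)) := by
    rw [← MeasureTheory.integral_const_mul]
    congr 1; funext y; rw [smul_eq_mul, hf]; ring
  rw [hrad]
  have := radial_bound d hd s hs0 hs1 ε hε0 hε1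
  rw [← he] at this
  calc (d:ℝ) * ((volume (ball (0:EuclideanSpace ℝ (Fin d)) 1)).toReal
        * (c * ∫ r in Ioi (0:ℝ), (r ^ (d-1) * (min 1 ((ε*r)^4) * (1+r^2) ^ e))))
      ≤ (d:ℝ) * ((volume (ball (0:EuclideanSpace ℝ (Fin d)) 1)).toReal
        * (c * ((1/(4-2*s) + 1/(2*s)) * ε ^ (2*s)))) := by
        apply mul_le_mul_of_nonneg_left _ (Nat.cast_nonneg d)
        apply mul_le_mul_of_nonneg_left _ hV
        exact mul_le_mul_of_nonneg_left this hc.le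
    _ = ((d:ℝ) * (volume (ball (0:EuclideanSpace ℝ (Fin d)) 1)).toReal * c
          * (1/(4-2*s) + 1/(2*s))) * ε ^ (2*s) := by ring

set_option maxHeartbeats 1000000 in
/-- For mean-zero `h` with finite `L²(M₁⁻¹)` norm,
`|∫ h(v) ⟨εv⟩⁻² dv| ≤ C ε^s (∫ h² M₁⁻¹)^{1/2}` uniformly for `ε ∈ (0,1]`. -/
theorem twisted_density_micro_bound
    (d : ℕ) (hd : 1 ≤ d) (s : ℝ) (hs0 : 0 < s) (hs1 : s < 1)
    (c : ℝ) (hc : 0 < c) (hM : ∫ v, M1 d s c v = 1) :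
    ∃ C > 0, ∀ ε ∈ Set.Ioc (0 : ℝ) 1, ∀ h : EuclideanSpace ℝ (Fin d) → ℝ,
      Integrable h → (∫ v, h v = 0) →
      Integrable (fun v => h v ^ 2 * (M1 d s c v)⁻¹) →
      |∫ v, h v * (1 + ε ^ 2 * ‖v‖ ^ 2)⁻¹| ≤
        C * ε ^ s * Real.sqrt (∫ v, h v ^ 2 * (M1 d s c v)⁻¹) := by
  have hMint : Integrable (M1 d s c) := by
    by_contra hn
    rw [integral_undef hn] at hM
    norm_num at hM
  have hMpos : ∀ v : EuclideanSpace ℝ (Fin d), 0 < M1 d s c v := by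
    intro v
    exact mul_pos hc (Real.rpow_pos_of_pos (by positivity) _)
  have hMc : Continuous (M1 d s c) := by
    apply continuous_const.mul
    apply Continuous.rpow_const (by continuity)
    intro v; left; positivity
  set V : ℝ := (volume (ball (0:EuclideanSpace ℝ (Fin d)) 1)).toReal with hV
  set K : ℝ := (d:ℝ) * V * c * (1/(4-2*s) + 1/(2*s)) with hKdef
  have h42 : (0:ℝ) < 4 - 2*s := by linarith
  have hK0 : 0 ≤ K := by
    have h1 : (0:ℝ) ≤ 1/(4-2*s) + 1/(2*s) := by positivity
    have h2 : (0:ℝ) ≤ V := ENNReal.toReal_nonneg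
    positivity
  refine ⟨Real.sqrt K + 1, by positivity, ?_⟩
  rintro ε ⟨hε0, hε1⟩ h hh hmean hI
  set e : ℝ := -((d:ℝ)+2*s)/2 with he
  set I : ℝ := ∫ v, h v ^ 2 * (M1 d s c v)⁻¹ with hIdef
  have hI0 : 0 ≤ I := by
    apply integral_nonneg
    intro v
    have := (hMpos v).le
    positivity
  set p : EuclideanSpace ℝ (Fin d) → ℝ := fun v : EuclideanSpace ℝ (Fin d) => (1 + ε ^ 2 * ‖v‖ ^ 2)⁻¹ with hp
  set q : EuclideanSpace ℝ (Fin d) → ℝ := fun v => 1 - p v with hq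
  have hdenpos : ∀ v : EuclideanSpace ℝ (Fin d), (0:ℝ) < 1 + ε ^ 2 * ‖v‖ ^ 2 := fun v => by positivity
  have hp0 : ∀ v, 0 ≤ p v := fun v => inv_nonneg.mpr (hdenpos v).le
  have hp1 : ∀ v, p v ≤ 1 := by
    intro v
    rw [hp]
    apply inv_le_one_of_one_le₀
    nlinarith [sq_nonneg (ε * ‖v‖)]
  have hq0 : ∀ v, 0 ≤ q v := fun v => by simp [hq, hp1 v]
  have hq1 : ∀ v, q v ≤ 1 := fun v => by
    have := hp0 v; simp [hq]; linarith
  have hqle : ∀ v : EuclideanSpace ℝ (Fin d), q v ≤ ε^2 * ‖v‖^2 := by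
    intro v
    have hx : (0:ℝ) ≤ ε^2*‖v‖^2 := by positivity
    have hd1 := hdenpos v
    have : q v = (ε^2*‖v‖^2) / (1 + ε^2*‖v‖^2) := by
      rw [hq, hp]; field_simp; ring
    rw [this]
    exact div_le_self hx (by linarith)
  have hqsq : ∀ v : EuclideanSpace ℝ (Fin d), q v ^ 2 ≤ min 1 ((ε*‖v‖)^4) := by
    intro v
    refine le_min (by nlinarith [hq0 v, hq1 v]) ?_
    calc q v ^ 2 ≤ (ε^2*‖v‖^2)^2 := by nlinarith [hq0 v, hqle v]
      _ = (ε*‖v‖)^4 := by ring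
  -- integrability of h * p
  have hpcont : Continuous p :=
    (continuous_const.add (continuous_const.mul (continuous_norm.pow 2))).inv₀
      fun v => (hdenpos v).ne'
  have hqcont : Continuous q := continuous_const.sub hpcont
  have hhp : Integrable (fun v => h v * p v) := by
    have := hh.bdd_mul hpcont.aestronglyMeasurable
      (c := 1) (Filter.Eventually.of_forall fun v => by rw [Real.norm_eq_abs, abs_of_nonneg (hp0 v)]; exact hp1 v)
    simpa [mul_comm] using this
  -- reduce to ∫ |h| q
  have habs : |∫ v, h v * p v| ≤ ∫ v, |h v| * q v := by
    have hD : ∫ v, h v * p v = ∫ v, (h v * p v - h v) := by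
      rw [integral_sub hhp hh, hmean, sub_zero]
    rw [hD]
    calc |∫ v, (h v * p v - h v)| = ‖∫ v, (h v * p v - h v)‖ := (Real.norm_eq_abs _).symm
      _ ≤ ∫ v, ‖h v * p v - h v‖ := norm_integral_le_integral_norm _
      _ = ∫ v, |h v| * q v := by
          apply integral_congr_ae
          filter_upwards with v
          have hneg : h v * p v - h v = -(h v * q v) := by rw [hq]; ring
          rw [Real.norm_eq_abs, hneg, abs_neg, abs_mul, abs_of_nonneg (hq0 v)]
  -- Cauchy-Schwarz setup
  obtain ⟨hGint, hGbd⟩ := F_bound d hd s hs0 hs1 c hc hMint ε hε0 hε1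
  set f1 : EuclideanSpace ℝ (Fin d) → ℝ≥0∞ :=
    fun v => ENNReal.ofReal (|h v| / Real.sqrt (M1 d s c v)) with hf1
  set f2 : EuclideanSpace ℝ (Fin d) → ℝ≥0∞ :=
    fun v => ENNReal.ofReal (q v * Real.sqrt (M1 d s c v)) with hf2
  have hsqMc : Continuous (fun v : EuclideanSpace ℝ (Fin d) => Real.sqrt (M1 d s c v)) :=
    Real.continuous_sqrt.comp hMc
  have hm1 : AEMeasurable f1 volume :=
    ENNReal.measurable_ofReal.comp_aemeasurable
      (hh.abs.aemeasurable.div hsqMc.measurable.aemeasurable)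
  have hm2 : AEMeasurable f2 volume :=
    ENNReal.measurable_ofReal.comp_aemeasurable
      (hqcont.mul hsqMc).measurable.aemeasurable
  have hconj : Real.HolderConjugate 2 2 := Real.HolderConjugate.two_two
  have hCS := ENNReal.lintegral_mul_le_Lp_mul_Lq volume hconj hm1 hm2
  have hfg : ∀ v, (f1 * f2) v = ENNReal.ofReal (|h v| * q v) := by
    intro v
    have hs' : Real.sqrt (M1 d s c v) ≠ 0 := ne_of_gt (Real.sqrt_pos.mpr (hMpos v))
    show f1 v * f2 v = _
    rw [hf1, hf2, ← ENNReal.ofReal_mul (div_nonneg (abs_nonneg _) (Real.sqrt_nonneg _))]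
    congr 1
    field_simp
  have hone : ((2:ℝ)) = ((2:ℕ):ℝ) := by norm_num
  have h1sq : ∀ v, f1 v ^ (2:ℝ) = ENNReal.ofReal (h v ^ 2 * (M1 d s c v)⁻¹) := by
    intro v
    rw [hf1, ENNReal.ofReal_rpow_of_nonneg (div_nonneg (abs_nonneg _) (Real.sqrt_nonneg _))
      (by norm_num)]
    congr 1
    rw [hone, Real.rpow_natCast, div_pow, sq_abs, Real.sq_sqrt (hMpos v).le, div_eq_mul_inv]
  have h2sq : ∀ v, f2 v ^ (2:ℝ) = ENNReal.ofReal (q v ^ 2 * M1 d s c v) := by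
    intro v
    rw [hf2, ENNReal.ofReal_rpow_of_nonneg (mul_nonneg (hq0 v) (Real.sqrt_nonneg _))
      (by norm_num)]
    congr 1
    rw [hone, Real.rpow_natCast, mul_pow, Real.sq_sqrt (hMpos v).le]
  have hA : ∫⁻ v, f1 v ^ (2:ℝ) = ENNReal.ofReal I := by
    simp_rw [h1sq]
    rw [← ofReal_integral_eq_lintegral_ofReal hI
      (Filter.Eventually.of_forall fun v => by
        have := (hMpos v).le; positivity)]
  have hB : ∫⁻ v, f2 v ^ (2:ℝ) ≤ ENNReal.ofReal (K * ε ^ (2*s)) := by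
    calc ∫⁻ v, f2 v ^ (2:ℝ)
        ≤ ∫⁻ v, ENNReal.ofReal (c * (min 1 ((ε*‖v‖)^4) * (1+‖v‖^2) ^ e)) := by
          apply lintegral_mono
          intro v
          dsimp only
          rw [h2sq v]
          apply ENNReal.ofReal_le_ofReal
          have w0 : (0:ℝ) ≤ (1+‖v‖^2) ^ e := Real.rpow_nonneg (by positivity) e
          calc q v ^ 2 * M1 d s c v = c * (q v ^ 2 * (1+‖v‖^2) ^ e) := by
                unfold M1; rw [← he]; ring
            _ ≤ c * (min 1 ((ε*‖v‖)^4) * (1+‖v‖^2) ^ e) := by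
                apply mul_le_mul_of_nonneg_left _ hc.le
                exact mul_le_mul_of_nonneg_right (hqsq v) w0
      _ = ENNReal.ofReal (∫ v : EuclideanSpace ℝ (Fin d),
            c * (min 1 ((ε*‖v‖)^4) * (1+‖v‖^2) ^ e)) := by
          exact (ofReal_integral_eq_lintegral_ofReal (by rw [he]; exact hGint)
            (Filter.Eventually.of_forall fun v => by
              have h1 : (0:ℝ) ≤ min 1 ((ε*‖v‖)^4) := le_min (by norm_num) (by positivity)
              have h2 : (0:ℝ) ≤ (1+‖v‖^2) ^ e := Real.rpow_nonneg (by positivity) e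
              positivity)).symm
      _ ≤ ENNReal.ofReal (K * ε ^ (2*s)) := by
          apply ENNReal.ofReal_le_ofReal
          rw [he]
          exact hGbd
  -- assemble
  have hεs0 : (0:ℝ) ≤ ε ^ s := (Real.rpow_pos_of_pos hε0 s).le
  have hsq2s : Real.sqrt (ε ^ (2*s)) = ε ^ s := by
    rw [show (2:ℝ)*s = s*2 by ring, Real.rpow_mul hε0.le, hone, Real.rpow_natCast,
      Real.sqrt_sq (Real.rpow_nonneg hε0.le s)]
  have hle1 : ∫⁻ v, ENNReal.ofReal (|h v| * q v)
      ≤ ENNReal.ofReal (Real.sqrt I * (Real.sqrt K * ε ^ s)) := by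
    calc ∫⁻ v, ENNReal.ofReal (|h v| * q v) = ∫⁻ v, (f1 * f2) v := by
          simp_rw [hfg]
      _ ≤ (∫⁻ v, f1 v ^ (2:ℝ)) ^ ((1:ℝ)/2) * (∫⁻ v, f2 v ^ (2:ℝ)) ^ ((1:ℝ)/2) := hCS
      _ ≤ (ENNReal.ofReal I) ^ ((1:ℝ)/2) * (ENNReal.ofReal (K * ε ^ (2*s))) ^ ((1:ℝ)/2) := by
          rw [hA]
          exact mul_le_mul' le_rfl (ENNReal.rpow_le_rpow hB (by norm_num))
      _ = ENNReal.ofReal (I ^ ((1:ℝ)/2) * (K * ε ^ (2*s)) ^ ((1:ℝ)/2)) := by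
          rw [ENNReal.ofReal_rpow_of_nonneg hI0 (by norm_num),
            ENNReal.ofReal_rpow_of_nonneg (by positivity) (by norm_num),
            ← ENNReal.ofReal_mul (Real.rpow_nonneg hI0 _)]
      _ = ENNReal.ofReal (Real.sqrt I * (Real.sqrt K * ε ^ s)) := by
          rw [← Real.sqrt_eq_rpow, ← Real.sqrt_eq_rpow, Real.sqrt_mul hK0, hsq2s]
  have hlhs : ∫ v, |h v| * q v
      = (∫⁻ v, ENNReal.ofReal (|h v| * q v)).toReal := by
    apply integral_eq_lintegral_of_nonneg_ae
    · exact Filter.Eventually.of_forall fun v => mul_nonneg (abs_nonneg _) (hq0 v)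
    · exact (hh.abs.aestronglyMeasurable.mul hqcont.aestronglyMeasurable)
  have hfinal : ∫ v, |h v| * q v ≤ Real.sqrt I * (Real.sqrt K * ε ^ s) := by
    rw [hlhs]
    exact ENNReal.toReal_le_of_le_ofReal
      (by positivity) hle1
  calc |∫ v, h v * (1 + ε ^ 2 * ‖v‖ ^ 2)⁻¹| ≤ ∫ v, |h v| * q v := habs
    _ ≤ Real.sqrt I * (Real.sqrt K * ε ^ s) := hfinal
    _ ≤ (Real.sqrt K + 1) * ε ^ s * Real.sqrt I := by
        nlinarith [Real.sqrt_nonneg I, Real.sqrt_nonneg K, hεs0]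
end

section
/- Let d ≥ 1, s ∈ (0,1), and let Ω ⊆ ℝ^d be a measurable set. There exists C > 0 depending only on d and s such that for all ε ∈ (0,1] and every measurable f : Ω × ℝ^d → ℝ with ∫_Ω ∫_{ℝ^d} f(x,v)² M₁(v)^{-1} dv dx < ∞, one has ∫_Ω ‖∫_{ℝ^d} v f(x,v) (1+ε²|v|²)^{-1} dv‖² dx ≤ C ε^{2s−2} ∫_Ω ∫_{ℝ^d} f(x,v)² M₁(v)^{-1} dv dx, where the inner integral is the ℝ^d-valued integral of v f(x,v)(1+ε²|v|²)^{-1} and ‖·‖ is the Euclidean norm. -/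
open MeasureTheory Real
open scoped ENNReal NNReal

open Set Metric in
/-- Finiteness of `∫_{ball 0 1} ‖x‖^p` in `ℝ^d` for `p > -d`. -/
lemma aux_lintegral_ball (d : ℕ) {p : ℝ} (hp : -(d : ℝ) < p) :
    ∫⁻ x : EuclideanSpace ℝ (Fin d) in ball 0 1, ENNReal.ofReal (‖x‖ ^ p) < ∞ := by
  rcases le_or_gt 0 p with hp0 | hp0
  · refine lt_of_le_of_lt
      (setLIntegral_mono' measurableSet_ball (g := fun _ => 1) fun x hx => ?_) ?_
    · exact ENNReal.ofReal_le_one.2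
        (Real.rpow_le_one (norm_nonneg _) (le_of_lt (mem_ball_zero_iff.1 hx)) hp0)
    · simpa using measure_ball_lt_top (x := (0 : EuclideanSpace ℝ (Fin d))) (r := 1)
  · have hpne : p ≠ 0 := hp0.ne
    set μ := volume.restrict (ball (0 : EuclideanSpace ℝ (Fin d)) 1) with hμ
    have f_nn : 0 ≤ᵐ[μ] fun x : EuclideanSpace ℝ (Fin d) => ‖x‖ ^ p :=
      Filter.Eventually.of_forall fun x => Real.rpow_nonneg (norm_nonneg _) _
    have f_m : AEMeasurable (fun x : EuclideanSpace ℝ (Fin d) => ‖x‖ ^ p) μ := by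
      apply Measurable.aemeasurable; fun_prop
    rw [lintegral_eq_lintegral_meas_le μ f_nn f_m]
    have hB : volume (ball (0 : EuclideanSpace ℝ (Fin d)) 1) < ∞ := measure_ball_lt_top
    calc
      ∫⁻ t in Ioi 0, μ {a : EuclideanSpace ℝ (Fin d) | t ≤ ‖a‖ ^ p}
          ≤ ∫⁻ t in Ioc 0 1 ∪ Ioi 1, μ {a : EuclideanSpace ℝ (Fin d) | t ≤ ‖a‖ ^ p} :=
        lintegral_mono_set Ioi_subset_Ioc_union_Ioi
      _ ≤ (∫⁻ t in Ioc 0 1, μ {a : EuclideanSpace ℝ (Fin d) | t ≤ ‖a‖ ^ p}) +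
          ∫⁻ t in Ioi 1, μ {a : EuclideanSpace ℝ (Fin d) | t ≤ ‖a‖ ^ p} :=
        lintegral_union_le _ _ _
      _ < ∞ := by
        refine ENNReal.add_lt_top.2 ⟨?_, ?_⟩
        · refine lt_of_le_of_lt (setLIntegral_mono' measurableSet_Ioc
            (g := fun _ => volume (ball (0 : EuclideanSpace ℝ (Fin d)) 1)) fun t _ => ?_) ?_
          · refine le_trans (measure_mono (Set.subset_univ _)) ?_
            rw [hμ, Measure.restrict_apply_univ]
          · rw [setLIntegral_const]
            exact ENNReal.mul_lt_top hB (by simp)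
        · have hd0 : (0 : ℝ) < d := by
            by_contra h
            push_neg at h
            have : (d : ℝ) = 0 := le_antisymm h (Nat.cast_nonneg d)
            rw [this] at hp; simp at hp; linarith
          have hexp : p⁻¹ * d < -1 := by
            have hpinv : p⁻¹ < 0 := inv_lt_zero.2 hp0
            have h1 : (0 : ℝ) < p + d := by linarith
            have h2 : (0 : ℝ) < -p⁻¹ := by linarith
            have h3 := mul_pos h1 h2
            have h4 : p * p⁻¹ = 1 := mul_inv_cancel₀ hpne
            nlinarith
          refine lt_of_le_of_lt (setLIntegral_mono' measurableSet_Ioi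
            (g := fun t => ENNReal.ofReal (t ^ (p⁻¹ * (d : ℕ))) *
              volume (ball (0 : EuclideanSpace ℝ (Fin d)) 1)) fun t ht => ?_) ?_
          · have ht1 : (1 : ℝ) < t := ht
            have ht0 : (0 : ℝ) < t := lt_trans one_pos ht1
            have hsub : {a : EuclideanSpace ℝ (Fin d) | t ≤ ‖a‖ ^ p} ⊆
                closedBall 0 (t ^ p⁻¹) := by
              intro a ha
              rw [mem_closedBall_zero_iff]
              rcases eq_or_lt_of_le (norm_nonneg a) with h0 | h0
              · rw [← h0]; exact Real.rpow_nonneg ht0.le _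
              · have key := Real.rpow_le_rpow_of_nonpos ht0 ha (inv_nonpos.2 hp0.le)
                rwa [← Real.rpow_mul (norm_nonneg a), mul_inv_cancel₀ hpne,
                  Real.rpow_one] at key
            refine le_trans (le_trans (measure_mono hsub)
              (Measure.restrict_apply_le _ _)) ?_
            rw [Measure.addHaar_closedBall _ _ (Real.rpow_nonneg ht0.le _),
              finrank_euclideanSpace_fin]
            refine le_of_eq ?_
            congr 1
            rw [← Real.rpow_natCast (t ^ p⁻¹) d, ← Real.rpow_mul ht0.le]
          · rw [lintegral_mul_const' _ _ hB.ne]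
            refine ENNReal.mul_lt_top ?_ hB
            refine IntegrableOn.setLIntegral_lt_top ?_
            have : p⁻¹ * ((d : ℕ) : ℝ) < -1 := by exact_mod_cast hexp
            exact integrableOn_Ioi_rpow_of_lt this one_pos

open Set Metric in
/-- Integrability of `‖w‖^p (1+‖w‖²)⁻²` on `ℝ^d` for `-d < p < 4 - d`. -/
lemma aux_integrable (d : ℕ) {p : ℝ} (hp : -(d : ℝ) < p) (hp4 : p < 4 - d) :
    Integrable (fun w : EuclideanSpace ℝ (Fin d) => ‖w‖ ^ p * ((1 + ‖w‖ ^ 2) ^ 2)⁻¹) := by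
  have hmeas : Measurable
      (fun w : EuclideanSpace ℝ (Fin d) => ‖w‖ ^ p * ((1 + ‖w‖ ^ 2) ^ 2)⁻¹) := by fun_prop
  have hnn : ∀ w : EuclideanSpace ℝ (Fin d),
      0 ≤ ‖w‖ ^ p * ((1 + ‖w‖ ^ 2) ^ 2)⁻¹ := fun w => by positivity
  refine ⟨hmeas.aestronglyMeasurable, ?_⟩
  rw [HasFiniteIntegral, lintegral_enorm_of_nonneg hnn]
  rw [← lintegral_add_compl (μ := volume)
    (fun w : EuclideanSpace ℝ (Fin d) =>
      ENNReal.ofReal (‖w‖ ^ p * ((1 + ‖w‖ ^ 2) ^ 2)⁻¹))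
    (measurableSet_ball (x := (0 : EuclideanSpace ℝ (Fin d))) (ε := 1))]
  refine ENNReal.add_lt_top.2 ⟨?_, ?_⟩
  · refine lt_of_le_of_lt (setLIntegral_mono' measurableSet_ball fun w _ => ?_)
      (aux_lintegral_ball d hp)
    refine ENNReal.ofReal_le_ofReal ?_
    have h1 : ((1 + ‖w‖ ^ 2) ^ 2 : ℝ)⁻¹ ≤ 1 := by
      rw [inv_le_one_iff₀]
      right
      nlinarith [sq_nonneg ‖w‖]
    calc ‖w‖ ^ p * ((1 + ‖w‖ ^ 2) ^ 2)⁻¹ ≤ ‖w‖ ^ p * 1 :=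
          mul_le_mul_of_nonneg_left h1 (Real.rpow_nonneg (norm_nonneg _) _)
      _ = ‖w‖ ^ p := mul_one _
  · have hI : Integrable (fun w : EuclideanSpace ℝ (Fin d) =>
        (2 : ℝ) ^ (|p| / 2) * ((1 : ℝ) + ‖w‖ ^ 2) ^ (-(4 - p) / 2)) := by
      refine Integrable.const_mul ?_ _
      refine integrable_rpow_neg_one_add_norm_sq ?_
      rw [finrank_euclideanSpace_fin]
      linarith
    have hInn : 0 ≤ᵐ[volume] fun w : EuclideanSpace ℝ (Fin d) =>
        (2 : ℝ) ^ (|p| / 2) * ((1 : ℝ) + ‖w‖ ^ 2) ^ (-(4 - p) / 2) :=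
      Filter.Eventually.of_forall fun w => by positivity
    refine lt_of_le_of_lt (setLIntegral_mono' (g := fun w => ENNReal.ofReal ((2 : ℝ) ^ (|p| / 2) * ((1 : ℝ) + ‖w‖ ^ 2) ^ (-(4 - p) / 2))) measurableSet_ball.compl fun w hw => ?_) ?_
    · -- pointwise bound on the complement of the ball
      have hw1 : (1 : ℝ) ≤ ‖w‖ := by
        have := mem_ball_zero_iff.not.1 hw
        push_neg at this
        exact this
      have hw0 : (0 : ℝ) < ‖w‖ := lt_of_lt_of_le one_pos hw1
      have hb0 : (0 : ℝ) < 1 + ‖w‖ ^ 2 := by positivity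
      refine ENNReal.ofReal_le_ofReal ?_
      have e1 : (‖w‖ ^ 2 : ℝ) ^ (p / 2) = ‖w‖ ^ p := by
        rw [← Real.rpow_two, ← Real.rpow_mul (norm_nonneg w)]
        congr 1
        ring
      have key : ‖w‖ ^ p ≤ (2 : ℝ) ^ (|p| / 2) * (1 + ‖w‖ ^ 2) ^ (p / 2) := by
        rcases le_or_gt 0 p with hp0 | hp0
        · rw [abs_of_nonneg hp0, ← e1]
          have h2 : (‖w‖ ^ 2 : ℝ) ^ (p / 2) ≤ (1 + ‖w‖ ^ 2) ^ (p / 2) :=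
            Real.rpow_le_rpow (by positivity) (by linarith) (by positivity)
          have h3 : (1 : ℝ) ≤ (2 : ℝ) ^ (p / 2) :=
            Real.one_le_rpow one_le_two (by positivity)
          exact h2.trans (le_mul_of_one_le_left (Real.rpow_nonneg hb0.le _) h3)
        · rw [abs_of_neg hp0, ← e1]
          have h2 : (1 : ℝ) + ‖w‖ ^ 2 ≤ 2 * ‖w‖ ^ 2 := by nlinarith
          have h3 : ((1 : ℝ) + ‖w‖ ^ 2) ^ (p / 2) ≥ (2 * ‖w‖ ^ 2) ^ (p / 2) :=
            Real.rpow_le_rpow_of_nonpos (by positivity) h2 (by linarith)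
          have h4 : ((2 : ℝ) * ‖w‖ ^ 2) ^ (p / 2) =
              (2 : ℝ) ^ (p / 2) * (‖w‖ ^ 2) ^ (p / 2) :=
            Real.mul_rpow (by norm_num) (by positivity)
          have h5 : (‖w‖ ^ 2 : ℝ) ^ (p / 2) =
              (2 : ℝ) ^ (-p / 2) * ((2 : ℝ) * ‖w‖ ^ 2) ^ (p / 2) := by
            rw [h4, ← mul_assoc, ← Real.rpow_add two_pos,
              show -p / 2 + p / 2 = 0 by ring, Real.rpow_zero, one_mul]
          rw [h5]
          have h6 : (0 : ℝ) ≤ (2 : ℝ) ^ (-p / 2) := Real.rpow_nonneg (by norm_num) _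
          have := mul_le_mul_of_nonneg_left h3 h6
          calc (2 : ℝ) ^ (-p / 2) * ((2 : ℝ) * ‖w‖ ^ 2) ^ (p / 2)
              ≤ (2 : ℝ) ^ (-p / 2) * (1 + ‖w‖ ^ 2) ^ (p / 2) := this
            _ = (2 : ℝ) ^ (-p / 2) * (1 + ‖w‖ ^ 2) ^ (p / 2) := rfl
      have e2 : (((1 : ℝ) + ‖w‖ ^ 2) ^ 2)⁻¹ = ((1 : ℝ) + ‖w‖ ^ 2) ^ (-(2 : ℝ)) := by
        rw [show ((2:ℝ)) = ((2:ℕ):ℝ) by norm_num, Real.rpow_neg hb0.le,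
          Real.rpow_natCast]
      have e3 : ((1 : ℝ) + ‖w‖ ^ 2) ^ (p / 2) * ((1 : ℝ) + ‖w‖ ^ 2) ^ (-(2 : ℝ)) =
          ((1 : ℝ) + ‖w‖ ^ 2) ^ (-(4 - p) / 2) := by
        rw [← Real.rpow_add hb0]
        congr 1
        ring
      calc ‖w‖ ^ p * ((1 + ‖w‖ ^ 2) ^ 2)⁻¹
          ≤ ((2 : ℝ) ^ (|p| / 2) * (1 + ‖w‖ ^ 2) ^ (p / 2)) * ((1 + ‖w‖ ^ 2) ^ 2)⁻¹ :=
            mul_le_mul_of_nonneg_right key (by positivity)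
        _ = (2 : ℝ) ^ (|p| / 2) * ((1 + ‖w‖ ^ 2) ^ (p / 2) * ((1 + ‖w‖ ^ 2) ^ 2)⁻¹) := by
            ring
        _ = (2 : ℝ) ^ (|p| / 2) * ((1 : ℝ) + ‖w‖ ^ 2) ^ (-(4 - p) / 2) := by
            rw [e2, e3]
    · refine lt_of_le_of_lt (setLIntegral_le_lintegral _ _) ?_
      rw [← ofReal_integral_eq_lintegral_ofReal hI hInn]
      exact ENNReal.ofReal_lt_top

/-- Bound on the twisted first moment `J^ε[f](x) = ∫ v f(x,v) ⟨εv⟩⁻² dv`: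
`∫_Ω ‖J^ε[f](x)‖² dx ≤ C ε^{2s−2} ∫_Ω ∫ f² M₁⁻¹ dv dx` uniformly for `ε ∈ (0,1]`. -/
theorem twisted_first_moment_L2_bound
    (d : ℕ) (hd : 1 ≤ d) (s : ℝ) (hs0 : 0 < s) (hs1 : s < 1)
    (c : ℝ) (hc : 0 < c) (hM : ∫ v, M1 d s c v = 1)
    (Ω : Set (EuclideanSpace ℝ (Fin d))) (hΩ : MeasurableSet Ω) :
    ∃ C > 0, ∀ ε ∈ Set.Ioc (0 : ℝ) 1,
      ∀ f : EuclideanSpace ℝ (Fin d) → EuclideanSpace ℝ (Fin d) → ℝ,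
      Measurable (Function.uncurry f) →
      Integrable
        (fun p : EuclideanSpace ℝ (Fin d) × EuclideanSpace ℝ (Fin d) =>
          f p.1 p.2 ^ 2 * (M1 d s c p.2)⁻¹) ((volume.restrict Ω).prod volume) →
      ∫ x in Ω, ‖∫ v, ((1 + ε ^ 2 * ‖v‖ ^ 2)⁻¹ * f x v) • v‖ ^ 2 ≤
        C * ε ^ (2 * s - 2) * ∫ x in Ω, ∫ v, f x v ^ 2 * (M1 d s c v)⁻¹ := by
  have hMpos : ∀ v : EuclideanSpace ℝ (Fin d), 0 < M1 d s c v := fun v => by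
    have : (0 : ℝ) < (1 + ‖v‖ ^ 2) ^ (-((d : ℝ) + 2 * s) / 2) :=
      Real.rpow_pos_of_pos (by positivity) _
    exact mul_pos hc this
  have hMmeas : Measurable (M1 d s c) := by
    unfold M1; fun_prop
  set p : ℝ := 2 - (d : ℝ) - 2 * s with hpdef
  have hp1 : -(d : ℝ) < p := by rw [hpdef]; linarith
  have hp4 : p < 4 - d := by rw [hpdef]; linarith
  set g : EuclideanSpace ℝ (Fin d) → ℝ :=
    fun w => ‖w‖ ^ p * ((1 + ‖w‖ ^ 2) ^ 2)⁻¹ with hgdef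
  have hgint : Integrable g := aux_integrable d hp1 hp4
  set I : ℝ := ∫ w : EuclideanSpace ℝ (Fin d), g w with hIdef
  have hI0 : 0 ≤ I := integral_nonneg fun w => by
    rw [hgdef]; positivity
  refine ⟨c * I + 1, by positivity, ?_⟩
  rintro ε ⟨hε0, hε1⟩ f hfm hfint
  have hεpow : (0 : ℝ) < ε ^ (2 * s - 2) := Real.rpow_pos_of_pos hε0 _
  set κ : ℝ := c * I * ε ^ (2 * s - 2) with hκdef
  have hκ0 : 0 ≤ κ := by positivity
  -- The kernel bound: `∫ ‖v‖² ⟨εv⟩⁻⁴ M dv ≤ κ`.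
  have hG : Integrable (fun v : EuclideanSpace ℝ (Fin d) =>
      (c * ε ^ ((d : ℝ) + 2 * s - 2)) * g (ε • v)) := by
    refine Integrable.const_mul ?_ _
    exact (integrable_comp_smul_iff volume g hε0.ne').2 hgint
  have hGnn : 0 ≤ᵐ[volume] fun v : EuclideanSpace ℝ (Fin d) =>
      (c * ε ^ ((d : ℝ) + 2 * s - 2)) * g (ε • v) := by
    refine Filter.Eventually.of_forall fun v => ?_
    have : 0 ≤ g (ε • v) := by rw [hgdef]; positivity
    positivity
  have hGval : ∫ v : EuclideanSpace ℝ (Fin d),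
      (c * ε ^ ((d : ℝ) + 2 * s - 2)) * g (ε • v) = κ := by
    rw [integral_const_mul]
    have hcs := MeasureTheory.Measure.integral_comp_smul
      (volume : Measure (EuclideanSpace ℝ (Fin d))) g ε
    rw [hcs, finrank_euclideanSpace_fin, smul_eq_mul, ← hIdef]
    have habs : |((ε ^ d : ℝ))⁻¹| = (ε ^ d)⁻¹ :=
      abs_of_pos (by positivity)
    rw [habs, hκdef]
    have hpow : ε ^ ((d : ℝ) + 2 * s - 2) * (ε ^ d)⁻¹ = ε ^ (2 * s - 2) := by
      rw [← Real.rpow_natCast ε d, ← Real.rpow_neg hε0.le, ← Real.rpow_add hε0]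
      congr 1
      ring
    calc c * ε ^ ((d : ℝ) + 2 * s - 2) * ((ε ^ d)⁻¹ * I)
        = c * I * (ε ^ ((d : ℝ) + 2 * s - 2) * (ε ^ d)⁻¹) := by ring
      _ = c * I * ε ^ (2 * s - 2) := by rw [hpow]
  have hptw : ∀ v : EuclideanSpace ℝ (Fin d),
      ENNReal.ofReal ((‖v‖ * ((1 + ε ^ 2 * ‖v‖ ^ 2)⁻¹ *
          M1 d s c v ^ ((1 : ℝ) / 2))) ^ 2) ≤
      ENNReal.ofReal ((c * ε ^ ((d : ℝ) + 2 * s - 2)) * g (ε • v)) := by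
    intro v
    rcases eq_or_ne v 0 with rfl | hv
    · have : ‖(0 : EuclideanSpace ℝ (Fin d))‖ = 0 := norm_zero
      rw [this]
      simp only [zero_mul, ne_eq, OfNat.ofNat_ne_zero, not_false_eq_true, zero_pow,
        ENNReal.ofReal_zero]
      exact zero_le
    · apply ENNReal.ofReal_le_ofReal
      have hr : (0 : ℝ) < ‖v‖ := norm_pos_iff.2 hv
      have hM0 : (0 : ℝ) < M1 d s c v := hMpos v
      have hsm : ‖ε • v‖ = ε * ‖v‖ := by
        rw [norm_smul, Real.norm_eq_abs, abs_of_pos hε0]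
      rw [hgdef]
      simp only []
      rw [hsm]
      have hbase : (0 : ℝ) < 1 + ε ^ 2 * ‖v‖ ^ 2 := by positivity
      have hMhalf : (M1 d s c v ^ ((1 : ℝ) / 2)) ^ 2 = M1 d s c v := by
        rw [← Real.rpow_two, ← Real.rpow_mul hM0.le,
          show (1 : ℝ) / 2 * 2 = 1 by norm_num, Real.rpow_one]
      have hL : (‖v‖ * ((1 + ε ^ 2 * ‖v‖ ^ 2)⁻¹ * M1 d s c v ^ ((1 : ℝ) / 2))) ^ 2
          = (‖v‖ ^ 2 * M1 d s c v) * ((1 + ε ^ 2 * ‖v‖ ^ 2) ^ 2)⁻¹ := by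
        rw [mul_pow, mul_pow, hMhalf, inv_pow]
        ring
      rw [hL]
      have hR : (1 + (ε * ‖v‖) ^ 2 : ℝ) ^ 2 = (1 + ε ^ 2 * ‖v‖ ^ 2) ^ 2 := by ring
      rw [hR]
      have hRR : c * ε ^ ((d : ℝ) + 2 * s - 2) *
          ((ε * ‖v‖) ^ p * ((1 + ε ^ 2 * ‖v‖ ^ 2) ^ 2)⁻¹)
          = (c * (ε ^ ((d : ℝ) + 2 * s - 2) * (ε * ‖v‖) ^ p)) *
            ((1 + ε ^ 2 * ‖v‖ ^ 2) ^ 2)⁻¹ := by ring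
      rw [hRR]
      refine mul_le_mul_of_nonneg_right ?_ (by positivity)
      -- core inequality: ‖v‖² M₁ ≤ c ε^{d+2s-2} (ε‖v‖)^p
      have hmulr : (ε * ‖v‖) ^ p = ε ^ p * ‖v‖ ^ p :=
        Real.mul_rpow hε0.le hr.le
      have hee : ε ^ ((d : ℝ) + 2 * s - 2) * ε ^ p = 1 := by
        rw [← Real.rpow_add hε0]
        have : (d : ℝ) + 2 * s - 2 + p = 0 := by rw [hpdef]; ring
        rw [this, Real.rpow_zero]
      have e1 : ((‖v‖ : ℝ) ^ 2) ^ (-((d : ℝ) + 2 * s) / 2) =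
          ‖v‖ ^ (-((d : ℝ) + 2 * s)) := by
        rw [← Real.rpow_two, ← Real.rpow_mul hr.le]
        congr 1
        ring
      have e2 : ‖v‖ ^ p = ‖v‖ ^ (2 : ℝ) * ‖v‖ ^ (-((d : ℝ) + 2 * s)) := by
        rw [← Real.rpow_add hr]
        congr 1
        rw [hpdef]
        ring
      have hvp : ‖v‖ ^ p = ‖v‖ ^ 2 * ((‖v‖ : ℝ) ^ 2) ^ (-((d : ℝ) + 2 * s) / 2) := by
        rw [e2, e1, Real.rpow_two]
      have hmono : ((1 : ℝ) + ‖v‖ ^ 2) ^ (-((d : ℝ) + 2 * s) / 2) ≤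
          ((‖v‖ : ℝ) ^ 2) ^ (-((d : ℝ) + 2 * s) / 2) := by
        refine Real.rpow_le_rpow_of_nonpos (by positivity) (by linarith) ?_
        have h1 : (0 : ℝ) ≤ (d : ℝ) + 2 * s := by positivity
        linarith
      have hM1eq : M1 d s c v = c * (1 + ‖v‖ ^ 2) ^ (-((d : ℝ) + 2 * s) / 2) := rfl
      calc ‖v‖ ^ 2 * M1 d s c v
          = (c * ‖v‖ ^ 2) * (1 + ‖v‖ ^ 2) ^ (-((d : ℝ) + 2 * s) / 2) := by
            rw [hM1eq]; ring
        _ ≤ (c * ‖v‖ ^ 2) * ((‖v‖ : ℝ) ^ 2) ^ (-((d : ℝ) + 2 * s) / 2) :=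
            mul_le_mul_of_nonneg_left hmono (by positivity)
        _ = c * ‖v‖ ^ p := by rw [hvp]; ring
        _ = c * (ε ^ ((d : ℝ) + 2 * s - 2) * (ε * ‖v‖) ^ p) := by
            rw [hmulr, ← mul_assoc (ε ^ ((d : ℝ) + 2 * s - 2)), hee, one_mul]
  have hKbound : (∫⁻ v : EuclideanSpace ℝ (Fin d),
      ENNReal.ofReal ((‖v‖ * ((1 + ε ^ 2 * ‖v‖ ^ 2)⁻¹ *
        M1 d s c v ^ ((1 : ℝ) / 2))) ^ 2)) ≤ ENNReal.ofReal κ := by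
    calc (∫⁻ v : EuclideanSpace ℝ (Fin d),
        ENNReal.ofReal ((‖v‖ * ((1 + ε ^ 2 * ‖v‖ ^ 2)⁻¹ *
          M1 d s c v ^ ((1 : ℝ) / 2))) ^ 2))
        ≤ ∫⁻ v : EuclideanSpace ℝ (Fin d),
          ENNReal.ofReal ((c * ε ^ ((d : ℝ) + 2 * s - 2)) * g (ε • v)) :=
          lintegral_mono hptw
      _ = ENNReal.ofReal (∫ v : EuclideanSpace ℝ (Fin d),
          (c * ε ^ ((d : ℝ) + 2 * s - 2)) * g (ε • v)) :=
          (ofReal_integral_eq_lintegral_ofReal hG hGnn).symm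
      _ = ENNReal.ofReal κ := by rw [hGval]
  -- per-x Cauchy-Schwarz bound
  have hxbound : ∀ x : EuclideanSpace ℝ (Fin d),
      Integrable (fun v => f x v ^ 2 * (M1 d s c v)⁻¹) volume →
      ‖∫ v, ((1 + ε ^ 2 * ‖v‖ ^ 2)⁻¹ * f x v) • v‖ ^ 2 ≤
        (∫ v, f x v ^ 2 * (M1 d s c v)⁻¹) * κ := by
    intro x hx
    have hfx : Measurable (fun v => f x v) := hfm.of_uncurry_left
    set F : ℝ := ∫ v, f x v ^ 2 * (M1 d s c v)⁻¹ with hFdef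
    have hF0 : 0 ≤ F := integral_nonneg fun v =>
      mul_nonneg (sq_nonneg _) (inv_nonneg.2 (hMpos v).le)
    set a : EuclideanSpace ℝ (Fin d) → ℝ≥0∞ :=
      fun v => ENNReal.ofReal (|f x v| * M1 d s c v ^ (-(1 : ℝ) / 2)) with hadef
    set b : EuclideanSpace ℝ (Fin d) → ℝ≥0∞ :=
      fun v => ENNReal.ofReal (‖v‖ * ((1 + ε ^ 2 * ‖v‖ ^ 2)⁻¹ *
        M1 d s c v ^ ((1 : ℝ) / 2))) with hbdef
    have ham : AEMeasurable a volume := by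
      refine Measurable.aemeasurable (Measurable.ennreal_ofReal ?_)
      fun_prop
    have hbm : AEMeasurable b volume := by
      refine Measurable.aemeasurable (Measurable.ennreal_ofReal ?_)
      fun_prop
    have hCS := ENNReal.lintegral_mul_le_Lp_mul_Lq volume
      Real.HolderConjugate.two_two ham hbm
    have hab : ∀ v, ENNReal.ofReal ‖((1 + ε ^ 2 * ‖v‖ ^ 2)⁻¹ * f x v) • v‖ =
        a v * b v := by
      intro v
      have h1 : (0 : ℝ) ≤ |f x v| * M1 d s c v ^ (-(1 : ℝ) / 2) :=
        mul_nonneg (abs_nonneg _) (Real.rpow_nonneg (hMpos v).le _)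
      rw [hadef, hbdef, ← ENNReal.ofReal_mul h1]
      congr 1
      have hφ0 : (0 : ℝ) < (1 + ε ^ 2 * ‖v‖ ^ 2)⁻¹ := by positivity
      rw [norm_smul, Real.norm_eq_abs, abs_mul,
        abs_of_pos hφ0]
      symm
      have hMM : M1 d s c v ^ (-(1 : ℝ) / 2) * M1 d s c v ^ ((1 : ℝ) / 2) = 1 := by
        rw [← Real.rpow_add (hMpos v)]
        norm_num
      calc |f x v| * M1 d s c v ^ (-(1 : ℝ) / 2) *
            (‖v‖ * ((1 + ε ^ 2 * ‖v‖ ^ 2)⁻¹ * M1 d s c v ^ ((1 : ℝ) / 2)))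
          = ((1 + ε ^ 2 * ‖v‖ ^ 2)⁻¹ * |f x v| * ‖v‖) *
            (M1 d s c v ^ (-(1 : ℝ) / 2) * M1 d s c v ^ ((1 : ℝ) / 2)) := by ring
        _ = (1 + ε ^ 2 * ‖v‖ ^ 2)⁻¹ * |f x v| * ‖v‖ := by rw [hMM, mul_one]
    have ha2 : ∀ v, a v ^ (2 : ℝ) = ENNReal.ofReal (f x v ^ 2 * (M1 d s c v)⁻¹) := by
      intro v
      have h1 : (0 : ℝ) ≤ |f x v| * M1 d s c v ^ (-(1 : ℝ) / 2) :=
        mul_nonneg (abs_nonneg _) (Real.rpow_nonneg (hMpos v).le _)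
      rw [hadef, ENNReal.ofReal_rpow_of_nonneg h1 (by norm_num)]
      congr 1
      rw [Real.rpow_two, mul_pow, sq_abs]
      congr 1
      rw [← Real.rpow_two, ← Real.rpow_mul (hMpos v).le,
        show -(1 : ℝ) / 2 * 2 = -1 by norm_num, Real.rpow_neg_one]
    have hb2 : ∀ v, b v ^ (2 : ℝ) = ENNReal.ofReal ((‖v‖ *
        ((1 + ε ^ 2 * ‖v‖ ^ 2)⁻¹ * M1 d s c v ^ ((1 : ℝ) / 2))) ^ 2) := by
      intro v
      have h1 : (0 : ℝ) ≤ ‖v‖ * ((1 + ε ^ 2 * ‖v‖ ^ 2)⁻¹ *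
          M1 d s c v ^ ((1 : ℝ) / 2)) :=
        mul_nonneg (norm_nonneg _) (mul_nonneg (by positivity)
          (Real.rpow_nonneg (hMpos v).le _))
      rw [hbdef, ENNReal.ofReal_rpow_of_nonneg h1 (by norm_num), Real.rpow_two]
    have hxnn : 0 ≤ᵐ[volume] fun v => f x v ^ 2 * (M1 d s c v)⁻¹ :=
      Filter.Eventually.of_forall fun v =>
        mul_nonneg (sq_nonneg _) (inv_nonneg.2 (hMpos v).le)
    have hFa : (∫⁻ v, a v ^ (2 : ℝ)) = ENNReal.ofReal F := by
      rw [hFdef]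
      rw [ofReal_integral_eq_lintegral_ofReal hx hxnn]
      exact lintegral_congr ha2
    have hKb : (∫⁻ v, b v ^ (2 : ℝ)) ≤ ENNReal.ofReal κ := by
      refine le_trans (le_of_eq (lintegral_congr hb2)) hKbound
    have hN : (∫⁻ v, ENNReal.ofReal ‖((1 + ε ^ 2 * ‖v‖ ^ 2)⁻¹ * f x v) • v‖) ≤
        ENNReal.ofReal F ^ ((1 : ℝ) / 2) * ENNReal.ofReal κ ^ ((1 : ℝ) / 2) := by
      have h1 : (∫⁻ v, ENNReal.ofReal ‖((1 + ε ^ 2 * ‖v‖ ^ 2)⁻¹ * f x v) • v‖) =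
          ∫⁻ v, (a * b) v := by
        refine lintegral_congr fun v => ?_
        rw [Pi.mul_apply, hab v]
      rw [h1]
      refine le_trans hCS ?_
      rw [hFa]
      exact mul_le_mul_right (ENNReal.rpow_le_rpow hKb (by norm_num)) _
    have hnorm := norm_integral_le_lintegral_norm (μ := volume)
      (fun v => ((1 + ε ^ 2 * ‖v‖ ^ 2)⁻¹ * f x v) • v)
    have h1 : ENNReal.ofReal F ^ ((1 : ℝ) / 2) * ENNReal.ofReal κ ^ ((1 : ℝ) / 2) =
        ENNReal.ofReal (F ^ ((1 : ℝ) / 2) * κ ^ ((1 : ℝ) / 2)) := by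
      rw [ENNReal.ofReal_rpow_of_nonneg hF0 (by norm_num),
        ENNReal.ofReal_rpow_of_nonneg hκ0 (by norm_num),
        ← ENNReal.ofReal_mul (Real.rpow_nonneg hF0 _)]
    have h2 : (∫⁻ v, ENNReal.ofReal
        ‖((1 + ε ^ 2 * ‖v‖ ^ 2)⁻¹ * f x v) • v‖).toReal ≤
        F ^ ((1 : ℝ) / 2) * κ ^ ((1 : ℝ) / 2) :=
      ENNReal.toReal_le_of_le_ofReal (by positivity) (h1 ▸ hN)
    have h3 : ‖∫ v, ((1 + ε ^ 2 * ‖v‖ ^ 2)⁻¹ * f x v) • v‖ ≤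
        F ^ ((1 : ℝ) / 2) * κ ^ ((1 : ℝ) / 2) := le_trans hnorm h2
    have h4 := pow_le_pow_left₀ (norm_nonneg _) h3 2
    calc ‖∫ v, ((1 + ε ^ 2 * ‖v‖ ^ 2)⁻¹ * f x v) • v‖ ^ 2
        ≤ (F ^ ((1 : ℝ) / 2) * κ ^ ((1 : ℝ) / 2)) ^ 2 := h4
      _ = F * κ := by
          rw [mul_pow, ← Real.rpow_two, ← Real.rpow_mul hF0,
            ← Real.rpow_two (κ ^ ((1:ℝ)/2)), ← Real.rpow_mul hκ0]
          norm_num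
  -- integrate the bound over Ω
  have hae : ∀ᵐ x ∂(volume.restrict Ω),
      Integrable (fun v => f x v ^ 2 * (M1 d s c v)⁻¹) volume := hfint.prod_right_ae
  have hFint : Integrable (fun x => ∫ v, f x v ^ 2 * (M1 d s c v)⁻¹)
      (volume.restrict Ω) := hfint.integral_prod_left
  have step : ∫ x in Ω, ‖∫ v, ((1 + ε ^ 2 * ‖v‖ ^ 2)⁻¹ * f x v) • v‖ ^ 2 ≤
      ∫ x in Ω, (∫ v, f x v ^ 2 * (M1 d s c v)⁻¹) * κ := by
    refine integral_mono_of_nonneg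
      (Filter.Eventually.of_forall fun x => sq_nonneg _) (hFint.mul_const κ) ?_
    filter_upwards [hae] with x hx
    exact hxbound x hx
  have hDI0 : 0 ≤ ∫ x in Ω, ∫ v, f x v ^ 2 * (M1 d s c v)⁻¹ :=
    integral_nonneg fun x => integral_nonneg fun v =>
      mul_nonneg (sq_nonneg _) (inv_nonneg.2 (hMpos v).le)
  calc ∫ x in Ω, ‖∫ v, ((1 + ε ^ 2 * ‖v‖ ^ 2)⁻¹ * f x v) • v‖ ^ 2
      ≤ ∫ x in Ω, (∫ v, f x v ^ 2 * (M1 d s c v)⁻¹) * κ := step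
    _ = (∫ x in Ω, ∫ v, f x v ^ 2 * (M1 d s c v)⁻¹) * κ := integral_mul_const κ _
    _ ≤ (c * I + 1) * ε ^ (2 * s - 2) * ∫ x in Ω, ∫ v, f x v ^ 2 * (M1 d s c v)⁻¹ := by
        have hκle : κ ≤ (c * I + 1) * ε ^ (2 * s - 2) := by
          rw [hκdef]
          nlinarith
        calc (∫ x in Ω, ∫ v, f x v ^ 2 * (M1 d s c v)⁻¹) * κ
            ≤ (∫ x in Ω, ∫ v, f x v ^ 2 * (M1 d s c v)⁻¹) *
              ((c * I + 1) * ε ^ (2 * s - 2)) :=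
              mul_le_mul_of_nonneg_left hκle hDI0
          _ = (c * I + 1) * ε ^ (2 * s - 2) *
              ∫ x in Ω, ∫ v, f x v ^ 2 * (M1 d s c v)⁻¹ := by ring
end
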